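/- arXiv:2210.14608 — 7 statements merged into one kernel-verified Lean document; each statement's English description precedes it below -/
import Mathlib

section
/- Let G = (V,E) be a bipartite graph and let M₁ ≠ M₂ be two perfect matchings of G. Then the symmetric difference M₁ Δ M₂ is the edge set of a single cycle of G if and only if the incidence vectors 1_{M₁} and 1_{M₂} are adjacent vertices of the perfect matching polytope, in the following sense: for every family of nonnegative reals (λ_M), indexed by the perfect matchings M of G, with ∑_M λ_M = 1 and ∑_M λ_M · 1_M = (1_{M₁} + 1_{M₂})/2, one has λ_M = 0 for every perfect matching M ∉ {M₁, M₂}. -/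
variable {V : Type*}

/-- `M` is the edge set of a perfect matching of `G`: a set of pairwise disjoint
edges of `G` covering every vertex. -/
def IsPerfectMatchingSet (G : SimpleGraph V) (M : Set (Sym2 V)) : Prop :=
  M ⊆ G.edgeSet ∧ ∀ v : V, ∃! e, e ∈ M ∧ v ∈ e

/-- `C` is the edge set of a cycle of `G`. -/
def IsCycleEdgeSet (G : SimpleGraph V) (C : Set (Sym2 V)) : Prop :=
  ∃ (v : V) (w : G.Walk v v), w.IsCycle ∧ C = {e | e ∈ w.edges}

/-- `C` is a cycle of `G` whose edges alternate between the matching `M` and its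
complement: at every vertex of the cycle, exactly one of the two incident cycle
edges belongs to `M`. -/
def IsAlternatingCycle (G : SimpleGraph V) (M C : Set (Sym2 V)) : Prop :=
  IsCycleEdgeSet G C ∧
    ∀ v : V, ∀ e₁ ∈ C, ∀ e₂ ∈ C, e₁ ≠ e₂ → v ∈ e₁ → v ∈ e₂ → (e₁ ∈ M ↔ e₂ ∉ M)

/-- A set of edges that is a matching: its edges are pairwise vertex-disjoint. -/
def IsMatchingSet (M : Set (Sym2 V)) : Prop :=
  ∀ e₁ ∈ M, ∀ e₂ ∈ M, e₁ ≠ e₂ → ∀ v : V, v ∈ e₁ → v ∉ e₂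

/-- `G` is bipartite with parts `A` and `B`: the two parts partition the vertex
set and each part is an independent set. -/
def IsBipartiteWith (G : SimpleGraph V) (A B : Set V) : Prop :=
  Disjoint A B ∧ A ∪ B = Set.univ ∧
    ∀ ⦃u v⦄, G.Adj u v → ¬(u ∈ A ∧ v ∈ A) ∧ ¬(u ∈ B ∧ v ∈ B)

/-- An orientation of the undirected graph `G`: every edge of `G` gets exactly
one of its two possible directions. -/
structure GraphOrientation (G : SimpleGraph V) where
  adj : V → V → Prop
  adj_of : ∀ u v, adj u v → G.Adj u v
  eq_not_rev : ∀ u v, G.Adj u v → (adj u v ↔ ¬ adj v u)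

/-- `C` is the edge set of a cycle of `G` that is consistently directed in the
orientation `D`. -/
def GraphOrientation.IsDirectedCycle {G : SimpleGraph V} (D : GraphOrientation G)
    (C : Set (Sym2 V)) : Prop :=
  ∃ (v : V) (w : G.Walk v v), w.IsCycle ∧ C = {e | e ∈ w.edges} ∧
    ∀ d ∈ w.darts, D.adj d.toProd.1 d.toProd.2

/-- `D'` is obtained from the orientation `D` by flipping the cycle `C`:
every edge of `C` is reversed, all other edges keep their direction. -/
def GraphOrientation.IsFlip {G : SimpleGraph V} (D D' : GraphOrientation G)
    (C : Set (Sym2 V)) : Prop :=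
  ∀ u v, G.Adj u v →
    ((s(u, v) ∈ C → (D'.adj u v ↔ D.adj v u)) ∧ (s(u, v) ∉ C → (D'.adj u v ↔ D.adj u v)))

/-- The subdigraph of the digraph `D` induced on the vertex set `X` is strongly
connected: any vertex of `X` reaches any other by a directed path inside `X`. -/
def StronglyConnectedOn (D : V → V → Prop) (X : Set V) : Prop :=
  ∀ u ∈ X, ∀ v ∈ X, Relation.ReflTransGen (fun a b => D a b ∧ a ∈ X ∧ b ∈ X) u v

/-- The list `l` of vertices is a directed cycle of the digraph `D`: a cyclic
sequence of at least two distinct vertices, each consecutive pair (cyclically)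
joined by an arc of `D`. The cyclically consecutive pairs of `l` are exactly the
entries of `l.zip (l.rotate 1)`. -/
def IsDirectedCycleList (D : V → V → Prop) (l : List V) : Prop :=
  2 ≤ l.length ∧ l.Nodup ∧ ∀ p ∈ l.zip (l.rotate 1), D p.1 p.2


section Helpers
open SimpleGraph

/-- At most one edge of a path contains its starting vertex. -/
lemma path_edge_at_start_unique {G : SimpleGraph V} {u v : V} {p : G.Walk u v}
    (hp : p.IsPath) {e f : Sym2 V} (he : e ∈ p.edges) (hf : f ∈ p.edges)
    (hue : u ∈ e) (huf : u ∈ f) : e = f := by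
  cases p with
  | nil => simp at he
  | @cons _ w _ h t =>
    rw [Walk.cons_isPath_iff] at hp
    have key : ∀ g : Sym2 V, g ∈ (Walk.cons h t).edges → u ∈ g → g = s(u, w) := by
      intro g hg hug
      rw [Walk.edges_cons, List.mem_cons] at hg
      rcases hg with rfl | hg
      · rfl
      · exfalso
        obtain ⟨y, rfl⟩ := Sym2.mem_iff_exists.mp hug
        exact hp.2 (Walk.fst_mem_support_of_mem_edges t hg)
    rw [key e he hue, key f hf huf]

/-- A non-nil walk has an edge containing its starting vertex. -/
lemma exists_edge_at_start {G : SimpleGraph V} {u v : V} (p : G.Walk u v)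
    (hne : p.edges ≠ []) : ∃ e ∈ p.edges, u ∈ e := by
  cases p with
  | nil => simp at hne
  | cons h t =>
    exact ⟨_, by rw [Walk.edges_cons]; exact List.mem_cons_self, Sym2.mem_mk_left _ _⟩

/-- In a cycle, each vertex of the support is contained in exactly two edges. -/
lemma cycle_start_two_edges {G : SimpleGraph V} {u : V} (c : G.Walk u u) (hc : c.IsCycle) :
    ∃ e₁ e₂ : Sym2 V, e₁ ≠ e₂ ∧ e₁ ∈ c.edges ∧ e₂ ∈ c.edges ∧ u ∈ e₁ ∧ u ∈ e₂ ∧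
      ∀ f ∈ c.edges, u ∈ f → f = e₁ ∨ f = e₂ := by
  cases c with
  | nil => exact absurd rfl hc.ne_nil
  | @cons _ w₁ _ h t =>
    rw [Walk.cons_isCycle_iff] at hc
    obtain ⟨ht, hne⟩ := hc
    have hr : t.reverse.IsPath := ht.reverse
    have hrne : t.reverse.edges ≠ [] := by
      have : ¬ t.reverse.Nil := Walk.not_nil_of_ne h.ne
      intro h'
      exact this (Walk.nil_iff_length_eq.mpr (by rw [← Walk.length_edges, h']; rfl))
    obtain ⟨e₂, he₂r, hue₂⟩ := exists_edge_at_start t.reverse hrne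
    have he₂t : e₂ ∈ t.edges := by rwa [Walk.edges_reverse, List.mem_reverse] at he₂r
    refine ⟨s(u, w₁), e₂, ?_, ?_, ?_, Sym2.mem_mk_left _ _, hue₂, ?_⟩
    · rintro rfl; exact hne he₂t
    · rw [Walk.edges_cons]; exact List.mem_cons_self
    · rw [Walk.edges_cons]; exact List.mem_cons_of_mem _ he₂t
    · intro f hf huf
      rw [Walk.edges_cons, List.mem_cons] at hf
      rcases hf with rfl | hf
      · exact Or.inl rfl
      · refine Or.inr (path_edge_at_start_unique hr ?_ he₂r huf hue₂)
        rwa [Walk.edges_reverse, List.mem_reverse]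

/-- Membership in `S` propagates along the edges of a walk, provided edges sharing
a vertex agree on membership in `S`. -/
lemma walk_edges_eqOn {G : SimpleGraph V} {S : Set (Sym2 V)} :
    ∀ {a b : V} (p : G.Walk a b),
      (∀ e f : Sym2 V, e ∈ p.edges → f ∈ p.edges → (∃ x : V, x ∈ e ∧ x ∈ f) →
        (e ∈ S ↔ f ∈ S)) →
      ∀ e f : Sym2 V, e ∈ p.edges → f ∈ p.edges → (e ∈ S ↔ f ∈ S) := by
  intro a b p
  induction p with
  | nil => intro _ e f he; simp at he
  | @cons a c b h t ih =>
    intro H e f he hf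
    have Ht : ∀ e f : Sym2 V, e ∈ t.edges → f ∈ t.edges → (∃ x : V, x ∈ e ∧ x ∈ f) →
        (e ∈ S ↔ f ∈ S) := fun e f he hf hx =>
      H e f (by rw [Walk.edges_cons]; exact List.mem_cons_of_mem _ he)
        (by rw [Walk.edges_cons]; exact List.mem_cons_of_mem _ hf) hx
    have key : ∀ g : Sym2 V, g ∈ t.edges → (s(a, c) ∈ S ↔ g ∈ S) := by
      intro g hg
      obtain ⟨e₀, he₀, hce₀⟩ := exists_edge_at_start t (List.ne_nil_of_mem hg)
      have h1 : s(a, c) ∈ S ↔ e₀ ∈ S :=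
        H _ _ (by rw [Walk.edges_cons]; exact List.mem_cons_self)
          (by rw [Walk.edges_cons]; exact List.mem_cons_of_mem _ he₀)
          ⟨c, Sym2.mem_mk_right _ _, hce₀⟩
      exact h1.trans (ih Ht e₀ g he₀ hg)
    rw [Walk.edges_cons, List.mem_cons] at he hf
    rcases he with rfl | he <;> rcases hf with rfl | hf
    · rfl
    · exact key f hf
    · exact (key e he).symm
    · exact ih Ht e f he hf

/-- A nonempty 2-regular edge set contains a cycle. -/
lemma exists_cycle_of_two_regular [Fintype V] [DecidableEq V] {G : SimpleGraph V}
    (D : Finset (Sym2 V)) (hDG : ∀ e ∈ D, e ∈ G.edgeSet)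
    (hreg : ∀ (v : V) (e : Sym2 V), e ∈ D → v ∈ e →
      ∃ f ∈ D, f ≠ e ∧ v ∈ f ∧ ∀ g ∈ D, v ∈ g → g = e ∨ g = f)
    (hne : D.Nonempty) :
    ∃ (v : V) (w : G.Walk v v), w.IsCycle ∧ ∀ e ∈ w.edges, e ∈ D := by
  set G' : SimpleGraph V := SimpleGraph.fromEdgeSet ↑D with hG'
  have hG'adj : ∀ u v : V, G'.Adj u v ↔ s(u, v) ∈ D ∧ u ≠ v := by
    intro u v; rw [hG', SimpleGraph.fromEdgeSet_adj]; simp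
  have hG'le : G' ≤ G := by
    intro u v huv
    rw [hG'adj] at huv
    exact (SimpleGraph.mem_edgeSet G).mp (hDG _ huv.1)
  have hedges : ∀ {u v : V} (p : G'.Walk u v), ∀ e ∈ p.edges, e ∈ D := by
    intro u v p e he
    have := Walk.edges_subset_edgeSet p he
    rw [hG', SimpleGraph.edgeSet_fromEdgeSet] at this
    simpa using this.1
  -- main induction
  have key : ∀ (n : ℕ) (u v : V) (p : G'.Walk u v), p.IsPath → ¬ p.Nil →
      Fintype.card V ≤ p.length + n → ∃ (x : V) (c : G'.Walk x x), c.IsCycle := by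
    intro n
    induction n with
    | zero =>
      intro u v p hp _ hlen
      exact absurd hp.length_lt (by omega)
    | succ n ih =>
      intro u v p hp hpnil hlen
      cases p with
      | nil => simp at hpnil
      | @cons _ w _ h t =>
        rw [Walk.cons_isPath_iff] at hp
        have huw : s(u, w) ∈ D := ((hG'adj u w).mp h).1
        obtain ⟨f, hfD, hfne, huf, hfuniq⟩ := hreg u s(u, w) huw (Sym2.mem_mk_left _ _)
        obtain ⟨x, hfx⟩ : ∃ x, f = s(u, x) := ⟨_, (Sym2.other_spec huf).symm⟩
        have hux : u ≠ x := by
          intro h'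
          exact (G.not_isDiag_of_mem_edgeSet (hDG f hfD))
            (by rw [hfx, ← h']; exact Sym2.mk_isDiag_iff.mpr rfl)
        have hadjux : G'.Adj u x := (hG'adj u x).mpr ⟨by rw [← hfx]; exact hfD, hux⟩
        have hxw : x ≠ w := by
          intro h'
          exact hfne (by rw [hfx, h'])
        by_cases hxs : x ∈ (Walk.cons h t).support
        · -- found a cycle
          rw [Walk.support_cons, List.mem_cons] at hxs
          rcases hxs with rfl | hxs
          · exact absurd rfl hux.symm
          · set q := t.takeUntil x hxs with hq
            have hqpath : q.IsPath := hp.1.takeUntil hxs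
            have hqsup : u ∉ q.support := fun hus =>
              hp.2 (Walk.support_takeUntil_subset t hxs hus)
            have hpath2 : (Walk.cons h q).IsPath := hqpath.cons hqsup
            refine ⟨x, Walk.cons hadjux.symm (Walk.cons h q), ?_⟩
            rw [Walk.cons_isCycle_iff]
            refine ⟨hpath2, ?_⟩
            rw [Walk.edges_cons, List.mem_cons]
            rintro (h' | h')
            · rw [Sym2.eq_iff] at h'
              rcases h' with ⟨rfl, _⟩ | ⟨h1, _⟩
              · exact hux rfl
              · exact hxw h1
            · have : s(x, u) ∈ t.edges := Walk.edges_takeUntil_subset t hxs h'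
              exact hp.2 (Walk.snd_mem_support_of_mem_edges t this)
        · -- extend the path
          have hpath' : (Walk.cons hadjux.symm (Walk.cons h t)).IsPath :=
            ((Walk.cons_isPath_iff h t).mpr hp).cons hxs
          refine ih x _ (Walk.cons hadjux.symm (Walk.cons h t)) hpath'
            Walk.not_nil_cons ?_
          rw [Walk.length_cons]
          omega
  obtain ⟨a, b, he⟩ := Sym2.exists.mp hne
  have hd := G.not_isDiag_of_mem_edgeSet (hDG _ he)
  have hab : a ≠ b := fun h' => hd (Sym2.mk_isDiag_iff.mpr h')
  have hadj : G'.Adj a b := (hG'adj a b).mpr ⟨he, hab⟩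
  have hpath : (Walk.cons hadj Walk.nil).IsPath := by
    rw [Walk.cons_isPath_iff]
    exact ⟨Walk.IsPath.nil, by simp [hab]⟩
  obtain ⟨x, c, hc⟩ := key (Fintype.card V) a b (Walk.cons hadj Walk.nil) hpath
    Walk.not_nil_cons (by rw [Walk.length_cons]; omega)
  have hq : ∀ e ∈ c.edges, e ∈ G.edgeSet := by
    intro e he
    exact SimpleGraph.edgeSet_mono hG'le (Walk.edges_subset_edgeSet c he)
  refine ⟨x, c.transfer G hq, hc.transfer hq, ?_⟩
  intro e he
  rw [Walk.edges_transfer] at he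
  exact hedges c e he

lemma mem_walk_support_of_mem_edge {G : SimpleGraph V} {u v : V} {w : G.Walk u v}
    {x : V} {e : Sym2 V} (he : e ∈ w.edges) (hx : x ∈ e) : x ∈ w.support := by
  obtain ⟨y, rfl⟩ := Sym2.mem_iff_exists.mp hx
  exact Walk.fst_mem_support_of_mem_edges w he

lemma cycle_two_edges [DecidableEq V] {G : SimpleGraph V} {v : V} {w : G.Walk v v} (hw : w.IsCycle)
    {u : V} (hu : u ∈ w.support) :
    ∃ e₁ e₂ : Sym2 V, e₁ ≠ e₂ ∧ e₁ ∈ w.edges ∧ e₂ ∈ w.edges ∧ u ∈ e₁ ∧ u ∈ e₂ ∧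
      ∀ f ∈ w.edges, u ∈ f → f = e₁ ∨ f = e₂ := by
  obtain ⟨e₁, e₂, hne, he₁, he₂, hue₁, hue₂, huniq⟩ :=
    cycle_start_two_edges (w.rotate u hu) (hw.rotate hu)
  have hmem : ∀ e : Sym2 V, e ∈ (w.rotate u hu).edges ↔ e ∈ w.edges := by
    intro e
    exact (Walk.rotate_edges w u hu).mem_iff
  exact ⟨e₁, e₂, hne, (hmem e₁).mp he₁, (hmem e₂).mp he₂, hue₁, hue₂,
    fun f hf huf => huniq f ((hmem f).mpr hf) huf⟩

lemma matching_symmDiff_structure [DecidableEq V] {G : SimpleGraph V}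
    {M₁ M₂ : Finset (Sym2 V)}
    (h1 : IsPerfectMatchingSet G ↑M₁) (h2 : IsPerfectMatchingSet G ↑M₂)
    {v : V} {e : Sym2 V} (he : e ∈ symmDiff M₁ M₂) (hv : v ∈ e) :
    ∃ a b : Sym2 V, a ∈ M₁ ∧ a ∉ M₂ ∧ b ∈ M₂ ∧ b ∉ M₁ ∧ v ∈ a ∧ v ∈ b ∧
      (∀ g, g ∈ M₁ → v ∈ g → g = a) ∧ (∀ g, g ∈ M₂ → v ∈ g → g = b) ∧
      (∀ g, g ∈ symmDiff M₁ M₂ → v ∈ g → g = a ∨ g = b) := by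
  obtain ⟨a, ⟨haM, hva⟩, hau⟩ := h1.2 v
  obtain ⟨b, ⟨hbM, hvb⟩, hbu⟩ := h2.2 v
  rw [Finset.mem_coe] at haM hbM
  have hau' : ∀ g, g ∈ M₁ → v ∈ g → g = a := fun g hg hvg => hau g ⟨Finset.mem_coe.mpr hg, hvg⟩
  have hbu' : ∀ g, g ∈ M₂ → v ∈ g → g = b := fun g hg hvg => hbu g ⟨Finset.mem_coe.mpr hg, hvg⟩
  have hlast : ∀ g, g ∈ symmDiff M₁ M₂ → v ∈ g → g = a ∨ g = b := by
    intro g hg hvg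
    rcases Finset.mem_symmDiff.mp hg with ⟨hg1, _⟩ | ⟨hg1, _⟩
    · exact Or.inl (hau' g hg1 hvg)
    · exact Or.inr (hbu' g hg1 hvg)
  rcases Finset.mem_symmDiff.mp he with ⟨he1, he2⟩ | ⟨he1, he2⟩
  · have hea : e = a := hau' e he1 hv
    subst hea
    have hbn1 : b ∉ M₁ := fun hb => he2 (hau' b hb hvb ▸ hbM)
    exact ⟨e, b, he1, he2, hbM, hbn1, hv, hvb, hau', hbu', hlast⟩
  · have heb : e = b := hbu' e he1 hv
    subst heb
    have han2 : a ∉ M₂ := fun ha => he2 (hbu' a ha hva ▸ haM)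
    exact ⟨a, e, haM, han2, he1, he2, hva, hv, hau', hbu', hlast⟩

lemma pm_flip [DecidableEq V] {G : SimpleGraph V} {M₁ M₂ : Finset (Sym2 V)}
    (h1 : IsPerfectMatchingSet G ↑M₁) (h2 : IsPerfectMatchingSet G ↑M₂)
    {v : V} {w : G.Walk v v} (hw : w.IsCycle)
    (hwD : ∀ e ∈ w.edges, e ∈ symmDiff M₁ M₂) :
    IsPerfectMatchingSet G ↑(symmDiff M₁ w.edges.toFinset) := by
  constructor
  · intro e he
    rw [Finset.mem_coe, Finset.mem_symmDiff] at he
    rcases he with ⟨h, _⟩ | ⟨h, _⟩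
    · exact h1.1 (Finset.mem_coe.mpr h)
    · rw [List.mem_toFinset] at h
      exact Walk.edges_subset_edgeSet w h
  · intro u
    obtain ⟨a, ⟨haM, hva⟩, hau⟩ := h1.2 u
    rw [Finset.mem_coe] at haM
    have hau' : ∀ g, g ∈ M₁ → u ∈ g → g = a := fun g hg hvg => hau g ⟨Finset.mem_coe.mpr hg, hvg⟩
    by_cases hu : ∃ e ∈ w.edges, u ∈ e
    · obtain ⟨e, hew, hue⟩ := hu
      have husup : u ∈ w.support := mem_walk_support_of_mem_edge hew hue
      obtain ⟨e₁, e₂, hne, he₁, he₂, hue₁, hue₂, huniq⟩ := cycle_two_edges hw husup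
      obtain ⟨a', b, ha'M₁, ha'nM₂, hbM₂, hbnM₁, hua', hub, hu1, hu2, huD⟩ :=
        matching_symmDiff_structure h1 h2 (hwD e hew) hue
      have haa : a' = a := hau' a' ha'M₁ hua'
      subst haa
      have hab : a' ≠ b := fun h => ha'nM₂ (h ▸ hbM₂)
      have habC : a' ∈ w.edges ∧ b ∈ w.edges := by
        rcases huD e₁ (hwD _ he₁) hue₁ with rfl | rfl <;>
          rcases huD e₂ (hwD _ he₂) hue₂ with rfl | rfl
        · exact absurd rfl hne
        · exact ⟨he₁, he₂⟩
        · exact ⟨he₂, he₁⟩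
        · exact absurd rfl hne
      refine ⟨b, ⟨?_, hub⟩, ?_⟩
      · rw [Finset.mem_coe, Finset.mem_symmDiff]
        exact Or.inr ⟨List.mem_toFinset.mpr habC.2, hbnM₁⟩
      · rintro g ⟨hg, hug⟩
        rw [Finset.mem_coe, Finset.mem_symmDiff] at hg
        rcases hg with ⟨hg1, hg2⟩ | ⟨hg1, hg2⟩
        · exact absurd (List.mem_toFinset.mpr ((hau' g hg1 hug) ▸ habC.1)) hg2
        · rw [List.mem_toFinset] at hg1
          rcases huD g (hwD g hg1) hug with rfl | rfl
          · exact absurd ha'M₁ hg2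
          · rfl
    · refine ⟨a, ⟨?_, hva⟩, ?_⟩
      · rw [Finset.mem_coe, Finset.mem_symmDiff]
        exact Or.inl ⟨haM, fun hC => hu ⟨a, List.mem_toFinset.mp hC, hva⟩⟩
      · rintro g ⟨hg, hug⟩
        rw [Finset.mem_coe, Finset.mem_symmDiff] at hg
        rcases hg with ⟨hg1, _⟩ | ⟨hg1, _⟩
        · exact hau' g hg1 hug
        · exact absurd ⟨g, List.mem_toFinset.mp hg1, hug⟩ hu

end Helpers

/-- For a bipartite graph `G` and distinct perfect matchings
`M₁ ≠ M₂`, the symmetric difference `M₁ Δ M₂` is the edge set of a single cycle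
of `G` iff the incidence vectors of `M₁` and `M₂` are adjacent vertices of the
perfect matching polytope, i.e. every convex combination of incidence vectors of
perfect matchings equal to `(1_{M₁} + 1_{M₂})/2` puts weight `0` on every
perfect matching other than `M₁` and `M₂`. -/
theorem symmDiff_isCycle_iff_adjacent_on_polytope
    {V : Type*} [Fintype V] [DecidableEq V] (G : SimpleGraph V)
    (A B : Set V) (hbip : IsBipartiteWith G A B)
    (M₁ M₂ : Finset (Sym2 V))
    (h1 : IsPerfectMatchingSet G ↑M₁) (h2 : IsPerfectMatchingSet G ↑M₂)
    (hne : M₁ ≠ M₂) :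
    IsCycleEdgeSet G ↑(symmDiff M₁ M₂) ↔
      ∀ lam : Finset (Sym2 V) → ℝ,
        (∀ M, 0 ≤ lam M) →
        (∀ M : Finset (Sym2 V), ¬ IsPerfectMatchingSet G ↑M → lam M = 0) →
        (∑ M : Finset (Sym2 V), lam M) = 1 →
        (∀ e : Sym2 V,
          (∑ M : Finset (Sym2 V), lam M * (if e ∈ M then (1 : ℝ) else 0)) =
            ((if e ∈ M₁ then (1 : ℝ) else 0) + (if e ∈ M₂ then (1 : ℝ) else 0)) / 2) →
        ∀ M : Finset (Sym2 V),
          IsPerfectMatchingSet G ↑M → M ≠ M₁ → M ≠ M₂ → lam M = 0 := by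
  classical
  have hmemD : ∀ e : Sym2 V, e ∈ symmDiff M₁ M₂ ↔ (e ∈ M₁ ∧ e ∉ M₂) ∨ (e ∈ M₂ ∧ e ∉ M₁) :=
    fun e => Finset.mem_symmDiff
  have hDG : ∀ e ∈ symmDiff M₁ M₂, e ∈ G.edgeSet := by
    intro e he
    rcases (hmemD e).mp he with ⟨h, _⟩ | ⟨h, _⟩
    · exact h1.1 (Finset.mem_coe.mpr h)
    · exact h2.1 (Finset.mem_coe.mpr h)
  have hDne : (symmDiff M₁ M₂).Nonempty := by
    rw [Finset.nonempty_iff_ne_empty]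
    intro h
    apply hne
    ext e
    have := Finset.ext_iff.mp h e
    simp only [Finset.mem_symmDiff, Finset.notMem_empty, iff_false] at this
    tauto
  constructor
  · intro hcycle lam hnn hsupp hsum1 hconv M hM hMne1 hMne2
    obtain ⟨v₀, w, hw, hDset⟩ := hcycle
    by_contra hlam0
    have hDw : ∀ e : Sym2 V, e ∈ symmDiff M₁ M₂ ↔ e ∈ w.edges := by
      intro e
      have := Set.ext_iff.mp hDset e
      simpa only [Finset.mem_coe, Set.mem_setOf_eq] using this
    have hMsub : ∀ e ∈ M, e ∈ M₁ ∨ e ∈ M₂ := by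
      intro e heM
      by_contra hc
      push_neg at hc
      have h0 := hconv e
      rw [if_neg hc.1, if_neg hc.2] at h0
      norm_num at h0
      have hz := (Finset.sum_eq_zero_iff_of_nonneg (fun N _ => by
        by_cases h : e ∈ N <;> simp [h, hnn N])).mp h0 M (Finset.mem_univ M)
      simp only [if_pos heM, mul_one] at hz
      exact hlam0 hz
    have hMsup : ∀ e : Sym2 V, e ∈ M₁ → e ∈ M₂ → e ∈ M := by
      intro e he1 he2
      by_contra heM
      have h0 := hconv e
      rw [if_pos he1, if_pos he2] at h0
      norm_num at h0
      have key : ∑ N : Finset (Sym2 V), (lam N - (if e ∈ N then lam N else 0)) = 0 := by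
        rw [Finset.sum_sub_distrib, hsum1, h0]
        norm_num
      have hz := (Finset.sum_eq_zero_iff_of_nonneg (fun N _ => by
        by_cases h : e ∈ N <;> simp [h, hnn N])).mp key M (Finset.mem_univ M)
      simp only [if_neg heM, sub_zero] at hz
      exact hlam0 hz
    have hS1 : ∀ g ∈ symmDiff M M₁, g ∈ symmDiff M₁ M₂ := by
      intro g hg
      rcases Finset.mem_symmDiff.mp hg with ⟨hgM, hg1⟩ | ⟨hg1, hgM⟩
      · rcases hMsub g hgM with h | h
        · exact absurd h hg1
        · exact (hmemD g).mpr (Or.inr ⟨h, hg1⟩)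
      · exact (hmemD g).mpr (Or.inl ⟨hg1, fun h2 => hgM (hMsup g hg1 h2)⟩)
    have hS2 : ∀ g ∈ symmDiff M M₂, g ∈ symmDiff M₁ M₂ ∧ g ∉ symmDiff M M₁ := by
      intro g hg
      rcases Finset.mem_symmDiff.mp hg with ⟨hgM, hg2⟩ | ⟨hg2, hgM⟩
      · rcases hMsub g hgM with h | h
        · exact ⟨(hmemD g).mpr (Or.inl ⟨h, hg2⟩), by simp [Finset.mem_symmDiff, hgM, h]⟩
        · exact absurd h hg2
      · have hg1 : g ∉ M₁ := fun h1 => hgM (hMsup g h1 hg2)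
        exact ⟨(hmemD g).mpr (Or.inr ⟨hg2, hg1⟩), by simp [Finset.mem_symmDiff, hgM, hg1]⟩
    have hrel : ∀ e f : Sym2 V, e ∈ w.edges → f ∈ w.edges → (∃ x : V, x ∈ e ∧ x ∈ f) →
        (e ∈ ({g | g ∈ symmDiff M M₁} : Set (Sym2 V)) ↔
          f ∈ ({g | g ∈ symmDiff M M₁} : Set (Sym2 V))) := by
      rintro e f hew hfw ⟨x, hxe, hxf⟩
      have heD := (hDw e).mpr hew
      have hfD := (hDw f).mpr hfw
      obtain ⟨a, b, haM₁, hanM₂, hbM₂, hbnM₁, hxa, hxb, hu1, hu2, huD⟩ :=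
        matching_symmDiff_structure h1 h2 heD hxe
      have hab : a ≠ b := fun h => hanM₂ (h ▸ hbM₂)
      obtain ⟨m, ⟨hmM, hxm⟩, hmu⟩ := hM.2 x
      rw [Finset.mem_coe] at hmM
      have hmu' : ∀ g, g ∈ M → x ∈ g → g = m := fun g hg hxg =>
        hmu g ⟨Finset.mem_coe.mpr hg, hxg⟩
      have hmab : m = a ∨ m = b := by
        rcases hMsub m hmM with h | h
        · exact Or.inl (hu1 m h hxm)
        · exact Or.inr (hu2 m h hxm)
      have hclass : ∀ g, g ∈ symmDiff M₁ M₂ → x ∈ g →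
          (g ∈ ({g | g ∈ symmDiff M M₁} : Set (Sym2 V)) ↔ m = b) := by
        intro g hgD hxg
        rcases hmab with hma | hmb
        · subst hma
          constructor
          · intro hgS
            exfalso
            rw [Set.mem_setOf_eq, Finset.mem_symmDiff] at hgS
            rcases huD g hgD hxg with rfl | rfl
            · rcases hgS with ⟨_, h⟩ | ⟨_, h⟩
              · exact h haM₁
              · exact h hmM
            · rcases hgS with ⟨h, _⟩ | ⟨h, _⟩
              · exact hab ((hmu' g h hxg).symm)
              · exact hbnM₁ h
          · intro h
            exact absurd h hab
        · subst hmb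
          refine iff_of_true ?_ rfl
          rw [Set.mem_setOf_eq, Finset.mem_symmDiff]
          rcases huD g hgD hxg with rfl | rfl
          · have hgnM : g ∉ M := fun hA => hab (hmu' g hA hxg)
            exact Or.inr ⟨haM₁, hgnM⟩
          · exact Or.inl ⟨hmM, hbnM₁⟩
      rw [hclass e heD hxe, hclass f hfD hxf]
    have hall := walk_edges_eqOn w hrel
    obtain ⟨e₀, he₀⟩ := hDne
    have he₀w := (hDw e₀).mp he₀
    by_cases hcase : e₀ ∈ ({g | g ∈ symmDiff M M₁} : Set (Sym2 V))
    · apply hMne2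
      ext g
      have hgn : g ∉ symmDiff M M₂ := by
        intro hg
        obtain ⟨hgD, hgnS⟩ := hS2 g hg
        exact hgnS ((hall e₀ g he₀w ((hDw g).mp hgD)).mp hcase)
      rw [Finset.mem_symmDiff] at hgn
      constructor
      · intro h
        by_contra h'
        exact hgn (Or.inl ⟨h, h'⟩)
      · intro h
        by_contra h'
        exact hgn (Or.inr ⟨h, h'⟩)
    · apply hMne1
      ext g
      have hgn : g ∉ symmDiff M M₁ := by
        intro hg
        exact hcase ((hall g e₀ ((hDw g).mp (hS1 g hg)) he₀w).mp hg)
      rw [Finset.mem_symmDiff] at hgn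
      constructor
      · intro h
        by_contra h'
        exact hgn (Or.inl ⟨h, h'⟩)
      · intro h
        by_contra h'
        exact hgn (Or.inr ⟨h, h'⟩)
  · intro hpoly
    by_contra hcyc
    have hreg : ∀ (x : V) (e : Sym2 V), e ∈ symmDiff M₁ M₂ → x ∈ e →
        ∃ f ∈ symmDiff M₁ M₂, f ≠ e ∧ x ∈ f ∧
          ∀ g ∈ symmDiff M₁ M₂, x ∈ g → g = e ∨ g = f := by
      intro x e heD hxe
      obtain ⟨a, b, haM₁, hanM₂, hbM₂, hbnM₁, hxa, hxb, hu1, hu2, huD⟩ :=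
        matching_symmDiff_structure h1 h2 heD hxe
      have haD : a ∈ symmDiff M₁ M₂ := Finset.mem_symmDiff.mpr (Or.inl ⟨haM₁, hanM₂⟩)
      have hbD : b ∈ symmDiff M₁ M₂ := Finset.mem_symmDiff.mpr (Or.inr ⟨hbM₂, hbnM₁⟩)
      have hab : a ≠ b := fun h => hanM₂ (h ▸ hbM₂)
      rcases huD e heD hxe with rfl | rfl
      · exact ⟨b, hbD, fun h => hab h.symm, hxb, fun g hg hxg => huD g hg hxg⟩
      · exact ⟨a, haD, hab, hxa, fun g hg hxg => (huD g hg hxg).symm⟩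
    obtain ⟨v, w, hw, hwD⟩ := exists_cycle_of_two_regular _ hDG hreg hDne
    have hCD : ∀ e ∈ w.edges.toFinset, e ∈ symmDiff M₁ M₂ :=
      fun e he => hwD e (List.mem_toFinset.mp he)
    have hCne : w.edges.toFinset.Nonempty := by
      have h3 := hw.three_le_length
      have hlen := SimpleGraph.Walk.length_edges w
      have hnil : w.edges ≠ [] := by
        intro hE
        rw [hE] at hlen
        simp at hlen
        omega
      obtain ⟨e, he⟩ := List.exists_mem_of_ne_nil w.edges hnil
      exact ⟨e, List.mem_toFinset.mpr he⟩
    have hCD' : w.edges.toFinset ≠ symmDiff M₁ M₂ := by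
      intro h
      refine hcyc ⟨v, w, hw, ?_⟩
      apply Set.ext
      intro e
      rw [Set.mem_setOf_eq, Finset.mem_coe, ← h, List.mem_toFinset]
    have hM₃ : IsPerfectMatchingSet G ↑(symmDiff M₁ w.edges.toFinset) := pm_flip h1 h2 hw hwD
    have hM₄ : IsPerfectMatchingSet G ↑(symmDiff M₂ w.edges.toFinset) := pm_flip h2 h1 hw (by
      intro e he
      rw [symmDiff_comm]
      exact hwD e he)
    obtain ⟨c₀, hc₀⟩ := hCne
    have h31 : symmDiff M₁ w.edges.toFinset ≠ M₁ := by
      intro h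
      have := Finset.ext_iff.mp h c₀
      simp only [Finset.mem_symmDiff, hc₀] at this
      tauto
    have h42 : symmDiff M₂ w.edges.toFinset ≠ M₂ := by
      intro h
      have := Finset.ext_iff.mp h c₀
      simp only [Finset.mem_symmDiff, hc₀] at this
      tauto
    have h32 : symmDiff M₁ w.edges.toFinset ≠ M₂ := by
      intro h
      apply hCD'
      rw [← h, symmDiff_symmDiff_cancel_left]
    have h41 : symmDiff M₂ w.edges.toFinset ≠ M₁ := by
      intro h
      apply hCD'
      rw [← h, symmDiff_comm (symmDiff M₂ w.edges.toFinset) M₂, symmDiff_symmDiff_cancel_left]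
    have h34 : symmDiff M₁ w.edges.toFinset ≠ symmDiff M₂ w.edges.toFinset := by
      intro h
      apply hne
      have := congrArg (fun X => symmDiff X w.edges.toFinset) h
      simpa only [symmDiff_symmDiff_cancel_right] using this
    set lam : Finset (Sym2 V) → ℝ := fun N =>
      (if N = symmDiff M₁ w.edges.toFinset then (1:ℝ)/2 else 0) +
      (if N = symmDiff M₂ w.edges.toFinset then (1:ℝ)/2 else 0) with hlamdef
    have h0 := hpoly lam
      (fun N => by
        rw [hlamdef]
        dsimp only
        split <;> split <;> norm_num)
      (by
        intro N hN
        have h3 : N ≠ symmDiff M₁ w.edges.toFinset := fun h => hN (by rw [h]; exact hM₃)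
        have h4 : N ≠ symmDiff M₂ w.edges.toFinset := fun h => hN (by rw [h]; exact hM₄)
        rw [hlamdef]
        simp [h3, h4])
      (by
        rw [hlamdef]
        dsimp only
        rw [Finset.sum_add_distrib,
          Finset.sum_ite_eq' Finset.univ (symmDiff M₁ w.edges.toFinset) (fun _ => (1:ℝ)/2),
          Finset.sum_ite_eq' Finset.univ (symmDiff M₂ w.edges.toFinset) (fun _ => (1:ℝ)/2)]
        simp
        norm_num)
      (by
        intro e
        have hsum : ∀ N₀ : Finset (Sym2 V),
            (∑ N : Finset (Sym2 V),
              (if N = N₀ then (1:ℝ)/2 else 0) * (if e ∈ N then (1:ℝ) else 0))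
              = (1/2 : ℝ) * (if e ∈ N₀ then (1:ℝ) else 0) := by
          intro N₀
          simp only [ite_mul, zero_mul]
          rw [Finset.sum_ite_eq' Finset.univ N₀
            (fun N => (1/2 : ℝ) * (if e ∈ N then (1:ℝ) else 0))]
          simp
        rw [hlamdef]
        dsimp only
        simp only [add_mul]
        rw [Finset.sum_add_distrib, hsum (symmDiff M₁ w.edges.toFinset),
          hsum (symmDiff M₂ w.edges.toFinset)]
        have hchar : (if e ∈ symmDiff M₁ w.edges.toFinset then (1:ℝ) else 0) +
            (if e ∈ symmDiff M₂ w.edges.toFinset then (1:ℝ) else 0)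
            = (if e ∈ M₁ then (1:ℝ) else 0) + (if e ∈ M₂ then (1:ℝ) else 0) := by
          by_cases heC : e ∈ w.edges.toFinset
          · have heD := hCD e heC
            have h3 : e ∈ symmDiff M₁ w.edges.toFinset ↔ e ∉ M₁ := by
              rw [Finset.mem_symmDiff]
              constructor
              · rintro (⟨_, h⟩ | ⟨_, h⟩)
                · exact absurd heC h
                · exact h
              · intro h
                exact Or.inr ⟨heC, h⟩
            have h4 : e ∈ symmDiff M₂ w.edges.toFinset ↔ e ∉ M₂ := by
              rw [Finset.mem_symmDiff]
              constructor
              · rintro (⟨_, h⟩ | ⟨_, h⟩)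
                · exact absurd heC h
                · exact h
              · intro h
                exact Or.inr ⟨heC, h⟩
            rcases (hmemD e).mp heD with ⟨hA, hB⟩ | ⟨hA, hB⟩ <;>
              simp [h3, h4, hA, hB]
          · have h3 : e ∈ symmDiff M₁ w.edges.toFinset ↔ e ∈ M₁ := by
              rw [Finset.mem_symmDiff]
              constructor
              · rintro (⟨h, _⟩ | ⟨h, _⟩)
                · exact h
                · exact absurd h heC
              · intro h
                exact Or.inl ⟨h, heC⟩
            have h4 : e ∈ symmDiff M₂ w.edges.toFinset ↔ e ∈ M₂ := by
              rw [Finset.mem_symmDiff]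
              constructor
              · rintro (⟨h, _⟩ | ⟨h, _⟩)
                · exact h
                · exact absurd h heC
              · intro h
                exact Or.inl ⟨h, heC⟩
            simp [h3, h4]
        rw [← hchar]
        ring)
      (symmDiff M₁ w.edges.toFinset) hM₃ h31 h32
    have hval : lam (symmDiff M₁ w.edges.toFinset) = 1/2 := by
      rw [hlamdef]
      simp [h34]
    rw [h0] at hval
    norm_num at hval
end

section
/- Let G = (V,E) be a bipartite graph and let g ∈ ℝ^E be a nonzero vector. Then g satisfies (i) ∑_{e ∋ v} g_e = 0 for every vertex v ∈ V and (ii) there is no nonzero y ∈ ℝ^E with ∑_{e ∋ v} y_e = 0 for every v ∈ V whose support is strictly contained in the support of g, if and only if there exist a cycle C of G (necessarily of even length), a partition of C into two matchings C⁺ and C⁻ consisting of the alternate edges along C, and a real α > 0 such that g_e = α for all e ∈ C⁺, g_e = −α for all e ∈ C⁻, and g_e = 0 for all e ∉ C. -/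
variable {V : Type*}

namespace CircuitHelpers

open SimpleGraph Finset

variable {V : Type*}

lemma edges_eq {G : SimpleGraph V} {u v : V} (p : G.Walk u v) :
    p.edges = p.darts.map SimpleGraph.Dart.edge := rfl

lemma mem_dart_edge {G : SimpleGraph V} {d : G.Dart} {u : V} :
    u ∈ d.edge ↔ u = d.fst ∨ u = d.snd := Sym2.mem_iff

lemma first_edge {G : SimpleGraph V} {u x v : V} (h : G.Adj u x) {q : G.Walk x v}
    (hp : (SimpleGraph.Walk.cons h q).IsPath) {e : Sym2 V}
    (he : e ∈ (SimpleGraph.Walk.cons h q).edges) (hue : u ∈ e) : e = s(u, x) := by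
  rw [Walk.edges_cons, List.mem_cons] at he
  rcases he with he | he
  · exact he
  · exfalso
    induction e using Sym2.ind with
    | _ a b =>
      rw [Sym2.mem_iff] at hue
      have hus : u ∈ q.support := by
        rcases hue with rfl | rfl
        · exact q.fst_mem_support_of_mem_edges he
        · exact q.snd_mem_support_of_mem_edges he
      exact ((Walk.cons_isPath_iff h q).mp hp).2 hus

lemma exists_cycle_aux [Fintype V] [DecidableEq V] (H : SimpleGraph V)
    (hdeg : ∀ a b, H.Adj a b → ∃ c, c ≠ b ∧ H.Adj a c) :
    ∀ (n : ℕ) (u x v : V) (h : H.Adj u x) (q : H.Walk x v),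
      (SimpleGraph.Walk.cons h q).IsPath → Fintype.card V ≤ q.length + 1 + n →
      ∃ (y : V) (c : H.Walk y y), c.IsCycle := by
  intro n
  induction n with
  | zero =>
    intro u x v h q hp hcard
    have := hp.length_lt
    simp only [Walk.length_cons] at this
    omega
  | succ n ih =>
    intro u x v h q hp hcard
    obtain ⟨w, hwx, hw⟩ := hdeg u x h
    by_cases hws : w ∈ (SimpleGraph.Walk.cons h q).support
    · set p := SimpleGraph.Walk.cons h q with hpdef
      have hq' : (p.takeUntil w hws).IsPath := hp.takeUntil hws
      refine ⟨w, SimpleGraph.Walk.cons hw.symm (p.takeUntil w hws), ?_⟩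
      rw [Walk.cons_isCycle_iff]
      refine ⟨hq', fun hmem => ?_⟩
      have h1 : s(u, w) ∈ p.edges :=
        Walk.edges_takeUntil_subset p hws (by rwa [Sym2.eq_swap] at hmem)
      have h2 := first_edge h hp h1 (Sym2.mem_mk_left u w)
      rw [Sym2.congr_right] at h2
      exact hwx h2
    · exact ih w u v hw.symm (SimpleGraph.Walk.cons h q)
        ((Walk.cons_isPath_iff _ _).mpr ⟨hp, hws⟩)
        (by simp only [Walk.length_cons]; omega)

lemma exists_cycle [Fintype V] [DecidableEq V] (H : SimpleGraph V) {a b : V}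
    (hab : H.Adj a b) (hdeg : ∀ a b, H.Adj a b → ∃ c, c ≠ b ∧ H.Adj a c) :
    ∃ (y : V) (c : H.Walk y y), c.IsCycle := by
  refine exists_cycle_aux H hdeg (Fintype.card V) a b b hab SimpleGraph.Walk.nil ?_ ?_
  · rw [Walk.cons_isPath_iff]
    exact ⟨Walk.IsPath.nil, by simp [hab.ne]⟩
  · simp only [Walk.length_nil]; omega

lemma existsUnique_snd_dart {G : SimpleGraph V} {v u : V} {w : G.Walk v v}
    (hw : w.IsCycle) (hu : u ∈ w.support) :
    ∃! d : G.Dart, d ∈ w.darts ∧ d.snd = u := by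
  have htail : u ∈ w.support.tail := by
    cases w with
    | nil => exact absurd rfl hw.ne_nil
    | cons h q =>
      rw [Walk.support_cons, List.tail_cons]
      rw [Walk.support_cons, List.mem_cons] at hu
      rcases hu with rfl | hu
      · exact q.end_mem_support
      · exact hu
  rw [← Walk.map_snd_darts] at htail
  obtain ⟨d, hd, hdsnd⟩ := List.mem_map.mp htail
  refine ⟨d, ⟨hd, hdsnd⟩, ?_⟩
  rintro d' ⟨hd', hdsnd'⟩
  have hnodup : (w.darts.map (·.snd)).Nodup := by
    rw [Walk.map_snd_darts]; exact hw.support_nodup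
  exact List.inj_on_of_nodup_map hnodup hd' hd (by simp only [hdsnd, hdsnd'])

lemma isCycle_reverse {G : SimpleGraph V} {v : V} {w : G.Walk v v} (hw : w.IsCycle) :
    w.reverse.IsCycle := by
  rw [Walk.isCycle_def]
  refine ⟨Walk.IsTrail.reverse w hw.isCircuit.isTrail, ?_, ?_⟩
  · intro hnil
    have h3 := hw.three_le_length
    have : w.reverse.length = 0 := by rw [hnil]; rfl
    rw [Walk.length_reverse] at this
    omega
  · cases w with
    | nil => exact absurd rfl hw.ne_nil
    | cons h q =>
      rename_i x
      have ht : q.support ≠ [] := q.support_ne_nil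
      have hlast : q.support.getLast ht = v := q.getLast_support
      have hsplit : q.support = q.support.dropLast ++ [v] := by
        conv_lhs => rw [← List.dropLast_append_getLast ht, hlast]
      have htl : (SimpleGraph.Walk.cons h q).reverse.support.tail =
          q.support.dropLast.reverse ++ [v] := by
        rw [Walk.support_reverse, Walk.support_cons]
        conv_lhs => rw [hsplit]
        simp
      rw [htl]
      have hperm : List.Perm (q.support.dropLast.reverse ++ [v])
          (q.support.dropLast ++ [v]) :=
        (q.support.dropLast.reverse_perm).append (List.Perm.refl _)
      refine hperm.symm.nodup ?_
      have hnd := hw.support_nodup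
      rw [Walk.support_cons, List.tail_cons] at hnd
      rwa [hsplit] at hnd

lemma existsUnique_fst_dart {G : SimpleGraph V} {v u : V} {w : G.Walk v v}
    (hw : w.IsCycle) (hu : u ∈ w.support) :
    ∃! d : G.Dart, d ∈ w.darts ∧ d.fst = u := by
  have hu' : u ∈ w.reverse.support := by rw [Walk.support_reverse]; simpa using hu
  obtain ⟨d, ⟨hd, hds⟩, huniq⟩ := existsUnique_snd_dart (isCycle_reverse hw) hu'
  have hmem : ∀ d' : G.Dart, d' ∈ w.reverse.darts ↔ d'.symm ∈ w.darts :=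
    fun d' => Walk.mem_darts_reverse
  refine ⟨d.symm, ⟨(hmem d).mp hd, hds⟩, ?_⟩
  rintro d' ⟨hd', hd'f⟩
  have h1 : d'.symm = d := huniq d'.symm ⟨(hmem d'.symm).mpr (by simpa using hd'),
    by simpa using hd'f⟩
  rw [← h1]; simp

lemma cycle_edges_at {G : SimpleGraph V} {v u : V} {w : G.Walk v v} (hw : w.IsCycle)
    (hu : u ∈ w.support) :
    ∃ d₁ d₂ : G.Dart, d₁ ∈ w.darts ∧ d₂ ∈ w.darts ∧ d₁.snd = u ∧ d₂.fst = u ∧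
      d₁.edge ≠ d₂.edge ∧ (∀ e ∈ w.edges, u ∈ e → e = d₁.edge ∨ e = d₂.edge) ∧
      (∀ d ∈ w.darts, d.snd = u → d = d₁) ∧ (∀ d ∈ w.darts, d.fst = u → d = d₂) := by
  obtain ⟨d₁, ⟨hd₁, hs₁⟩, hu₁⟩ := existsUnique_snd_dart hw hu
  obtain ⟨d₂, ⟨hd₂, hs₂⟩, hu₂⟩ := existsUnique_fst_dart hw hu
  have hedges_nodup : (w.darts.map SimpleGraph.Dart.edge).Nodup := by
    rw [← edges_eq]; exact hw.isCircuit.isTrail.edges_nodup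
  have hne : d₁.edge ≠ d₂.edge := by
    intro h
    have heq : d₁ = d₂ := List.inj_on_of_nodup_map hedges_nodup hd₁ hd₂ h
    exact d₂.adj.ne (by rw [hs₂, ← heq, hs₁])
  refine ⟨d₁, d₂, hd₁, hd₂, hs₁, hs₂, hne, ?_, fun d hd hds => hu₁ d ⟨hd, hds⟩,
    fun d hd hdf => hu₂ d ⟨hd, hdf⟩⟩
  intro e he hue
  obtain ⟨d, hd, rfl⟩ := List.mem_map.mp (by rwa [edges_eq] at he)
  rcases mem_dart_edge.mp hue with h | h
  · right; rw [hu₂ d ⟨hd, h.symm⟩]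
  · left; rw [hu₁ d ⟨hd, h.symm⟩]

lemma sum_eq_pair [Fintype V] [DecidableEq V] {G : SimpleGraph V}
    [DecidableRel G.Adj] {v u : V} {w : G.Walk v v} (hw : w.IsCycle)
    (y : Sym2 V → ℝ) (hy0 : ∀ e, e ∉ w.edges → y e = 0)
    {d₁ d₂ : G.Dart} (hd₁ : d₁ ∈ w.darts) (hd₂ : d₂ ∈ w.darts)
    (hs₁ : d₁.snd = u) (hs₂ : d₂.fst = u) :
    ∑ e ∈ G.edgeFinset.filter (fun e => u ∈ e), y e = y d₁.edge + y d₂.edge := by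
  have hu : u ∈ w.support := by
    rw [← hs₁]; exact w.dart_snd_mem_support_of_mem_darts hd₁
  obtain ⟨d₁', d₂', hd₁', hd₂', hs₁', hs₂', hne', hall, huq₁, huq₂⟩ := cycle_edges_at hw hu
  have e1 : d₁ = d₁' := huq₁ d₁ hd₁ hs₁
  have e2 : d₂ = d₂' := huq₂ d₂ hd₂ hs₂
  subst e1; subst e2
  have hmem₁ : d₁.edge ∈ G.edgeFinset.filter (fun e => u ∈ e) := by
    rw [Finset.mem_filter, mem_edgeFinset]
    exact ⟨d₁.edge_mem, mem_dart_edge.mpr (Or.inr hs₁.symm)⟩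
  have hmem₂ : d₂.edge ∈ G.edgeFinset.filter (fun e => u ∈ e) := by
    rw [Finset.mem_filter, mem_edgeFinset]
    exact ⟨d₂.edge_mem, mem_dart_edge.mpr (Or.inl hs₂.symm)⟩
  have hsub : ({d₁.edge, d₂.edge} : Finset (Sym2 V)) ⊆
      G.edgeFinset.filter (fun e => u ∈ e) := by
    intro e he
    rcases Finset.mem_insert.mp he with rfl | he
    · exact hmem₁
    · rw [Finset.mem_singleton] at he; subst he; exact hmem₂
  rw [← Finset.sum_subset hsub ?_]
  · rw [Finset.sum_insert (by simpa using hne'), Finset.sum_singleton]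
  · intro e hef hepair
    by_contra hye
    have hew : e ∈ w.edges := by
      by_contra hcon; exact hye (hy0 e hcon)
    have hue : u ∈ e := (Finset.mem_filter.mp hef).2
    rcases hall e hew hue with rfl | rfl <;> simp at hepair

lemma chain_prop [Fintype V] [DecidableEq V] {G : SimpleGraph V} [DecidableRel G.Adj]
    {v : V} {w : G.Walk v v} (hw : w.IsCycle) (y : Sym2 V → ℝ)
    (hy0 : ∀ e, e ∉ w.edges → y e = 0)
    (hsum : ∀ u : V, ∑ e ∈ G.edgeFinset.filter (fun e => u ∈ e), y e = 0) :
    ∀ (l : List G.Dart) (d₀ : G.Dart), (d₀ :: l).Chain' G.DartAdj →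
      (∀ d ∈ d₀ :: l, d ∈ w.darts) → y d₀.edge = 0 → ∀ d ∈ d₀ :: l, y d.edge = 0 := by
  intro l
  induction l with
  | nil =>
    intro d₀ _ _ h0 d hd
    rw [List.mem_singleton] at hd; subst hd; exact h0
  | cons d₁ t ih =>
    intro d₀ hchain hmem h0
    have hadj : d₀.snd = d₁.fst := (List.isChain_cons_cons.mp hchain).1
    have key : y d₀.edge + y d₁.edge = 0 := by
      have hs := sum_eq_pair hw y hy0 (hmem d₀ (by simp)) (hmem d₁ (by simp))
        rfl hadj.symm
      rw [hsum d₀.snd] at hs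
      linarith
    have h1 : y d₁.edge = 0 := by linarith
    intro d hd
    rcases List.mem_cons.mp hd with rfl | hd
    · exact h0
    · exact ih d₁ (List.isChain_cons_cons.mp hchain).2
        (fun d' hd' => hmem d' (List.mem_cons_of_mem _ hd')) h1 d hd

lemma cycle_flow_zero_of_start [Fintype V] [DecidableEq V] {G : SimpleGraph V}
    [DecidableRel G.Adj] {u : V} {w₀ : G.Walk u u} (hw : w₀.IsCycle)
    (y : Sym2 V → ℝ) (hy0 : ∀ e, e ∉ w₀.edges → y e = 0)
    (hsum : ∀ a : V, ∑ e ∈ G.edgeFinset.filter (fun e => a ∈ e), y e = 0)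
    (D : G.Dart) (hD : D ∈ w₀.darts) (hDf : D.fst = u) (hyD : y D.edge = 0) :
    ∀ e ∈ w₀.edges, y e = 0 := by
  cases w₀ with
  | nil => exact absurd rfl hw.ne_nil
  | cons h q =>
    rename_i x
    set d₀ : G.Dart := ⟨(u, x), h⟩ with hd₀def
    have hdarts : (SimpleGraph.Walk.cons h q).darts = d₀ :: q.darts := rfl
    have hDeq : D = d₀ := by
      obtain ⟨d', _, huniq⟩ := existsUnique_fst_dart hw
        ((SimpleGraph.Walk.cons h q).start_mem_support)
      rw [huniq D ⟨hD, hDf⟩, ← huniq d₀ ⟨by rw [hdarts]; simp, rfl⟩]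
    intro e he
    obtain ⟨d, hd, rfl⟩ := List.mem_map.mp (by rwa [edges_eq] at he)
    refine chain_prop hw y hy0 hsum q.darts d₀ ?_ ?_ (hDeq ▸ hyD) d ?_
    · rw [← hdarts]; exact Walk.isChain_dartAdj_darts _
    · intro d' hd'; rwa [← hdarts] at hd'
    · rwa [hdarts] at hd

lemma cycle_flow_zero [Fintype V] [DecidableEq V] {G : SimpleGraph V}
    [DecidableRel G.Adj] {v : V} {w : G.Walk v v} (hw : w.IsCycle)
    (y : Sym2 V → ℝ) (hy0 : ∀ e, e ∉ w.edges → y e = 0)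
    (hsum : ∀ a : V, ∑ e ∈ G.edgeFinset.filter (fun e => a ∈ e), y e = 0)
    {e₂ : Sym2 V} (he₂ : e₂ ∈ w.edges) (hy₂ : y e₂ = 0) :
    ∀ e ∈ w.edges, y e = 0 := by
  induction e₂ using Sym2.ind with
  | _ a b =>
  have ha : a ∈ w.support := w.fst_mem_support_of_mem_edges he₂
  set w' := w.rotate a ha with hw'def
  have hw' : w'.IsCycle := hw.rotate ha
  have hedges : ∀ e, e ∈ w'.edges ↔ e ∈ w.edges := fun e => (w.rotate_edges a ha).mem_iff
  have hy0' : ∀ e, e ∉ w'.edges → y e = 0 := fun e he => hy0 e (fun hc => he ((hedges e).mpr hc))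
  have he₂' : s(a, b) ∈ w'.edges := (hedges _).mpr he₂
  obtain ⟨d, hd, hde⟩ := List.mem_map.mp (by rwa [edges_eq] at he₂')
  have hain : a ∈ d.edge := by rw [hde]; exact Sym2.mem_mk_left a b
  intro e he
  rcases mem_dart_edge.mp hain with hfst | hsnd
  · exact cycle_flow_zero_of_start hw' y hy0' hsum d hd hfst.symm (by rwa [hde])
      e ((hedges e).mpr he)
  · have hw'' : w'.reverse.IsCycle := isCycle_reverse hw'
    have hDmem : d.symm ∈ w'.reverse.darts := Walk.mem_darts_reverse.mpr (by simpa using hd)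
    have hedges'' : ∀ e, e ∈ w'.reverse.edges ↔ e ∈ w.edges := by
      intro e
      rw [Walk.edges_reverse, List.mem_reverse]
      exact hedges e
    have hy0'' : ∀ e, e ∉ w'.reverse.edges → y e = 0 :=
      fun e he => hy0 e (fun hc => he ((hedges'' e).mpr hc))
    refine cycle_flow_zero_of_start hw'' y hy0'' hsum d.symm hDmem (by simpa using hsnd.symm)
      ?_ e ((hedges'' e).mpr he)
    rw [SimpleGraph.Dart.edge_symm, hde]; exact hy₂


lemma mem_support_of_mem_edges' {G : SimpleGraph V} {u v a : V} {p : G.Walk u v}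
    {e : Sym2 V} (he : e ∈ p.edges) (ha : a ∈ e) : a ∈ p.support := by
  induction e using Sym2.ind with
  | _ x y =>
    rcases Sym2.mem_iff.mp ha with rfl | rfl
    · exact p.fst_mem_support_of_mem_edges he
    · exact p.snd_mem_support_of_mem_edges he

lemma other_endpoint {G : SimpleGraph V} {a : V} {e : Sym2 V} (he : e ∈ G.edgeSet)
    (ha : a ∈ e) : ∃ c, e = s(a, c) ∧ G.Adj a c := by
  induction e using Sym2.ind with
  | _ p q =>
    rcases Sym2.mem_iff.mp ha with rfl | rfl
    · exact ⟨q, rfl, (SimpleGraph.mem_edgeSet G).mp he⟩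
    · exact ⟨p, Sym2.eq_swap, ((SimpleGraph.mem_edgeSet G).mp he).symm⟩

end CircuitHelpers


/-- In a bipartite graph `G`, a nonzero vector `g ∈ ℝ^E` is a
circuit of the perfect matching polytope (it sums to zero around every vertex
and is support-minimal with this property) iff it is of the form `α` on one
matching `C⁺`, `-α` on the complementary matching `C⁻` of alternate edges of a
cycle `C` of `G`, and `0` elsewhere, for some `α > 0`. -/
theorem circuit_iff_alternating_cycle_vector
    {V : Type*} [Fintype V] [DecidableEq V] (G : SimpleGraph V) [DecidableRel G.Adj]
    (A B : Set V) (hbip : IsBipartiteWith G A B)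
    (g : Sym2 V → ℝ) (hg0 : g ≠ 0) (hgE : ∀ e, e ∉ G.edgeSet → g e = 0) :
    ((∀ v : V, ∑ e ∈ G.edgeFinset.filter (fun e => v ∈ e), g e = 0) ∧
      ¬ ∃ y : Sym2 V → ℝ, y ≠ 0 ∧ (∀ e, e ∉ G.edgeSet → y e = 0) ∧
          (∀ v : V, ∑ e ∈ G.edgeFinset.filter (fun e => v ∈ e), y e = 0) ∧
          Function.support y ⊂ Function.support g) ↔
    ∃ (C Cp Cm : Set (Sym2 V)) (α : ℝ),
      IsCycleEdgeSet G C ∧ Cp ∪ Cm = C ∧ Disjoint Cp Cm ∧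
      IsMatchingSet Cp ∧ IsMatchingSet Cm ∧ 0 < α ∧
      (∀ e ∈ Cp, g e = α) ∧ (∀ e ∈ Cm, g e = -α) ∧ (∀ e, e ∉ C → g e = 0) := by
  classical
  obtain ⟨hdisj, huniv, hnadj⟩ := hbip
  constructor
  · rintro ⟨hsum, hmin⟩
    -- the support graph H
    set H : SimpleGraph V :=
      { Adj := fun a b => G.Adj a b ∧ g s(a, b) ≠ 0
        symm := by
          constructor
          intro a b hab
          refine ⟨hab.1.symm, ?_⟩
          rw [Sym2.eq_swap]
          exact hab.2
        loopless := ⟨fun a ha => G.loopless.irrefl a ha.1⟩ } with hHdef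
    have hHadj : ∀ a b : V, H.Adj a b ↔ (G.Adj a b ∧ g s(a, b) ≠ 0) := fun _ _ => Iff.rfl
    have hdeg : ∀ a b, H.Adj a b → ∃ c, c ≠ b ∧ H.Adj a c := by
      intro a b hab
      obtain ⟨habG, hgab⟩ := (hHadj a b).mp hab
      by_contra hc
      push_neg at hc
      have hz : ∀ e ∈ G.edgeFinset.filter (fun e => a ∈ e), e ≠ s(a, b) → g e = 0 := by
        intro e hef hne
        obtain ⟨hef', hae⟩ := Finset.mem_filter.mp hef
        obtain ⟨c, rfl, hac⟩ := CircuitHelpers.other_endpoint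
          (SimpleGraph.mem_edgeFinset.mp hef') hae
        by_contra hgne
        exact (hc c (fun h => hne (by rw [h]))) ((hHadj a c).mpr ⟨hac, hgne⟩)
      have hmem : s(a, b) ∈ G.edgeFinset.filter (fun e => a ∈ e) := by
        rw [Finset.mem_filter, SimpleGraph.mem_edgeFinset]
        exact ⟨habG, Sym2.mem_mk_left a b⟩
      have hsingle := Finset.sum_eq_single_of_mem s(a, b) hmem (fun e he hne => hz e he hne)
      rw [hsum a] at hsingle
      exact hgab hsingle.symm
    obtain ⟨e₀, hge₀⟩ : ∃ e, g e ≠ 0 := by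
      by_contra hcon
      push_neg at hcon
      exact hg0 (funext hcon)
    have he₀E : e₀ ∈ G.edgeSet := by
      by_contra hcon
      exact hge₀ (hgE e₀ hcon)
    obtain ⟨a₀, b₀, hab₀⟩ : ∃ a b, H.Adj a b := by
      induction e₀ using Sym2.ind with
      | _ p q => exact ⟨p, q, (hHadj p q).mpr ⟨(SimpleGraph.mem_edgeSet G).mp he₀E, hge₀⟩⟩
    obtain ⟨x, c, hc⟩ := CircuitHelpers.exists_cycle H hab₀ hdeg
    have hHsub : ∀ e ∈ c.edges, e ∈ G.edgeSet := by
      intro e he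
      have heH : e ∈ H.edgeSet := c.edges_subset_edgeSet he
      induction e using Sym2.ind with
      | _ p q =>
        exact (SimpleGraph.mem_edgeSet G).mpr
          (((hHadj p q).mp ((SimpleGraph.mem_edgeSet H).mp heH)).1)
    set w := c.transfer G hHsub with hwdef
    have hw : w.IsCycle := hc.transfer hHsub
    have hwe : w.edges = c.edges := SimpleGraph.Walk.edges_transfer c hHsub
    have hgw : ∀ e ∈ w.edges, g e ≠ 0 := by
      intro e he
      rw [hwe] at he
      have heH := c.edges_subset_edgeSet he
      induction e using Sym2.ind with
      | _ p q => exact ((hHadj p q).mp ((SimpleGraph.mem_edgeSet H).mp heH)).2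
    -- the alternating vector y
    let ε : Sym2 V → ℝ := fun e => if ∃ d ∈ w.darts, d.fst ∈ A ∧ d.edge = e then 1 else -1
    let y : Sym2 V → ℝ := fun e => if e ∈ w.edges then ε e else 0
    have hy_def : ∀ e, y e = if e ∈ w.edges then ε e else 0 := fun _ => rfl
    have hε_def : ∀ e, ε e = if ∃ d ∈ w.darts, d.fst ∈ A ∧ d.edge = e then 1 else -1 :=
      fun _ => rfl
    have hεdart : ∀ d ∈ w.darts, ε d.edge = if d.fst ∈ A then 1 else -1 := by
      intro d hd
      by_cases hdA : d.fst ∈ A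
      · rw [hε_def, if_pos ⟨d, hd, hdA, rfl⟩, if_pos hdA]
      · have hno : ¬ ∃ d' ∈ w.darts, d'.fst ∈ A ∧ d'.edge = d.edge := by
          rintro ⟨d', hd', hd'A, hde⟩
          have hnodup : (w.darts.map SimpleGraph.Dart.edge).Nodup := by
            rw [← CircuitHelpers.edges_eq]
            exact hw.isCircuit.isTrail.edges_nodup
          have heq : d' = d := List.inj_on_of_nodup_map hnodup hd' hd hde
          exact hdA (heq ▸ hd'A)
        rw [hε_def, if_neg hno, if_neg hdA]
    have hopp : ∀ d : G.Dart, d.fst ∈ A ↔ d.snd ∉ A := by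
      intro d
      have h1 := hnadj d.adj
      constructor
      · intro hf hs
        exact h1.1 ⟨hf, hs⟩
      · intro hs
        by_contra hf
        have hfB : d.fst ∈ B := by
          have hm := Set.mem_univ d.fst
          rw [← huniv] at hm
          rcases hm with h | h
          exacts [absurd h hf, h]
        have hsB : d.snd ∈ B := by
          have hm := Set.mem_univ d.snd
          rw [← huniv] at hm
          rcases hm with h | h
          exacts [absurd h hs, h]
        exact h1.2 ⟨hfB, hsB⟩
    have hedart : ∀ d : G.Dart, d ∈ w.darts → d.edge ∈ w.edges := by
      intro d hd
      rw [CircuitHelpers.edges_eq]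
      exact List.mem_map_of_mem hd
    have hy_pair : ∀ (u : V) (d₁ d₂ : G.Dart), d₁ ∈ w.darts → d₂ ∈ w.darts →
        d₁.snd = u → d₂.fst = u → y d₁.edge + y d₂.edge = 0 := by
      intro u d₁ d₂ hd₁ hd₂ hs₁ hs₂
      rw [hy_def, hy_def, if_pos (hedart d₁ hd₁), if_pos (hedart d₂ hd₂),
        hεdart d₁ hd₁, hεdart d₂ hd₂]
      by_cases hu : u ∈ A
      · have h2 : d₂.fst ∈ A := by rw [hs₂]; exact hu
        have h1 : d₁.fst ∉ A := fun hf => ((hopp d₁).mp hf) (by rw [hs₁]; exact hu)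
        rw [if_neg h1, if_pos h2]; ring
      · have h2 : d₂.fst ∉ A := by rw [hs₂]; exact hu
        have h1 : d₁.fst ∈ A := (hopp d₁).mpr (by rw [hs₁]; exact hu)
        rw [if_pos h1, if_neg h2]; ring
    have hy0' : ∀ e, e ∉ w.edges → y e = 0 := fun e he => by rw [hy_def, if_neg he]
    have hsum_y : ∀ u : V, ∑ e ∈ G.edgeFinset.filter (fun e => u ∈ e), y e = 0 := by
      intro u
      by_cases hu : u ∈ w.support
      · obtain ⟨d₁, d₂, hd₁, hd₂, hs₁, hs₂, _, _, _, _⟩ := CircuitHelpers.cycle_edges_at hw hu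
        rw [CircuitHelpers.sum_eq_pair hw y hy0' hd₁ hd₂ hs₁ hs₂]
        exact hy_pair u d₁ d₂ hd₁ hd₂ hs₁ hs₂
      · refine Finset.sum_eq_zero fun e hef => ?_
        refine hy0' e fun hew => ?_
        exact hu (CircuitHelpers.mem_support_of_mem_edges' hew (Finset.mem_filter.mp hef).2)
    obtain ⟨d₀, hd₀⟩ : ∃ d, d ∈ w.darts := by
      have h3 := hw.three_le_length
      have hlen : w.darts.length = w.length := SimpleGraph.Walk.length_darts w
      have hne : w.darts ≠ [] := by
        intro hnil
        rw [hnil] at hlen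
        simp at hlen
        omega
      exact List.exists_mem_of_ne_nil _ hne
    have he₁ : d₀.edge ∈ w.edges := hedart d₀ hd₀
    have hyε : y d₀.edge = ε d₀.edge := by rw [hy_def, if_pos he₁]
    have hy₁sq : y d₀.edge * y d₀.edge = 1 := by
      rw [hyε, hε_def]
      split_ifs <;> norm_num
    have hy₁ne : y d₀.edge ≠ 0 := by
      intro h
      rw [h] at hy₁sq
      norm_num at hy₁sq
    have hsupy : Function.support y ⊆ Function.support g := by
      intro e he
      rw [Function.mem_support] at he ⊢
      intro hge
      exact he (hy0' e (fun hew => hgw e hew hge))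
    have hyE' : ∀ e, e ∉ G.edgeSet → y e = 0 := fun e he =>
      hy0' e (fun hew => he (w.edges_subset_edgeSet hew))
    have hsupp_eq : Function.support y = Function.support g := by
      by_contra hne
      exact hmin ⟨y, fun h0 => hy₁ne (by rw [h0]; rfl), hyE', hsum_y,
        hsupy.ssubset_of_ne hne⟩
    set t : ℝ := g d₀.edge * y d₀.edge with htdef
    have htne : t ≠ 0 := mul_ne_zero (hgw d₀.edge he₁) hy₁ne
    have hz : ∀ e, g e - t * y e = 0 := by
      by_contra hcon
      push_neg at hcon
      obtain ⟨e', he'⟩ := hcon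
      apply hmin
      refine ⟨fun e => g e - t * y e, ?_, ?_, ?_, ?_⟩
      · intro h0
        exact he' (congrFun h0 e')
      · intro e heE
        show g e - t * y e = 0
        rw [hgE e heE, hyE' e heE]; ring
      · intro u
        show ∑ e ∈ G.edgeFinset.filter (fun e => u ∈ e), (g e - t * y e) = 0
        rw [Finset.sum_sub_distrib, hsum u, ← Finset.mul_sum, hsum_y u]; ring
      · rw [Set.ssubset_def]
        constructor
        · intro e he
          rw [Function.mem_support] at he ⊢
          intro hge
          apply he
          have hye : y e = 0 := by
            by_contra hyne
            have : e ∈ Function.support g := by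
              rw [← hsupp_eq]; exact Function.mem_support.mpr hyne
            exact (Function.mem_support.mp this) hge
          show g e - t * y e = 0
          rw [hge, hye]; ring
        · intro hsub
          have h1 : d₀.edge ∈ Function.support g := Function.mem_support.mpr (hgw d₀.edge he₁)
          have h2 := hsub h1
          rw [Function.mem_support] at h2
          apply h2
          show g d₀.edge - t * y d₀.edge = 0
          rw [htdef, mul_assoc, hy₁sq, mul_one]; ring
    have hgty : ∀ e, g e = t * y e := fun e => by have := hz e; linarith
    have habs : |t| ≠ 0 := fun h => htne (abs_eq_zero.mp h)
    have hmatch : ∀ s : ℝ, s ≠ 0 → IsMatchingSet {e | e ∈ w.edges ∧ g e = s} := by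
      intro s hs e₁' he₁' e₂' he₂' hne u hu₁ hu₂
      obtain ⟨hw₁, hg₁⟩ := he₁'
      obtain ⟨hw₂, hg₂⟩ := he₂'
      have hus : u ∈ w.support := CircuitHelpers.mem_support_of_mem_edges' hw₁ hu₁
      obtain ⟨d₁, d₂, hd₁, hd₂, hs₁, hs₂, hnee, hall, _, _⟩ :=
        CircuitHelpers.cycle_edges_at hw hus
      have hpair := hy_pair u d₁ d₂ hd₁ hd₂ hs₁ hs₂
      have hgpair : g d₁.edge + g d₂.edge = 0 := by
        rw [hgty d₁.edge, hgty d₂.edge, ← mul_add, hpair, mul_zero]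
      rcases hall e₁' hw₁ hu₁ with rfl | rfl <;> rcases hall e₂' hw₂ hu₂ with rfl | rfl
      · exact hne rfl
      · rw [hg₁, hg₂] at hgpair; exact hs (by linarith)
      · rw [hg₁, hg₂] at hgpair; exact hs (by linarith)
      · exact hne rfl
    refine ⟨{e | e ∈ w.edges}, {e | e ∈ w.edges ∧ g e = |t|}, {e | e ∈ w.edges ∧ g e = -|t|},
      |t|, ⟨x, w, hw, rfl⟩, ?_, ?_, hmatch |t| habs, hmatch (-|t|) (neg_ne_zero.mpr habs),
      abs_pos.mpr htne, fun e he => he.2, fun e he => he.2, ?_⟩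
    · ext e
      simp only [Set.mem_union, Set.mem_setOf_eq]
      constructor
      · rintro (⟨h, _⟩ | ⟨h, _⟩) <;> exact h
      · intro he
        have hy : y e = 1 ∨ y e = -1 := by
          rw [hy_def, if_pos he, hε_def]
          split_ifs <;> simp
        have hg := hgty e
        rcases hy with hy | hy
        · rw [hy, mul_one] at hg
          rcases abs_cases t with ⟨hab, _⟩ | ⟨hab, _⟩
          · left; exact ⟨he, by rw [hg, hab]⟩
          · right; exact ⟨he, by rw [hg, hab]; ring⟩
        · rw [hy, mul_neg_one] at hg
          rcases abs_cases t with ⟨hab, _⟩ | ⟨hab, _⟩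
          · right; exact ⟨he, by rw [hg, hab]⟩
          · left; exact ⟨he, by rw [hg, hab]⟩
    · rw [Set.disjoint_left]
      rintro e ⟨_, h1⟩ ⟨_, h2⟩
      rw [h1] at h2
      exact habs (by linarith)
    · intro e he
      rw [hgty e, hy0' e he, mul_zero]
  · rintro ⟨C, Cp, Cm, α, ⟨x, w, hw, hCdef⟩, hunion, hdisjCpm, hMp, hMm, hα, hgp, hgm, hgC0⟩
    have hmemC : ∀ e : Sym2 V, e ∈ C ↔ e ∈ w.edges := by
      intro e
      rw [hCdef]
      exact Iff.rfl
    have hgne : ∀ e ∈ C, g e ≠ 0 := by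
      intro e he
      rw [← hunion] at he
      rcases he with he | he
      · rw [hgp e he]; exact ne_of_gt hα
      · rw [hgm e he]; intro hcon; apply ne_of_gt hα; linarith
    have hg_mem : ∀ e, g e ≠ 0 → e ∈ w.edges := by
      intro e he
      by_contra hcon
      exact he (hgC0 e (fun hmem => hcon ((hmemC e).mp hmem)))
    have hg0' : ∀ e, e ∉ w.edges → g e = 0 := by
      intro e he
      by_contra hcon
      exact he (hg_mem e hcon)
    have hpair : ∀ (u : V) (d₁ d₂ : G.Dart), d₁ ∈ w.darts → d₂ ∈ w.darts →
        d₁.snd = u → d₂.fst = u → d₁.edge ≠ d₂.edge → g d₁.edge + g d₂.edge = 0 := by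
      intro u d₁ d₂ hd₁ hd₂ hs₁ hs₂ hne
      have he₁ : d₁.edge ∈ C := (hmemC _).mpr (by
        rw [CircuitHelpers.edges_eq]; exact List.mem_map_of_mem hd₁)
      have he₂ : d₂.edge ∈ C := (hmemC _).mpr (by
        rw [CircuitHelpers.edges_eq]; exact List.mem_map_of_mem hd₂)
      have hu₁ : u ∈ d₁.edge := CircuitHelpers.mem_dart_edge.mpr (Or.inr hs₁.symm)
      have hu₂ : u ∈ d₂.edge := CircuitHelpers.mem_dart_edge.mpr (Or.inl hs₂.symm)
      rw [← hunion] at he₁ he₂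
      rcases he₁ with h1 | h1 <;> rcases he₂ with h2 | h2
      · exact absurd hu₂ (hMp _ h1 _ h2 hne u hu₁)
      · rw [hgp _ h1, hgm _ h2]; ring
      · rw [hgm _ h1, hgp _ h2]; ring
      · exact absurd hu₂ (hMm _ h1 _ h2 hne u hu₁)
    constructor
    · intro u
      by_cases hu : u ∈ w.support
      · obtain ⟨d₁, d₂, hd₁, hd₂, hs₁, hs₂, hne, _, _, _⟩ :=
          CircuitHelpers.cycle_edges_at hw hu
        rw [CircuitHelpers.sum_eq_pair hw g hg0' hd₁ hd₂ hs₁ hs₂]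
        exact hpair u d₁ d₂ hd₁ hd₂ hs₁ hs₂ hne
      · refine Finset.sum_eq_zero fun e hef => ?_
        by_contra hge
        exact hu (CircuitHelpers.mem_support_of_mem_edges' (hg_mem e hge)
          (Finset.mem_filter.mp hef).2)
    · rintro ⟨y, hyne, hyE, hysum, hss⟩
      have hsuppg : Function.support g = C := by
        ext e
        simp only [Function.mem_support]
        constructor
        · intro h
          exact (hmemC e).mpr (hg_mem e h)
        · exact hgne e
      obtain ⟨e₂, he₂g, he₂y⟩ := Set.exists_of_ssubset hss
      have hy0' : ∀ e, e ∉ w.edges → y e = 0 := by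
        intro e he
        by_contra hcon
        have h1 : e ∈ Function.support y := Function.mem_support.mpr hcon
        have h2 := hss.subset h1
        rw [hsuppg] at h2
        exact he ((hmemC e).mp h2)
      have he₂w : e₂ ∈ w.edges := by
        rw [hsuppg] at he₂g
        exact (hmemC e₂).mp he₂g
      have hy₂ : y e₂ = 0 := by
        by_contra hcon
        exact he₂y (Function.mem_support.mpr hcon)
      have hall0 := CircuitHelpers.cycle_flow_zero hw y hy0' hysum he₂w hy₂
      apply hyne
      funext e
      by_cases he : e ∈ w.edges
      · exact hall0 e he
      · exact hy0' e he
end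

section
/- Let G be an undirected graph, let C₁, …, C_t be cycles of G, and let D₀, D₁, …, D_t be orientations of G such that for each i ∈ {1,…,t} the cycle C_i is directed in D_{i−1} and D_i is obtained from D_{i−1} by flipping C_i. Let H be the subgraph of G formed by the union of the vertices and edges of C₁, …, C_t. Then for every connected component of H with vertex set Z, the subdigraph of D₀ induced on Z is strongly connected. -/
variable {V : Type*}

section Aux

open SimpleGraph Relation

private lemma rtg_lift {α : Type*} {r p : α → α → Prop}
    (h : ∀ a b, r a b → Relation.ReflTransGen p a b) {a b : α}
    (hr : Relation.ReflTransGen r a b) : Relation.ReflTransGen p a b := by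
  induction hr with
  | refl => exact .refl
  | tail _ h2 ih => exact ih.trans (h _ _ h2)

private lemma walk_rtg {G : SimpleGraph V} (D : GraphOrientation G) (T : Set (Sym2 V))
    {a b : V} (p : G.Walk a b)
    (hd : ∀ d ∈ p.darts, D.adj d.toProd.1 d.toProd.2)
    (he : ∀ e ∈ p.edges, e ∈ T) :
    Relation.ReflTransGen
      (fun x y => D.adj x y ∧ (∃ e ∈ T, x ∈ e) ∧ (∃ e ∈ T, y ∈ e)) a b := by
  induction p with
  | nil => exact .refl
  | @cons u v w h q ih =>
    have hda : D.adj u v := hd ⟨(u, v), h⟩ (by simp)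
    have hea : s(u, v) ∈ T := he s(u, v) (by simp)
    refine Relation.ReflTransGen.head
      ⟨hda, ⟨s(u, v), hea, Sym2.mem_mk_left u v⟩, ⟨s(u, v), hea, Sym2.mem_mk_right u v⟩⟩
      (ih (fun d hd' => hd d (by simp [hd'])) (fun e he' => he e (by simp [he'])))

private lemma mem_support_of_mem_edge_exists {G : SimpleGraph V} {a b x : V}
    (w : G.Walk a b) (hx : ∃ e ∈ w.edges, x ∈ e) : x ∈ w.support := by
  obtain ⟨e, he, hxe⟩ := hx
  obtain ⟨y, rfl⟩ := Sym2.mem_iff_exists.mp hxe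
  exact w.fst_mem_support_of_mem_edges he

private lemma cycle_vertex_rtg [DecidableEq V] {G : SimpleGraph V} {D : GraphOrientation G}
    {C0 : Set (Sym2 V)} (h : D.IsDirectedCycle C0) {x y : V}
    (hx : ∃ e ∈ C0, x ∈ e) (hy : ∃ e ∈ C0, y ∈ e) :
    Relation.ReflTransGen
      (fun p q => D.adj p q ∧ (∃ e ∈ C0, p ∈ e) ∧ (∃ e ∈ C0, q ∈ e)) x y := by
  obtain ⟨v0, w, _, hC, hd⟩ := h
  have hCe : ∀ e, e ∈ C0 ↔ e ∈ w.edges := fun e => by rw [hC]; rfl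
  have hxs : x ∈ w.support :=
    mem_support_of_mem_edge_exists w (by obtain ⟨e, he, h1⟩ := hx; exact ⟨e, (hCe e).mp he, h1⟩)
  have hys : y ∈ w.support :=
    mem_support_of_mem_edge_exists w (by obtain ⟨e, he, h1⟩ := hy; exact ⟨e, (hCe e).mp he, h1⟩)
  have h1 := walk_rtg D C0 (w.dropUntil x hxs)
    (fun d hd' => hd d (w.darts_dropUntil_subset hxs hd'))
    (fun e he' => (hCe e).mpr (w.edges_dropUntil_subset hxs he'))
  have h2 := walk_rtg D C0 (w.takeUntil y hys)
    (fun d hd' => hd d (w.darts_takeUntil_subset hys hd'))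
    (fun e he' => (hCe e).mpr (w.edges_takeUntil_subset hys he'))
  exact h1.trans h2

private lemma cycle_reachable [DecidableEq V] {G : SimpleGraph V} {D : GraphOrientation G}
    {C0 H : Set (Sym2 V)} (h : D.IsDirectedCycle C0) (hsub : C0 ⊆ H) {x y : V}
    (hx : ∃ e ∈ C0, x ∈ e) (hy : ∃ e ∈ C0, y ∈ e) :
    (SimpleGraph.fromEdgeSet H).Reachable x y := by
  obtain ⟨v0, w, _, hC, _⟩ := h
  have hCe : ∀ e, e ∈ C0 ↔ e ∈ w.edges := fun e => by rw [hC]; rfl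
  have hE : ∀ e ∈ w.edges, e ∈ (SimpleGraph.fromEdgeSet H).edgeSet := by
    intro e he
    rw [SimpleGraph.edgeSet_fromEdgeSet]
    exact ⟨hsub ((hCe e).mpr he),
      SimpleGraph.not_isDiag_of_mem_edgeSet G (w.edges_subset_edgeSet he)⟩
  set w' := w.transfer (SimpleGraph.fromEdgeSet H) hE with hw'
  have hs : w'.support = w.support := w.support_transfer hE
  have hxs : x ∈ w'.support := by
    rw [hs]
    exact mem_support_of_mem_edge_exists w (by obtain ⟨e, he, h1⟩ := hx; exact ⟨e, (hCe e).mp he, h1⟩)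
  have hys : y ∈ w'.support := by
    rw [hs]
    exact mem_support_of_mem_edge_exists w (by obtain ⟨e, he, h1⟩ := hy; exact ⟨e, (hCe e).mp he, h1⟩)
  exact ⟨(w'.dropUntil x hxs).append (w'.takeUntil y hys)⟩

private lemma main_aux {V : Type*} (G : SimpleGraph V) : ∀ (t : ℕ)
    (C : Fin t → Set (Sym2 V)) (D : Fin (t + 1) → GraphOrientation G),
    (∀ i : Fin t, (D i.castSucc).IsDirectedCycle (C i)) →
    (∀ i : Fin t, GraphOrientation.IsFlip (D i.castSucc) (D i.succ) (C i)) →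
    ∀ c : (SimpleGraph.fromEdgeSet (⋃ i, C i)).ConnectedComponent,
    StronglyConnectedOn (D 0).adj c.supp := by
  classical
  intro t
  induction t with
  | zero =>
    intro C D hcyc hflip c u hu v hv
    have hUe : (⋃ i : Fin 0, C i) = ∅ := by simp
    rw [SimpleGraph.ConnectedComponent.mem_supp_iff] at hu hv
    have hr : (SimpleGraph.fromEdgeSet (⋃ i, C i)).Reachable u v :=
      SimpleGraph.ConnectedComponent.eq.mp (hu.trans hv.symm)
    rw [hUe, SimpleGraph.fromEdgeSet_empty] at hr
    rw [SimpleGraph.reachable_bot.mp hr]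
  | succ t ih =>
    intro C D hcyc hflip c
    have hGr : True := trivial
    set R := fun a b => (D 0).adj a b ∧ a ∈ c.supp ∧ b ∈ c.supp with hR
    have adj_supp : ∀ {x y : V}, (SimpleGraph.fromEdgeSet (⋃ i : Fin (t + 1), C i)).Reachable x y → x ∈ c.supp → y ∈ c.supp := by
      intro x y h hx
      rw [SimpleGraph.ConnectedComponent.mem_supp_iff] at hx ⊢
      rw [← hx]
      exact (SimpleGraph.ConnectedComponent.sound h).symm
    have hC0 : (D 0).IsDirectedCycle (C 0) := by
      have h0 := hcyc 0
      rwa [Fin.castSucc_zero] at h0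
    have hC0H : C 0 ⊆ ⋃ i : Fin (t + 1), C i := Set.subset_iUnion C 0
    have hSsupp : ∀ {x y : V}, (∃ e ∈ C 0, x ∈ e) → (∃ e ∈ C 0, y ∈ e) →
        x ∈ c.supp → y ∈ c.supp := by
      intro x y hx hy hxc
      exact adj_supp (cycle_reachable hC0 hC0H hx hy) hxc
    have hcycR : ∀ {x y : V}, (∃ e ∈ C 0, x ∈ e) → (∃ e ∈ C 0, y ∈ e) → x ∈ c.supp →
        Relation.ReflTransGen R x y := by
      intro x y hx hy hxc
      refine Relation.ReflTransGen.mono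
        (r := fun p q => (D 0).adj p q ∧ (∃ e ∈ C 0, p ∈ e) ∧ (∃ e ∈ C 0, q ∈ e)) (p := R)
        (fun a b hab => ⟨hab.1, hSsupp hx hab.2.1 hxc, hSsupp hx hab.2.2 hxc⟩) x y
        (cycle_vertex_rtg hC0 hx hy)
    -- induction hypothesis for the tail
    have ih' := ih (fun j => C j.succ) (fun j => D j.succ)
      (fun j => by
        have h := hcyc j.succ
        show ((D (j.castSucc).succ).IsDirectedCycle (C j.succ))
        rwa [Fin.succ_castSucc])
      (fun j => by
        have h := hflip j.succ
        show GraphOrientation.IsFlip (D (j.castSucc).succ) (D j.succ.succ) (C j.succ)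
        rwa [Fin.succ_castSucc])
    set Gr' := SimpleGraph.fromEdgeSet (⋃ j : Fin t, C j.succ) with hGr'
    have hH'H : (⋃ j : Fin t, C j.succ) ⊆ ⋃ i : Fin (t + 1), C i := by
      intro e he
      simp only [Set.mem_iUnion] at he ⊢
      obtain ⟨j, hj⟩ := he
      exact ⟨j.succ, hj⟩
    have hflip0 := hflip 0
    rw [Fin.castSucc_zero] at hflip0
    -- lift one arc of D 1 within c.supp to a D 0 path within c.supp
    have lift : ∀ x y : V, (D (0 : Fin (t + 1)).succ).adj x y → x ∈ c.supp → y ∈ c.supp →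
        Relation.ReflTransGen R x y := by
      intro x y hxy hxc hyc
      have hG : G.Adj x y := (D _).adj_of x y hxy
      by_cases hmem : s(x, y) ∈ C 0
      · exact hcycR ⟨s(x, y), hmem, Sym2.mem_mk_left x y⟩
          ⟨s(x, y), hmem, Sym2.mem_mk_right x y⟩ hxc
      · have := ((hflip0 x y hG).2 hmem).mp hxy
        exact Relation.ReflTransGen.single ⟨this, hxc, hyc⟩
    -- the key claim: each edge of H within c.supp gives an R-path
    have key : ∀ a b : V, (SimpleGraph.fromEdgeSet (⋃ i : Fin (t + 1), C i)).Adj a b → a ∈ c.supp → Relation.ReflTransGen R a b := by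
      intro a b hab hac
      have hbc : b ∈ c.supp := adj_supp hab.reachable hac
      obtain ⟨hmem, hne⟩ := (SimpleGraph.fromEdgeSet_adj _).mp hab
      obtain ⟨i, hi⟩ := Set.mem_iUnion.mp hmem
      induction i using Fin.cases with
      | zero =>
        exact hcycR ⟨s(a, b), hi, Sym2.mem_mk_left a b⟩
          ⟨s(a, b), hi, Sym2.mem_mk_right a b⟩ hac
      | succ j =>
        have hab' : Gr'.Adj a b := by
          rw [hGr', SimpleGraph.fromEdgeSet_adj]
          exact ⟨Set.mem_iUnion.mpr ⟨j, hi⟩, hne⟩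
        set c' := Gr'.connectedComponentMk a with hc'
        have ha' : a ∈ c'.supp := SimpleGraph.ConnectedComponent.mem_supp_iff _ _ |>.mpr rfl
        have hb' : b ∈ c'.supp := by
          rw [SimpleGraph.ConnectedComponent.mem_supp_iff]
          exact (SimpleGraph.ConnectedComponent.sound hab'.reachable).symm
        have hsub : c'.supp ⊆ c.supp := by
          intro x hx
          rw [SimpleGraph.ConnectedComponent.mem_supp_iff] at hx
          have hr : Gr'.Reachable x a := SimpleGraph.ConnectedComponent.eq.mp hx
          have hr2 : (SimpleGraph.fromEdgeSet (⋃ i : Fin (t + 1), C i)).Reachable a x :=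
            (hr.mono (SimpleGraph.fromEdgeSet_mono hH'H)).symm
          exact adj_supp hr2 hac
        have hstrong := ih' c' a ha' b hb'
        exact rtg_lift (fun x y hxy => lift x y hxy.1 (hsub hxy.2.1) (hsub hxy.2.2)) hstrong
    -- conclude by walking inside the component
    intro u hu v hv
    have hu' := hu
    rw [SimpleGraph.ConnectedComponent.mem_supp_iff] at hu hv
    have hr : (SimpleGraph.fromEdgeSet (⋃ i : Fin (t + 1), C i)).Reachable u v :=
      SimpleGraph.ConnectedComponent.eq.mp (hu.trans hv.symm)
    obtain ⟨p⟩ := hr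
    have walkcase : ∀ (x y : V)
        (q : (SimpleGraph.fromEdgeSet (⋃ i : Fin (t + 1), C i)).Walk x y), x ∈ c.supp →
        Relation.ReflTransGen R x y := by
      intro x y q
      induction q with
      | nil => intro _; exact .refl
      | cons h q ihq => intro hx; exact (key _ _ h hx).trans (ihq (adj_supp h.reachable hx))
    exact walkcase u v p hu'

end Aux

/-- **Claim (∗).** Let `D₀, …, D_t` be orientations of a graph `G`
such that `D_i` is obtained from `D_{i-1}` by flipping a cycle `C_i` directed in
`D_{i-1}`, and let `H` be the union of the cycles `C₁, …, C_t`. Then the vertex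
set of every connected component of `H` induces a strongly connected subdigraph
of `D₀`. -/
theorem components_of_flipped_cycles_strongly_connected
    {V : Type*} [Fintype V] (G : SimpleGraph V) (t : ℕ)
    (C : Fin t → Set (Sym2 V)) (D : Fin (t + 1) → GraphOrientation G)
    (hcyc : ∀ i : Fin t, (D i.castSucc).IsDirectedCycle (C i))
    (hflip : ∀ i : Fin t, GraphOrientation.IsFlip (D i.castSucc) (D i.succ) (C i))
    (c : (SimpleGraph.fromEdgeSet (⋃ i, C i)).ConnectedComponent) :
    StronglyConnectedOn (D 0).adj c.supp := by
  exact main_aux G t C D hcyc hflip c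
end

section
/- Let D be a digraph, let X be a set of vertices of D such that the induced subdigraph D[X] is strongly connected, and let C be a directed cycle of D all of whose vertices lie in X. Let D' be the digraph obtained from D by reversing the direction of every arc of C. Then the induced subdigraph D'[X] is strongly connected. -/
/-!
Every arc of `D[X]` off the cycle survives in `D'`, and the endpoints of an arc on the cycle
lie on the reversed cycle, along which all vertices of the cycle still reach each other.
So every arc of `D[X]` is replaced by a directed path of `D'[X]`.
-/

variable {V : Type*}

section

open Function Relation

variable {α : Type*}

theorem Function.Periodic.reflTransGen {r : α → α → Prop} {f : ℕ → α} {n : ℕ}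
    (hf : Periodic f n) (hn : n ≠ 0) (hr : ∀ i, r (f i) (f (i + 1))) (i j : ℕ) :
    ReflTransGen r (f i) (f j) := by
  have hle : i ≤ j + i * n := le_add_left (Nat.le_mul_of_pos_right i (Nat.pos_of_ne_zero hn))
  have hchain : ReflTransGen (r on f) i (j + i * n) :=
    reflTransGen_of_succ_of_le _ (fun k _ => by simpa only [Order.succ_eq_add_one] using hr k) hle
  have hperiod : f (j + i * n) = f j := hf.nat_mul i j
  simpa only [onFun, hperiod] using hchain.lift f fun _ _ h => h

theorem List.getElem_mod_mem_zip_rotate_one (l : List α) (hl : 0 < l.length) (i : ℕ) :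
    (l[i % l.length]'(Nat.mod_lt _ hl), l[(i + 1) % l.length]'(Nat.mod_lt _ hl)) ∈
      l.zip (l.rotate 1) := by
  have hi : i % l.length < (l.zip (l.rotate 1)).length := by
    simpa only [List.length_zip, List.length_rotate, Nat.min_self] using Nat.mod_lt _ hl
  have h := List.getElem_mem hi
  rw [List.getElem_zip, List.getElem_rotate] at h
  simpa only [Nat.mod_add_mod] using h

theorem List.reflTransGen_of_forall_mem_zip_rotate_one {r : α → α → Prop} {l : List α}
    (h : ∀ p ∈ l.zip (l.rotate 1), r p.1 p.2) {a b : α} (ha : a ∈ l) (hb : b ∈ l) :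
    ReflTransGen r a b := by
  have hl : 0 < l.length := List.length_pos_of_mem ha
  obtain ⟨i, hi, rfl⟩ := List.getElem_of_mem ha
  obtain ⟨j, hj, rfl⟩ := List.getElem_of_mem hb
  have hperiodic : Periodic (fun k => l[k % l.length]'(Nat.mod_lt _ hl)) l.length :=
    fun k => by simp only [Nat.add_mod_right]
  simpa only [Nat.mod_eq_of_lt hi, Nat.mod_eq_of_lt hj] using
    hperiodic.reflTransGen hl.ne' (fun k => h _ (l.getElem_mod_mem_zip_rotate_one hl k)) i j

theorem StronglyConnectedOn.of_forall_reflTransGen {D D' : α → α → Prop} {X : Set α}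
    (hD : StronglyConnectedOn D X)
    (h : ∀ u ∈ X, ∀ v ∈ X, D u v → ReflTransGen (fun a b => D' a b ∧ a ∈ X ∧ b ∈ X) u v) :
    StronglyConnectedOn D' X :=
  fun u hu v hv => (hD u hu v hv).lift' id fun a b ⟨hab, ha, hb⟩ => h a ha b hb hab

end

theorem strongly_connected_after_cycle_reversal_general
    {V : Type*} (D : V → V → Prop) (X : Set V)
    (hX : StronglyConnectedOn D X)
    (l : List V) (hCX : ∀ v ∈ l, v ∈ X)
    (D' : V → V → Prop)
    (hD' : ∀ u v, D' u v ↔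
      ((v, u) ∈ l.zip (l.rotate 1) ∨ (D u v ∧ (u, v) ∉ l.zip (l.rotate 1)))) :
    StronglyConnectedOn D' X := by
  refine hX.of_forall_reflTransGen fun u hu v hv huv => ?_
  by_cases hcycle : (u, v) ∈ l.zip (l.rotate 1)
  · have hreversed : ∀ p ∈ l.zip (l.rotate 1),
        flip (fun a b => D' a b ∧ a ∈ X ∧ b ∈ X) p.1 p.2 := fun p hp =>
      ⟨(hD' _ _).2 (.inl hp), hCX _ (List.mem_rotate.1 (List.of_mem_zip hp).2),
        hCX _ (List.of_mem_zip hp).1⟩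
    obtain ⟨hul, hvl⟩ := List.of_mem_zip hcycle
    exact Relation.reflTransGen_swap.1
      (List.reflTransGen_of_forall_mem_zip_rotate_one hreversed (List.mem_rotate.1 hvl) hul)
  · exact .single ⟨(hD' u v).2 (.inr ⟨huv, hcycle⟩), hu, hv⟩

/-- Let `D` be a digraph, `X` a vertex set with `D[X]` strongly
connected, and `C` a directed cycle of `D` (given as a vertex list `l`) all of
whose vertices lie in `X`. If `D'` is obtained from `D` by reversing every arc
of `C`, then `D'[X]` is still strongly connected. -/
theorem strongly_connected_after_cycle_reversal
    {V : Type*} (D : V → V → Prop) (X : Set V)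
    (hX : StronglyConnectedOn D X)
    (l : List V) (hC : IsDirectedCycleList D l) (hCX : ∀ v ∈ l, v ∈ X)
    (D' : V → V → Prop)
    (hD' : ∀ u v, D' u v ↔
      ((v, u) ∈ l.zip (l.rotate 1) ∨ (D u v ∧ (u, v) ∉ l.zip (l.rotate 1)))) :
    StronglyConnectedOn D' X :=
  strongly_connected_after_cycle_reversal_general D X hX l hCX D' hD'
end

section
/- Let G = (V,E) be a bipartite graph, let M₁ be a perfect matching of G, let C₁ be an alternating cycle for M₁ and set M' := M₁ Δ C₁, and let C₂ be an alternating cycle for M' and set M₂ := M' Δ C₂. Assume M₁ ≠ M' and M₁ ≠ M₂. Then there exists a weight function w : E → ℝ with w(e) ≥ 0 for all e ∈ E such that: (1) M₂ is the unique perfect matching of G of maximum total weight, and (2) w(M₁) < w(M') < w(M₂), where w(M) := ∑_{e ∈ M} w(e). -/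
variable {V : Type*}

section MWHelpers
open SimpleGraph
set_option linter.unusedSectionVars false

variable {V : Type*} [DecidableEq V]

/-- The endpoints of an edge, as a `Finset`. -/
def mwEnds : Sym2 V → Finset V :=
  Sym2.lift ⟨fun a b => {a, b}, fun a b => by
    simp [Finset.pair_comm]⟩

@[simp] lemma mwEnds_mem {v : V} {e : Sym2 V} : v ∈ mwEnds e ↔ v ∈ e := by
  induction e using Sym2.ind with
  | _ x y => simp [mwEnds, Sym2.mem_iff]

lemma mwEnds_card {e : Sym2 V} (h : ¬ e.IsDiag) : (mwEnds e).card = 2 := by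
  induction e using Sym2.ind with
  | _ x y =>
    rw [Sym2.mk_isDiag_iff] at h
    simp [mwEnds, Finset.card_insert_of_notMem, h]

/-- Every vertex of a cycle edge-set has (at least) two distinct incident cycle edges. -/
lemma mw_two_incident {G : SimpleGraph V} {C : Set (Sym2 V)} (hC : IsCycleEdgeSet G C)
    {v : V} {e : Sym2 V} (he : e ∈ C) (hv : v ∈ e) :
    ∃ f ∈ C, f ≠ e ∧ v ∈ f := by
  obtain ⟨u, wk, hcyc, rfl⟩ := hC
  have hsup : v ∈ wk.support := by
    induction e using Sym2.ind with
    | _ x y =>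
      rcases Sym2.mem_iff.mp hv with rfl | rfl
      · exact wk.fst_mem_support_of_mem_edges he
      · exact wk.snd_mem_support_of_mem_edges he
  set c := wk.rotate v hsup with hcdef
  have hccyc : c.IsCycle := hcyc.rotate hsup
  have hperm : c.edges ~r wk.edges := wk.rotate_edges v hsup
  have hmem : ∀ g, g ∈ c.edges ↔ g ∈ wk.edges := fun g => hperm.perm.mem_iff
  -- first edge of c
  obtain ⟨x, hadj, q, hq⟩ := Walk.not_nil_iff.mp hccyc.not_nil
  have hlen : 3 ≤ c.length := hccyc.three_le_length
  have hrevnil : ¬ c.reverse.Nil := by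
    rw [Walk.nil_iff_length_eq, Walk.length_reverse]
    omega
  obtain ⟨y, hadjy, r, hr⟩ := Walk.not_nil_iff.mp hrevnil
  have he₁ : s(v, x) ∈ c.edges := by rw [hq]; simp
  have he₂ : s(v, y) ∈ c.edges := by
    have : s(v, y) ∈ c.reverse.edges := by rw [hr]; simp
    rwa [Walk.edges_reverse, List.mem_reverse] at this
  have hne : s(v, x) ≠ s(v, y) := by
    intro hxy
    -- head = last contradicts nodup for list of length ≥ 2
    have hnd : c.edges.Nodup := hccyc.isTrail.edges_nodup
    have hqe : c.edges = s(v, x) :: q.edges := by rw [hq]; simp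
    have hre : c.edges.reverse = s(v, y) :: r.edges := by
      rw [← Walk.edges_reverse, hr]; simp
    have hcedges : c.edges = r.edges.reverse ++ [s(v, y)] := by
      rw [← List.reverse_reverse c.edges, hre]; simp
    have hrlen : r.edges ≠ [] := by
      have h1 : c.reverse.length = r.length + 1 := by rw [hr]; simp
      have : r.edges.length = r.length := r.length_edges
      rw [Walk.length_reverse] at h1
      intro hnil
      rw [hnil] at this
      simp at this
      omega
    have : s(v, y) ∈ q.edges := by
      have := hqe.symm.trans hcedges
      rcases List.exists_cons_of_ne_nil (by simpa using hrlen : r.edges.reverse ≠ []) with ⟨a, as, ha⟩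
      rw [ha] at this
      simp at this
      rw [this.2]
      simp
    rw [hqe, hxy] at hnd
    exact (List.nodup_cons.mp hnd).1 this
  rcases eq_or_ne (s(v,x)) e with h1 | h1
  · exact ⟨s(v, y), (hmem _).mp he₂, by rw [← h1]; exact hne.symm, by simp⟩
  · exact ⟨s(v, x), (hmem _).mp he₁, h1, by simp⟩

/-- A cycle edge-set is nonempty. -/
lemma mw_cycle_nonempty {G : SimpleGraph V} {C : Set (Sym2 V)} (hC : IsCycleEdgeSet G C) :
    ∃ e, e ∈ C := by
  obtain ⟨u, wk, hcyc, rfl⟩ := hC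
  obtain ⟨x, hadj, q, hq⟩ := Walk.not_nil_iff.mp hcyc.not_nil
  exact ⟨s(u, x), by rw [hq]; simp⟩

/-- Walk closure: if the start vertex touches `T` and any `T`-touching vertex has all
its walk edges in `T`, then all edges of the walk are in `T`. -/
lemma mw_walk_in {G : SimpleGraph V} {T : Finset (Sym2 V)} :
    ∀ {x y : V} (p : G.Walk x y),
      (∀ v (g : Sym2 V), (∃ h ∈ T, v ∈ h) → g ∈ p.edges → v ∈ g → g ∈ T) →
      (∃ h ∈ T, x ∈ h) → ∀ e ∈ p.edges, e ∈ T := by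
  intro x y p
  induction p with
  | nil => intro _ _ e he; simp at he
  | @cons a b c hadj q ih =>
    intro hP hx e he
    rw [Walk.edges_cons, List.mem_cons] at he
    have hfirst : s(a, b) ∈ T := hP a s(a, b) hx (by simp) (by simp)
    rcases he with rfl | he
    · exact hfirst
    · refine ih (fun v g hv hg => hP v g hv (by simp [hg])) ⟨_, hfirst, by simp⟩ e he

set_option linter.unusedSectionVars false

/-- Double counting: an alternating cycle has as many matching edges as non-matching ones. -/
lemma mw_half {Cf Mf : Finset (Sym2 V)}
    (hdiag : ∀ e ∈ Cf, ¬ e.IsDiag)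
    (hdeg : ∀ (v : V) (e : Sym2 V), e ∈ Cf → v ∈ e → ∃ f ∈ Cf, f ≠ e ∧ v ∈ f)
    (halt : ∀ (v : V) (e₁ : Sym2 V), e₁ ∈ Cf → ∀ e₂ ∈ Cf, e₁ ≠ e₂ → v ∈ e₁ → v ∈ e₂ →
      (e₁ ∈ Mf ↔ e₂ ∉ Mf)) :
    (Cf.filter (· ∈ Mf)).card = (Cf.filter (· ∉ Mf)).card := by
  have key : ∀ P : Sym2 V → Prop, ∀ _ : DecidablePred P,
      (∀ e ∈ Cf, ∀ f ∈ Cf, e ≠ f → (∃ v : V, v ∈ e ∧ v ∈ f) → (P e ↔ ¬ P f)) →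
      ((Cf.filter P).biUnion mwEnds).card = 2 * (Cf.filter P).card := by
    intro P _ hP
    rw [Finset.card_biUnion, Finset.sum_congr rfl
      (fun e he => mwEnds_card (hdiag e (Finset.mem_filter.mp he).1))]
    · simp [Finset.sum_const, mul_comm]
    · intro e he f hf hef
      simp only [Finset.mem_coe, Finset.mem_filter] at he hf
      rw [Function.onFun, Finset.disjoint_left]
      intro v hv hv'
      rw [mwEnds_mem] at hv hv'
      exact ((hP e he.1 f hf.1 hef ⟨v, hv, hv'⟩).mp he.2) hf.2
  have hunion : ∀ P : Sym2 V → Prop, ∀ _ : DecidablePred P,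
      (∀ e ∈ Cf, ∀ v : V, v ∈ e → ∃ f ∈ Cf, P f ∧ v ∈ f) →
      (Cf.filter P).biUnion mwEnds = Cf.biUnion mwEnds := by
    intro P _ hcov
    apply Finset.Subset.antisymm
    · exact Finset.biUnion_subset_biUnion_of_subset_left _ (Finset.filter_subset _ _)
    · intro v hv
      rw [Finset.mem_biUnion] at hv
      obtain ⟨e, he, hve⟩ := hv
      rw [mwEnds_mem] at hve
      obtain ⟨f, hf, hPf, hvf⟩ := hcov e he v hve
      exact Finset.mem_biUnion.mpr ⟨f, Finset.mem_filter.mpr ⟨hf, hPf⟩, mwEnds_mem.mpr hvf⟩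
  have alt2 : ∀ e ∈ Cf, ∀ f ∈ Cf, e ≠ f → (∃ v : V, v ∈ e ∧ v ∈ f) →
      ((e ∈ Mf) ↔ ¬ f ∈ Mf) := by
    intro e he f hf hef ⟨v, hv, hv'⟩
    exact halt v e he f hf hef hv hv'
  have cov : ∀ e ∈ Cf, ∀ v : V, v ∈ e → ∃ f ∈ Cf, f ∈ Mf ∧ v ∈ f := by
    intro e he v hv
    by_cases hem : e ∈ Mf
    · exact ⟨e, he, hem, hv⟩
    · obtain ⟨f, hf, hfe, hvf⟩ := hdeg v e he hv
      exact ⟨f, hf, by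
        have := halt v f hf e he hfe hvf hv
        tauto, hvf⟩
  have cov' : ∀ e ∈ Cf, ∀ v : V, v ∈ e → ∃ f ∈ Cf, f ∉ Mf ∧ v ∈ f := by
    intro e he v hv
    by_cases hem : e ∈ Mf
    · obtain ⟨f, hf, hfe, hvf⟩ := hdeg v e he hv
      exact ⟨f, hf, by
        have := halt v f hf e he hfe hvf hv
        tauto, hvf⟩
    · exact ⟨e, he, hem, hv⟩
  have h1 := key (· ∈ Mf) (by infer_instance) (fun e he f hf hef hv => alt2 e he f hf hef hv)
  have h2 := key (· ∉ Mf) (by infer_instance) (fun e he f hf hef hv => by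
    have := alt2 e he f hf hef hv
    tauto)
  have e1 := hunion (· ∈ Mf) (by infer_instance) cov
  have e2 := hunion (· ∉ Mf) (by infer_instance) cov'
  have : 2 * (Cf.filter (· ∈ Mf)).card = 2 * (Cf.filter (· ∉ Mf)).card := by
    rw [← h1, ← h2, e1, e2]
  omega


/-- A perfect matching covers all vertices exactly, so `2|M| = |V|`. -/
lemma mw_pm_card [Fintype V] {G : SimpleGraph V} {Mf : Finset (Sym2 V)}
    (hpm : IsPerfectMatchingSet G ↑Mf) : 2 * Mf.card = Fintype.card V := by
  have huniv : Mf.biUnion mwEnds = Finset.univ := by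
    apply Finset.eq_univ_of_forall
    intro v
    obtain ⟨e, ⟨heM, hve⟩, _⟩ := hpm.2 v
    exact Finset.mem_biUnion.mpr ⟨e, heM, mwEnds_mem.mpr hve⟩
  have hcard : (Mf.biUnion mwEnds).card = 2 * Mf.card := by
    rw [Finset.card_biUnion, Finset.sum_congr rfl (fun e he =>
      mwEnds_card (G.not_isDiag_of_mem_edgeSet (hpm.1 he)))]
    · simp [Finset.sum_const, mul_comm]
    · intro e he f hf hef
      rw [Function.onFun, Finset.disjoint_left]
      intro v hv hv'
      rw [mwEnds_mem] at hv hv'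
      obtain ⟨g, hg, huniq⟩ := hpm.2 v
      exact hef ((huniq e ⟨he, hv⟩).trans (huniq f ⟨hf, hv'⟩).symm)
  rw [← hcard, huniv, Finset.card_univ]


end MWHelpers

/-- Let `G` be bipartite, `M₁` a perfect matching, `M' = M₁ Δ C₁`
for an alternating cycle `C₁` of `M₁`, and `M₂ = M' Δ C₂` for an alternating
cycle `C₂` of `M'`, with `M₁ ≠ M'` and `M₁ ≠ M₂`. Then there is a nonnegative
weight function `w` on the edges such that `M₂` is the unique maximum-weight
perfect matching and `w(M₁) < w(M') < w(M₂)`. -/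
theorem monotone_weights_for_two_flips
    {V : Type*} [Fintype V] [DecidableEq V] (G : SimpleGraph V)
    (A B : Set V) (hbip : IsBipartiteWith G A B)
    (M₁ C₁ C₂ M' M₂ : Finset (Sym2 V))
    (hM₁ : IsPerfectMatchingSet G ↑M₁)
    (hC₁ : IsAlternatingCycle G ↑M₁ ↑C₁) (hM' : M' = symmDiff M₁ C₁)
    (hC₂ : IsAlternatingCycle G ↑M' ↑C₂) (hM₂ : M₂ = symmDiff M' C₂)
    (hne1 : M₁ ≠ M') (hne2 : M₁ ≠ M₂) :
    ∃ w : Sym2 V → ℝ, (∀ e, 0 ≤ w e) ∧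
      (∀ M : Finset (Sym2 V), IsPerfectMatchingSet G ↑M → M ≠ M₂ →
        ∑ e ∈ M, w e < ∑ e ∈ M₂, w e) ∧
      (∑ e ∈ M₁, w e < ∑ e ∈ M', w e) ∧ (∑ e ∈ M', w e < ∑ e ∈ M₂, w e) := by
  classical
  -- unpack hypotheses
  obtain ⟨hM₁sub, hM₁cov⟩ := hM₁
  have um : ∀ (v : V) (e₁ e₂ : Sym2 V), e₁ ∈ M₁ → v ∈ e₁ → e₂ ∈ M₁ → v ∈ e₂ → e₁ = e₂ := by
    intro v e₁ e₂ h1 h2 h3 h4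
    obtain ⟨g, _, hu⟩ := hM₁cov v
    exact (hu e₁ ⟨by simpa using h1, h2⟩).trans (hu e₂ ⟨by simpa using h3, h4⟩).symm
  have alt₁ : ∀ (v : V) (e₁ : Sym2 V), e₁ ∈ C₁ → ∀ e₂ ∈ C₁, e₁ ≠ e₂ → v ∈ e₁ → v ∈ e₂ →
      (e₁ ∈ M₁ ↔ e₂ ∉ M₁) := by
    intro v e₁ h1 e₂ h2 h3 h4 h5
    simpa using hC₁.2 v e₁ (by simpa using h1) e₂ (by simpa using h2) h3 h4 h5
  have alt₂ : ∀ (v : V) (e₁ : Sym2 V), e₁ ∈ C₂ → ∀ e₂ ∈ C₂, e₁ ≠ e₂ → v ∈ e₁ → v ∈ e₂ →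
      (e₁ ∈ M' ↔ e₂ ∉ M') := by
    intro v e₁ h1 e₂ h2 h3 h4 h5
    simpa using hC₂.2 v e₁ (by simpa using h1) e₂ (by simpa using h2) h3 h4 h5
  have deg₁ : ∀ (v : V) (e : Sym2 V), e ∈ C₁ → v ∈ e → ∃ f ∈ C₁, f ≠ e ∧ v ∈ f := by
    intro v e he hv
    obtain ⟨f, hf, h1, h2⟩ := mw_two_incident hC₁.1 (show e ∈ (↑C₁ : Set (Sym2 V)) by simpa) hv
    exact ⟨f, by simpa using hf, h1, h2⟩
  have deg₂ : ∀ (v : V) (e : Sym2 V), e ∈ C₂ → v ∈ e → ∃ f ∈ C₂, f ≠ e ∧ v ∈ f := by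
    intro v e he hv
    obtain ⟨f, hf, h1, h2⟩ := mw_two_incident hC₂.1 (show e ∈ (↑C₂ : Set (Sym2 V)) by simpa) hv
    exact ⟨f, by simpa using hf, h1, h2⟩
  have hC₁E : ∀ e ∈ C₁, e ∈ G.edgeSet := by
    obtain ⟨u, wk, hcyc, heq⟩ := hC₁.1
    intro e he
    have : e ∈ wk.edges := by
      have : e ∈ (↑C₁ : Set (Sym2 V)) := by simpa using he
      rw [heq] at this; exact this
    exact wk.edges_subset_edgeSet this
  have hC₂E : ∀ e ∈ C₂, e ∈ G.edgeSet := by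
    obtain ⟨u, wk, hcyc, heq⟩ := hC₂.1
    intro e he
    have : e ∈ wk.edges := by
      have : e ∈ (↑C₂ : Set (Sym2 V)) := by simpa using he
      rw [heq] at this; exact this
    exact wk.edges_subset_edgeSet this
  have memM' : ∀ e : Sym2 V, e ∈ M' ↔ ((e ∈ M₁ ∧ e ∉ C₁) ∨ (e ∈ C₁ ∧ e ∉ M₁)) := by
    intro e; rw [hM']; exact Finset.mem_symmDiff
  have memM₂ : ∀ e : Sym2 V, e ∈ M₂ ↔ ((e ∈ M' ∧ e ∉ C₂) ∨ (e ∈ C₂ ∧ e ∉ M')) := by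
    intro e; rw [hM₂]; exact Finset.mem_symmDiff
  -- M' is a matching
  have matchM' : ∀ e₁ ∈ M', ∀ e₂ ∈ M', e₁ ≠ e₂ → ∀ v : V, v ∈ e₁ → v ∈ e₂ → False := by
    intro e₁ h1 e₂ h2 hne v hv1 hv2
    rcases (memM' e₁).mp h1 with ⟨hm1, hc1⟩ | ⟨hc1, hm1⟩ <;>
      rcases (memM' e₂).mp h2 with ⟨hm2, hc2⟩ | ⟨hc2, hm2⟩
    · exact hne (um v e₁ e₂ hm1 hv1 hm2 hv2)
    · -- e₁ ∈ M₁ \ C₁, e₂ ∈ C₁ \ M₁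
      obtain ⟨f, hf, hfe, hvf⟩ := deg₁ v e₂ hc2 hv2
      have hfM : f ∈ M₁ := by
        have := alt₁ v e₂ hc2 f hf (Ne.symm hfe) hv2 hvf
        tauto
      have : f = e₁ := um v f e₁ hfM hvf hm1 hv1
      exact hc1 (this ▸ hf)
    · obtain ⟨f, hf, hfe, hvf⟩ := deg₁ v e₁ hc1 hv1
      have hfM : f ∈ M₁ := by
        have := alt₁ v e₁ hc1 f hf (Ne.symm hfe) hv1 hvf
        tauto
      have : f = e₂ := um v f e₂ hfM hvf hm2 hv2
      exact hc2 (this ▸ hf)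
    · have := alt₁ v e₁ hc1 e₂ hc2 hne hv1 hv2
      tauto
  -- cardinalities
  have hdiag₁ : ∀ e ∈ C₁, ¬ e.IsDiag := fun e he => G.not_isDiag_of_mem_edgeSet (hC₁E e he)
  have hdiag₂ : ∀ e ∈ C₂, ¬ e.IsDiag := fun e he => G.not_isDiag_of_mem_edgeSet (hC₂E e he)
  have hh₁ : (C₁.filter (· ∈ M₁)).card = (C₁.filter (· ∉ M₁)).card :=
    mw_half hdiag₁ deg₁ alt₁
  have hh₂ : (C₂.filter (· ∈ M')).card = (C₂.filter (· ∉ M')).card :=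
    mw_half hdiag₂ deg₂ alt₂
  have cardsymm : ∀ (Mf Cf : Finset (Sym2 V)),
      (Cf.filter (· ∈ Mf)).card = (Cf.filter (· ∉ Mf)).card →
      (symmDiff Mf Cf).card = Mf.card := by
    intro Mf Cf hfil
    have h2 : symmDiff Mf Cf = (Mf \ Cf) ∪ (Cf \ Mf) := by
      ext e
      simp only [Finset.mem_symmDiff, Finset.mem_union, Finset.mem_sdiff]
    have hdisj : Disjoint (Mf \ Cf) (Cf \ Mf) := by
      rw [Finset.disjoint_left]
      intro e he1 he2
      rw [Finset.mem_sdiff] at he1 he2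
      exact he2.2 he1.1
    have h5 : (Mf \ Cf).card + (Mf ∩ Cf).card = Mf.card := Finset.card_sdiff_add_card_inter Mf Cf
    have hfil' : (Cf ∩ Mf).card = (Cf \ Mf).card := by
      rwa [Finset.filter_mem_eq_inter, ← Finset.sdiff_eq_filter] at hfil
    have h6 : (Mf ∩ Cf).card = (Cf ∩ Mf).card := by rw [Finset.inter_comm]
    rw [h2, Finset.card_union_of_disjoint hdisj]
    omega
  have cardM' : M'.card = M₁.card := by rw [hM']; exact cardsymm M₁ C₁ hh₁
  have cardM₂ : M₂.card = M'.card := by rw [hM₂]; exact cardsymm M' C₂ hh₂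
  have cardV : 2 * M₁.card = Fintype.card V := mw_pm_card ⟨hM₁sub, hM₁cov⟩
  -- C₂ is nonempty
  have hC₂ne : ∃ e, e ∈ C₂ := by
    obtain ⟨e, he⟩ := mw_cycle_nonempty hC₂.1
    exact ⟨e, by simpa using he⟩
  have hC₁ne : ∃ e, e ∈ C₁ := by
    obtain ⟨e, he⟩ := mw_cycle_nonempty hC₁.1
    exact ⟨e, by simpa using he⟩
  -- the special edge e₀ ∈ M₁ \ (M' ∪ M₂)
  have hex : ∃ e₀ ∈ M₁, e₀ ∉ M' ∧ e₀ ∉ M₂ := by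
    by_contra hcon
    push_neg at hcon
    -- Step 1 : M₁ ∩ C₁ ⊆ C₂
    have h1 : ∀ e : Sym2 V, e ∈ M₁ → e ∈ C₁ → e ∈ C₂ ∧ e ∉ M' := by
      intro e heM heC
      have heM' : e ∉ M' := by
        intro h
        rcases (memM' e).mp h with ⟨_, h2⟩ | ⟨_, h2⟩
        · exact h2 heC
        · exact h2 heM
      have heM₂ : e ∈ M₂ := hcon e heM heM'
      rcases (memM₂ e).mp heM₂ with ⟨h2, _⟩ | ⟨h2, _⟩
      · exact absurd h2 heM'
      · exact ⟨h2, heM'⟩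
    -- Step 2 : C₁ ⊆ C₂
    have h2 : ∀ e ∈ C₁, e ∈ C₂ := by
      intro e' he'
      by_cases he'M : e' ∈ M₁
      · exact (h1 e' he'M he').1
      -- pick an endpoint of e'
      obtain ⟨v, hv⟩ : ∃ v : V, v ∈ e' := by
        induction e' using Sym2.ind with
        | _ x y => exact ⟨x, by simp⟩
      obtain ⟨f, hf, hfe, hvf⟩ := deg₁ v e' he' hv
      have hfM : f ∈ M₁ := by
        have := alt₁ v e' he' f hf (Ne.symm hfe) hv hvf
        tauto
      obtain ⟨hfC₂, hfM'⟩ := h1 f hfM hf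
      obtain ⟨g, hg, hgf, hvg⟩ := deg₂ v f hfC₂ hvf
      have hgM' : g ∈ M' := by
        have := alt₂ v f hfC₂ g hg (Ne.symm hgf) hvf hvg
        tauto
      have he'M' : e' ∈ M' := (memM' e').mpr (Or.inr ⟨he', he'M⟩)
      by_cases hge : g = e'
      · exact hge ▸ hg
      · exact (matchM' g hgM' e' he'M' hge v hvg hv).elim
    -- Step 3 : C₂ ⊆ C₁ (connectivity), hence C₁ = C₂ and M₂ = M₁
    obtain ⟨u₀, wk₂, hwcyc, hweq⟩ := hC₂.1
    have hwmem : ∀ e : Sym2 V, e ∈ C₂ ↔ e ∈ wk₂.edges := by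
      intro e
      constructor
      · intro h
        have : e ∈ (↑C₂ : Set (Sym2 V)) := by simpa using h
        rw [hweq] at this; exact this
      · intro h
        have : e ∈ (↑C₂ : Set (Sym2 V)) := by rw [hweq]; exact h
        simpa using this
    obtain ⟨g₀, hg₀⟩ := hC₁ne
    obtain ⟨a, ha⟩ : ∃ a : V, a ∈ g₀ := by
      induction g₀ using Sym2.ind with
      | _ x y => exact ⟨x, by simp⟩
    have hsupgen : ∀ g : Sym2 V, g ∈ wk₂.edges → ∀ b : V, b ∈ g → b ∈ wk₂.support := by
      intro g
      induction g using Sym2.ind with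
      | _ x y =>
        intro hg b hb
        rcases Sym2.mem_iff.mp hb with rfl | rfl
        · exact wk₂.fst_mem_support_of_mem_edges hg
        · exact wk₂.snd_mem_support_of_mem_edges hg
    have hasup : a ∈ wk₂.support :=
      hsupgen g₀ ((hwmem g₀).mp (h2 g₀ hg₀)) a ha
    set c := wk₂.rotate a hasup with hcdef
    have hcmem : ∀ e : Sym2 V, e ∈ c.edges ↔ e ∈ wk₂.edges :=
      fun e => (wk₂.rotate_edges a hasup).perm.mem_iff
    have hP : ∀ (v : V) (g : Sym2 V), (∃ h ∈ C₁, v ∈ h) → g ∈ c.edges → v ∈ g → g ∈ C₁ := by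
      rintro v g ⟨h, hhC, hvh⟩ hgc hvg
      have hgC₂ : g ∈ C₂ := (hwmem g).mpr ((hcmem g).mp hgc)
      obtain ⟨h', hh', hne', hvh'⟩ := deg₁ v h hhC hvh
      by_cases hgh : g = h
      · exact hgh ▸ hhC
      by_cases hgh' : g = h'
      · exact hgh' ▸ hh'
      -- three distinct edges of C₂ at v : contradiction with alternation
      have hhC₂ : h ∈ C₂ := h2 h hhC
      have hh'C₂ : h' ∈ C₂ := h2 h' hh'
      have t1 := alt₂ v g hgC₂ h hhC₂ hgh hvg hvh
      have t2 := alt₂ v g hgC₂ h' hh'C₂ hgh' hvg hvh'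
      have t3 := alt₂ v h hhC₂ h' hh'C₂ hne'.symm hvh hvh'
      tauto
    have hstart : ∃ h ∈ C₁, a ∈ h := ⟨g₀, hg₀, ha⟩
    have hall : ∀ e ∈ c.edges, e ∈ C₁ := mw_walk_in c hP hstart
    have hsub : C₂ ⊆ C₁ := by
      intro e he
      exact hall e ((hcmem e).mpr ((hwmem e).mp he))
    have hCeq : C₁ = C₂ := Finset.Subset.antisymm (fun e he => h2 e he) hsub
    have : M₂ = M₁ := by
      rw [hM₂, hM', ← hCeq, symmDiff_symmDiff_cancel_right]
    exact hne2 this.symm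
  obtain ⟨e₀, he₀M₁, he₀M', he₀M₂⟩ := hex
  -- define weights
  set n : ℝ := (Fintype.card V : ℝ) with hn
  have hn0 : 0 ≤ n := by positivity
  set δ : Sym2 V → ℝ := fun e => if e ∈ M₂ then 0 else if e = e₀ then n + 1 else 1 with hδ
  have hδ0 : ∀ e, 0 ≤ δ e := by
    intro e
    simp only [hδ]
    split
    · norm_num
    · split
      · linarith
      · norm_num
  have hδle : ∀ e, δ e ≤ n + 1 := by
    intro e
    simp only [hδ]
    split
    · linarith
    · split
      · linarith
      · linarith
  have sumform : ∀ Mf : Finset (Sym2 V),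
      ∑ e ∈ Mf, ((n + 1) - δ e) = (Mf.card : ℝ) * (n + 1) - ∑ e ∈ Mf, δ e := by
    intro Mf
    rw [Finset.sum_sub_distrib, Finset.sum_const, nsmul_eq_mul]
  have hδM₂0 : ∑ e ∈ M₂, δ e = 0 :=
    Finset.sum_eq_zero (fun e he => by simp [hδ, he])
  have hδM₁ : n + 1 ≤ ∑ e ∈ M₁, δ e := by
    have h := Finset.single_le_sum (f := δ) (fun e _ => hδ0 e) he₀M₁
    have he : δ e₀ = n + 1 := by simp [hδ, he₀M₂]
    linarith
  have hδM'le : ∑ e ∈ M', δ e ≤ (M'.card : ℝ) := by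
    calc ∑ e ∈ M', δ e ≤ ∑ _e ∈ M', (1 : ℝ) := by
          apply Finset.sum_le_sum
          intro e he
          have hne0 : e ≠ e₀ := fun h => he₀M' (h ▸ he)
          by_cases h2 : e ∈ M₂
          · simp only [hδ, if_pos h2]
            norm_num
          · simp only [hδ, if_neg h2, if_neg hne0]
            norm_num
      _ = (M'.card : ℝ) := by simp
  have hM'card_le : (M'.card : ℝ) ≤ n := by
    have h1 : M'.card ≤ Fintype.card V := by omega
    rw [hn]
    exact_mod_cast h1
  have hδM'pos : 0 < ∑ e ∈ M', δ e := by
    have hne3 : M' ≠ M₂ := by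
      intro h
      have h4 : symmDiff M' C₂ = M' := by rw [← hM₂, h]
      have h5 : C₂ = ∅ := symmDiff_eq_left.mp h4
      obtain ⟨e, he⟩ := hC₂ne
      rw [h5] at he
      simp at he
    obtain ⟨f, hfM', hfM₂⟩ : ∃ f ∈ M', f ∉ M₂ := by
      by_contra hc
      push_neg at hc
      exact hne3 (Finset.eq_of_subset_of_card_le hc (by omega))
    have hf1 : δ f = 1 := by
      have hne0 : f ≠ e₀ := fun h => he₀M' (h ▸ hfM')
      simp [hδ, hfM₂, hne0]
    have := Finset.single_le_sum (f := δ) (fun e _ => hδ0 e) hfM'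
    linarith
  refine ⟨fun e => (n + 1) - δ e, ?_, ?_, ?_, ?_⟩
  · intro e
    have := hδle e
    show (0:ℝ) ≤ n + 1 - δ e
    linarith
  · intro M hpm hneq
    have hMV := mw_pm_card hpm
    have hMcard : M.card = M₂.card := by omega
    have hpos : 0 < ∑ e ∈ M, δ e := by
      obtain ⟨f, hfM, hfM₂⟩ : ∃ f ∈ M, f ∉ M₂ := by
        by_contra hc
        push_neg at hc
        exact hneq (Finset.eq_of_subset_of_card_le hc (le_of_eq hMcard.symm))
      have hf : 1 ≤ δ f := by
        simp only [hδ]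
        rw [if_neg hfM₂]
        split
        · linarith
        · linarith
      have := Finset.single_le_sum (f := δ) (fun e _ => hδ0 e) hfM
      linarith
    rw [sumform, sumform, hδM₂0, hMcard]
    linarith
  · rw [sumform, sumform, cardM']
    linarith
  · rw [sumform, sumform, hδM₂0, cardM₂]
    linarith
end

section
/- Let G = (V,E) be a bipartite graph, let M₁ be a perfect matching of G, let C₁ be an alternating cycle for M₁ and set M' := M₁ Δ C₁, and let C₂ be an alternating cycle for M' and set M₂ := M' Δ C₂. Assume M₁ ≠ M' and M₁ ≠ M₂. Then M₁ ∖ (M₂ ∪ M') ≠ ∅, i.e., there exists an edge of M₁ belonging neither to M₂ nor to M'. -/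
variable {V : Type*}

open SimpleGraph in
private lemma mem_support_of_mem_edge' {V : Type*} {G : SimpleGraph V} {u v : V}
    {w : G.Walk u v} {e : Sym2 V} {x : V} (he : e ∈ w.edges) (hx : x ∈ e) :
    x ∈ w.support := by
  induction e using Sym2.ind with
  | _ a b =>
    rcases Sym2.mem_iff.1 hx with rfl | rfl
    · exact w.fst_mem_support_of_mem_edges he
    · exact w.snd_mem_support_of_mem_edges he

open SimpleGraph in
private lemma path_edge_start_unique' {V : Type*} {G : SimpleGraph V} {x t : V}
    (q : G.Walk x t) (hq : q.IsPath) :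
    ∀ e₁ ∈ q.edges, ∀ e₂ ∈ q.edges, x ∈ e₁ → x ∈ e₂ → e₁ = e₂ := by
  cases q with
  | nil => simp
  | cons h q' =>
    rw [SimpleGraph.Walk.cons_isPath_iff] at hq
    have key : ∀ e ∈ q'.edges, x ∉ e := by
      intro e he hx
      exact hq.2 (mem_support_of_mem_edge' he hx)
    intro e₁ he₁ e₂ he₂ hx₁ hx₂
    rw [SimpleGraph.Walk.edges_cons, List.mem_cons] at he₁ he₂
    rcases he₁ with rfl | he₁
    · rcases he₂ with rfl | he₂
      · rfl
      · exact absurd hx₂ (key _ he₂)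
    · exact absurd hx₁ (key _ he₁)

open SimpleGraph in
private lemma cycle_not_three' {V : Type*} [DecidableEq V] {G : SimpleGraph V} {C : Set (Sym2 V)}
    (hC : IsCycleEdgeSet G C) {x : V} {e₁ e₂ e₃ : Sym2 V}
    (h1 : e₁ ∈ C) (h2 : e₂ ∈ C) (h3 : e₃ ∈ C)
    (hx1 : x ∈ e₁) (hx2 : x ∈ e₂) (hx3 : x ∈ e₃)
    (h12 : e₁ ≠ e₂) (h13 : e₁ ≠ e₃) (h23 : e₂ ≠ e₃) : False := by
  obtain ⟨v, w, hw, rfl⟩ := hC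
  have h1' : e₁ ∈ w.edges := h1
  have h2' : e₂ ∈ w.edges := h2
  have h3' : e₃ ∈ w.edges := h3
  have hxs : x ∈ w.support := mem_support_of_mem_edge' h1' hx1
  have hrot := w.rotate_edges x hxs
  have hcyc := hw.rotate hxs
  obtain ⟨y, hadj, p, hcp⟩ := SimpleGraph.Walk.not_nil_iff.1 hcyc.not_nil
  rw [hcp] at hcyc hrot
  obtain ⟨hp, hne⟩ := (SimpleGraph.Walk.cons_isCycle_iff p hadj).1 hcyc
  have huniq : ∀ a ∈ p.edges, ∀ b ∈ p.edges, x ∈ a → x ∈ b → a = b := by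
    intro a ha b hb hxa hxb
    exact path_edge_start_unique' p.reverse hp.reverse a
      (by rw [SimpleGraph.Walk.edges_reverse, List.mem_reverse]; exact ha) b
      (by rw [SimpleGraph.Walk.edges_reverse, List.mem_reverse]; exact hb) hxa hxb
  have m1 : e₁ = s(x, y) ∨ e₁ ∈ p.edges := by
    have := hrot.mem_iff.2 h1'
    rwa [SimpleGraph.Walk.edges_cons, List.mem_cons] at this
  have m2 : e₂ = s(x, y) ∨ e₂ ∈ p.edges := by
    have := hrot.mem_iff.2 h2'
    rwa [SimpleGraph.Walk.edges_cons, List.mem_cons] at this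
  have m3 : e₃ = s(x, y) ∨ e₃ ∈ p.edges := by
    have := hrot.mem_iff.2 h3'
    rwa [SimpleGraph.Walk.edges_cons, List.mem_cons] at this
  rcases m1 with hm1 | hm1 <;> rcases m2 with hm2 | hm2 <;> rcases m3 with hm3 | hm3
  · exact h12 (hm1.trans hm2.symm)
  · exact h12 (hm1.trans hm2.symm)
  · exact h13 (hm1.trans hm3.symm)
  · exact h23 (huniq _ hm2 _ hm3 hx2 hx3)
  · exact h23 (hm2.trans hm3.symm)
  · exact h13 (huniq _ hm1 _ hm3 hx1 hx3)
  · exact h12 (huniq _ hm1 _ hm2 hx1 hx2)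
  · exact h12 (huniq _ hm1 _ hm2 hx1 hx2)

open SimpleGraph in
private lemma cycle_two_edges' {V : Type*} [DecidableEq V] {G : SimpleGraph V} {C : Set (Sym2 V)}
    (hC : IsCycleEdgeSet G C) {x : V} {e : Sym2 V} (he : e ∈ C) (hx : x ∈ e) :
    ∃ f₁ f₂, f₁ ∈ C ∧ f₂ ∈ C ∧ f₁ ≠ f₂ ∧ x ∈ f₁ ∧ x ∈ f₂ := by
  obtain ⟨v, w, hw, rfl⟩ := hC
  have he' : e ∈ w.edges := he
  have hxs : x ∈ w.support := mem_support_of_mem_edge' he' hx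
  have hrot := w.rotate_edges x hxs
  have hcyc := hw.rotate hxs
  obtain ⟨y, hadj, p, hcp⟩ := SimpleGraph.Walk.not_nil_iff.1 hcyc.not_nil
  rw [hcp] at hcyc hrot
  obtain ⟨hp, hne⟩ := (SimpleGraph.Walk.cons_isCycle_iff p hadj).1 hcyc
  have hprev : ¬ p.reverse.Nil := SimpleGraph.Walk.not_nil_of_ne hadj.ne
  obtain ⟨z, hadj2, q, hq⟩ := SimpleGraph.Walk.not_nil_iff.1 hprev
  have hz : s(x, z) ∈ p.edges := by
    have : s(x, z) ∈ p.reverse.edges := by rw [hq]; simp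
    rwa [SimpleGraph.Walk.edges_reverse, List.mem_reverse] at this
  refine ⟨s(x, y), s(x, z), ?_, ?_, ?_, Sym2.mem_mk_left _ _, Sym2.mem_mk_left _ _⟩
  · exact hrot.mem_iff.1 (by simp)
  · exact hrot.mem_iff.1 (by rw [SimpleGraph.Walk.edges_cons, List.mem_cons]; exact Or.inr hz)
  · intro hxy
    exact hne (hxy ▸ hz)

open SimpleGraph in
private lemma walk_closure' {V : Type*} {G : SimpleGraph V} (P : Sym2 V → Prop) :
    ∀ {a b : V} (q : G.Walk a b),
      (∀ e ∈ q.edges, ∀ x ∈ e, (∃ f, P f ∧ x ∈ f) → P e) →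
      (∃ f, P f ∧ a ∈ f) → ∀ e ∈ q.edges, P e := by
  intro a b q
  induction q with
  | nil => simp
  | @cons u c b h q ih =>
    intro hclose ha e he
    have hhead : P s(u, c) := hclose _ (by simp) u (Sym2.mem_mk_left _ _) ha
    rw [SimpleGraph.Walk.edges_cons, List.mem_cons] at he
    rcases he with rfl | he
    · exact hhead
    · refine ih (fun e heq => hclose e ?_) ⟨s(u, c), hhead, Sym2.mem_mk_right _ _⟩ e he
      rw [SimpleGraph.Walk.edges_cons, List.mem_cons]
      exact Or.inr heq

/-- Let `G` be bipartite, `M₁` a perfect matching, `M' = M₁ Δ C₁`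
for an alternating cycle `C₁` of `M₁`, and `M₂ = M' Δ C₂` for an alternating
cycle `C₂` of `M'`, with `M₁ ≠ M'` and `M₁ ≠ M₂`. Then `M₁ ∖ (M₂ ∪ M') ≠ ∅`. -/
theorem exists_edge_in_M1_not_in_M2_union_M'
    {V : Type*} [Fintype V] [DecidableEq V] (G : SimpleGraph V)
    (A B : Set V) (hbip : IsBipartiteWith G A B)
    (M₁ C₁ C₂ M' M₂ : Finset (Sym2 V))
    (hM₁ : IsPerfectMatchingSet G ↑M₁)
    (hC₁ : IsAlternatingCycle G ↑M₁ ↑C₁) (hM' : M' = symmDiff M₁ C₁)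
    (hC₂ : IsAlternatingCycle G ↑M' ↑C₂) (hM₂ : M₂ = symmDiff M' C₂)
    (hne1 : M₁ ≠ M') (hne2 : M₁ ≠ M₂) :
    (M₁ \ (M₂ ∪ M')).Nonempty := by
  classical
  by_contra hcon
  rw [Finset.not_nonempty_iff_eq_empty, Finset.sdiff_eq_empty_iff_subset] at hcon
  have hMC : ∀ e, e ∈ M₁ → e ∈ C₁ → e ∈ C₂ := by
    intro e he hec
    have heM' : e ∉ M' := by
      rw [hM', Finset.mem_symmDiff]
      simp [he, hec]
    have hu := hcon he
    rw [Finset.mem_union, hM₂] at hu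
    rcases hu with h | h
    · rcases Finset.mem_symmDiff.1 h with ⟨h1, _⟩ | ⟨h1, _⟩
      · exact absurd h1 heM'
      · exact h1
    · exact absurd h heM'
  have hM₁uniq : ∀ x : V, ∀ a ∈ M₁, ∀ b ∈ M₁, x ∈ a → x ∈ b → a = b := by
    intro x a ha b hb hxa hxb
    obtain ⟨e, -, hu⟩ := hM₁.2 x
    rw [hu a ⟨Finset.mem_coe.2 ha, hxa⟩, hu b ⟨Finset.mem_coe.2 hb, hxb⟩]
  have hvert : ∀ x : V, ∀ f ∈ C₁, x ∈ f →
      ∃ f₁ f₂, f₁ ∈ C₁ ∧ f₂ ∈ C₁ ∧ f₁ ≠ f₂ ∧ x ∈ f₁ ∧ x ∈ f₂ ∧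
        f₁ ∈ C₂ ∧ f₂ ∈ C₂ ∧ (∀ e ∈ C₂, x ∈ e → e = f₁ ∨ e = f₂) := by
    intro x f hf hxf
    obtain ⟨f₁, f₂, hf₁, hf₂, hne, hx₁, hx₂⟩ :=
      cycle_two_edges' hC₁.1 (Finset.mem_coe.2 hf) hxf
    rw [Finset.mem_coe] at hf₁ hf₂
    have halt := hC₁.2 x f₁ (Finset.mem_coe.2 hf₁) f₂ (Finset.mem_coe.2 hf₂) hne hx₁ hx₂
    have main : ∀ a b : Sym2 V, a ∈ C₁ → b ∈ C₁ → a ≠ b → x ∈ a → x ∈ b →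
        a ∈ M₁ → b ∉ M₁ →
        a ∈ C₂ ∧ b ∈ C₂ ∧ (∀ e ∈ C₂, x ∈ e → e = a ∨ e = b) := by
      intro a b ha hb hab hxa hxb haM hbM
      have haC₂ : a ∈ C₂ := hMC a haM ha
      have haM' : a ∉ M' := by
        rw [hM', Finset.mem_symmDiff]; simp [haM, ha]
      obtain ⟨g₁, g₂, hg₁, hg₂, hgne, hxg₁, hxg₂⟩ :=
        cycle_two_edges' hC₂.1 (Finset.mem_coe.2 haC₂) hxa
      rw [Finset.mem_coe] at hg₁ hg₂
      obtain ⟨g, hg, hga, hxg⟩ : ∃ g, g ∈ C₂ ∧ g ≠ a ∧ x ∈ g := by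
        by_cases hh : g₁ = a
        · exact ⟨g₂, hg₂, fun hh2 => hgne (hh.trans hh2.symm), hxg₂⟩
        · exact ⟨g₁, hg₁, hh, hxg₁⟩
      have htwo : ∀ e ∈ C₂, x ∈ e → e = a ∨ e = g := by
        intro e heC hxe
        by_contra hcc
        push_neg at hcc
        exact cycle_not_three' hC₂.1 (Finset.mem_coe.2 haC₂) (Finset.mem_coe.2 hg)
          (Finset.mem_coe.2 heC) hxa hxg hxe hga.symm (Ne.symm hcc.1) (Ne.symm hcc.2)
      have hgM' : g ∈ M' := by
        have halt2 := hC₂.2 x g (Finset.mem_coe.2 hg) a (Finset.mem_coe.2 haC₂) hga hxg hxa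
        exact Finset.mem_coe.1 (halt2.2 (fun hc => haM' (Finset.mem_coe.1 hc)))
      have hgb : g = b := by
        rw [hM', Finset.mem_symmDiff] at hgM'
        rcases hgM' with ⟨hgM₁, -⟩ | ⟨hgC₁, hgM₁⟩
        · exact absurd (hM₁uniq x g hgM₁ a haM hxg hxa) hga
        · by_contra hgb
          exact cycle_not_three' hC₁.1 (Finset.mem_coe.2 hgC₁) (Finset.mem_coe.2 ha)
            (Finset.mem_coe.2 hb) hxg hxa hxb hga hgb hab
      subst hgb
      exact ⟨haC₂, hg, htwo⟩
    by_cases hm : f₁ ∈ M₁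
    · have h2 : f₂ ∉ M₁ := fun hc => (halt.1 (Finset.mem_coe.2 hm)) (Finset.mem_coe.2 hc)
      obtain ⟨hA, hB, hT⟩ := main f₁ f₂ hf₁ hf₂ hne hx₁ hx₂ hm h2
      exact ⟨f₁, f₂, hf₁, hf₂, hne, hx₁, hx₂, hA, hB, hT⟩
    · have h2 : f₂ ∈ M₁ := by
        by_contra hc
        exact hm (Finset.mem_coe.1 (halt.2 (fun hc2 => hc (Finset.mem_coe.1 hc2))))
      obtain ⟨hA, hB, hT⟩ := main f₂ f₁ hf₂ hf₁ hne.symm hx₂ hx₁ h2 hm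
      exact ⟨f₂, f₁, hf₂, hf₁, hne.symm, hx₂, hx₁, hA, hB, hT⟩
  have hsub1 : ∀ f ∈ C₁, f ∈ C₂ := by
    intro f hf
    have hx := Sym2.out_fst_mem f
    obtain ⟨f₁, f₂, h1, h2, hne, hx1, hx2, hc1, hc2, -⟩ := hvert _ f hf hx
    by_cases e1 : f = f₁
    · exact e1 ▸ hc1
    · by_cases e2 : f = f₂
      · exact e2 ▸ hc2
      · exact (cycle_not_three' hC₁.1 (Finset.mem_coe.2 hf) (Finset.mem_coe.2 h1)
          (Finset.mem_coe.2 h2) hx hx1 hx2 e1 e2 hne).elim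
  obtain ⟨v₂, w₂, hw₂, hC₂eq⟩ := hC₂.1
  have hmem₂ : ∀ e, e ∈ C₂ ↔ e ∈ w₂.edges := by
    intro e
    rw [← Finset.mem_coe, hC₂eq]
    exact Iff.rfl
  have hC₁ne : ∃ f, f ∈ C₁ := by
    obtain ⟨v₁, w₁, hw₁, hC₁eq⟩ := hC₁.1
    have h3 := hw₁.three_le_length
    have hn : w₁.edges ≠ [] := by
      intro h
      rw [← SimpleGraph.Walk.length_edges, h] at h3
      simp at h3
    obtain ⟨f, hf⟩ := List.exists_mem_of_ne_nil _ hn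
    refine ⟨f, ?_⟩
    rw [← Finset.mem_coe, hC₁eq]
    exact hf
  obtain ⟨f₀, hf₀⟩ := hC₁ne
  have hx₀ : f₀.out.1 ∈ f₀ := Sym2.out_fst_mem f₀
  have hf₀C₂ : f₀ ∈ C₂ := hsub1 f₀ hf₀
  have hx₀s : f₀.out.1 ∈ w₂.support := mem_support_of_mem_edge' ((hmem₂ f₀).1 hf₀C₂) hx₀
  have hrot := w₂.rotate_edges _ hx₀s
  have hsub2 : ∀ e ∈ C₂, e ∈ C₁ := by
    intro e he
    have he' : e ∈ (w₂.rotate _ hx₀s).edges := hrot.mem_iff.2 ((hmem₂ e).1 he)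
    refine walk_closure' (· ∈ C₁) (w₂.rotate _ hx₀s) ?_ ⟨f₀, hf₀, hx₀⟩ e he'
    rintro e₁ he₁ x hx ⟨f, hfC, hxf⟩
    have he₁C₂ : e₁ ∈ C₂ := (hmem₂ e₁).2 (hrot.mem_iff.1 he₁)
    obtain ⟨f₁, f₂, h1, h2, -, -, -, -, -, htwo⟩ := hvert x f hfC hxf
    rcases htwo e₁ he₁C₂ hx with rfl | rfl
    · exact h1
    · exact h2
  have hC : C₁ = C₂ := Finset.Subset.antisymm (fun f hf => hsub1 f hf) (fun e he => hsub2 e he)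
  apply hne2
  rw [hM₂, hM', ← hC, symmDiff_symmDiff_cancel_right]
end

section
/- For every integer n ≥ 1 there exist a bipartite graph G of maximum degree at most 3 and perfect matchings M₁, M₂ of G such that M₁ Δ M₂ is the union of n pairwise vertex-disjoint cycles of G, and yet there exists a perfect matching M' of G with M₁ Δ M' a single cycle alternating for M₁ and M' Δ M₂ a single cycle alternating for M'. In particular, M₁ and M₂ are at distance at most two on the perfect matching polytope of G, while their symmetric difference consists of n disjoint alternating cycles. -/
variable {V : Type*}

section Aux

open SimpleGraph List

namespace DistTwoConstr




lemma exists_walk_of_fn {W : Type*} (G : SimpleGraph W) (f : ℕ → W) :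
    ∀ N : ℕ, (∀ i < N, G.Adj (f i) (f (i+1))) →
    ∃ w : G.Walk (f 0) (f N), w.support = (List.range (N+1)).map f ∧
      w.edges = (List.range N).map (fun i => s(f i, f (i+1))) := by
  intro N
  induction N with
  | zero => intro _; exact ⟨Walk.nil, by simp [List.range_succ], by simp⟩
  | succ N ih =>
    intro hadj
    obtain ⟨w, hs, he⟩ := ih (fun i hi => hadj i (by omega))
    refine ⟨w.append (Walk.cons (hadj N (by omega)) Walk.nil), ?_, ?_⟩
    · rw [Walk.support_append, hs]
      simp [List.range_succ]
    · rw [Walk.edges_append, he]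
      simp [List.range_succ]

lemma exists_cycle_of_fn {W : Type*} (G : SimpleGraph W) (f : ℕ → W) (N : ℕ)
    (h3 : 3 ≤ N) (hper : f N = f 0)
    (hinj : ∀ i < N, ∀ j < N, f i = f j → i = j)
    (hadj : ∀ i < N, G.Adj (f i) (f (i+1))) :
    ∃ w : G.Walk (f 0) (f 0), w.IsCycle ∧
      ∀ e, e ∈ w.edges ↔ ∃ i < N, e = s(f i, f (i+1)) := by
  -- injectivity on [1, N]
  have hinj' : ∀ i, 1 ≤ i → i ≤ N → ∀ j, 1 ≤ j → j ≤ N → f i = f j → i = j := by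
    intro i hi1 hiN j hj1 hjN hf
    rcases eq_or_lt_of_le hiN with rfl | hiN
    · rcases eq_or_lt_of_le hjN with rfl | hjN
      · rfl
      · rw [hper] at hf; exact absurd (hinj 0 (by omega) j hjN hf) (by omega)
    · rcases eq_or_lt_of_le hjN with rfl | hjN
      · rw [hper] at hf; exact absurd (hinj i hiN 0 (by omega) hf) (by omega)
      · exact hinj i hiN j hjN hf
  obtain ⟨p₀, hs, he⟩ := exists_walk_of_fn G (fun i => f (i+1)) (N-1)
    (fun i hi => hadj (i+1) (by omega))
  have hN1 : N - 1 + 1 = N := by omega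
  have hp : (f (N-1+1)) = f 0 := by rw [hN1]; exact hper
  set p : G.Walk (f 1) (f 0) := p₀.copy rfl hp with hpdef
  have hps : p.support = (List.range N).map (fun i => f (i+1)) := by
    rw [hpdef, Walk.support_copy, hs, hN1]
  have hpe : p.edges = (List.range (N-1)).map (fun i => s(f (i+1), f (i+2))) := by
    rw [hpdef, Walk.edges_copy, he]
  have hpath : p.IsPath := by
    rw [Walk.isPath_def, hps]
    refine List.Nodup.map_on ?_ List.nodup_range
    intro i hi j hj hf
    simp only [List.mem_range] at hi hj
    have := hinj' (i+1) (by omega) (by omega) (j+1) (by omega) (by omega) hf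
    omega
  have hne : s(f 0, f 1) ∉ p.edges := by
    rw [hpe]
    intro hmem
    simp only [List.mem_map, List.mem_range] at hmem
    obtain ⟨i, hi, hEq⟩ := hmem
    rw [Sym2.eq_iff] at hEq
    rcases hEq with ⟨h1, h2⟩ | ⟨h1, h2⟩
    · exact absurd (hinj 0 (by omega) (i+1) (by omega) h1.symm) (by omega)
    · have hi1 := hinj' (i+1) (by omega) (by omega) 1 (by omega) (by omega) h1
      have hi0 : i = 0 := by omega
      subst hi0
      exact absurd (hinj 2 (by omega) 0 (by omega) h2) (by omega)
  refine ⟨Walk.cons (hadj 0 (by omega)) p, ?_, ?_⟩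
  · exact (Walk.cons_isCycle_iff p (hadj 0 (by omega))).2 ⟨hpath, hne⟩
  · intro e
    rw [Walk.edges_cons, hpe]
    constructor
    · intro hmem
      rcases List.mem_cons.1 hmem with rfl | hm
      · exact ⟨0, by omega, rfl⟩
      · simp only [List.mem_map, List.mem_range] at hm
        obtain ⟨i, hi, rfl⟩ := hm
        exact ⟨i+1, by omega, rfl⟩
    · rintro ⟨i, hi, rfl⟩
      rcases Nat.eq_zero_or_pos i with rfl | hpos
      · exact List.mem_cons_self
      · refine List.mem_cons_of_mem _ ?_
        simp only [List.mem_map, List.mem_range]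
        refine ⟨i-1, by omega, ?_⟩
        have h1 : i - 1 + 1 = i := by omega
        have h2 : i - 1 + 2 = i + 1 := by omega
        rw [h1, h2]







instance instNZ (n : ℕ) : NeZero (4*n+2) := ⟨by omega⟩

abbrev c (n : ℕ) (a : ℕ) : ZMod (4*n+2) := (a : ZMod (4*n+2))

lemma val_c {n a : ℕ} (ha : a < 4*n+2) : (c n a).val = a := ZMod.val_cast_of_lt ha

lemma cast_inj {n a b : ℕ} (ha : a < 4*n+2) (hb : b < 4*n+2) (h : c n a = c n b) : a = b := by
  have := congrArg ZMod.val h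
  rwa [val_c ha, val_c hb] at this

lemma decomp {n : ℕ} (v : ZMod (4*n+2)) : v = c n v.val ∧ v.val < 4*n+2 :=
  ⟨(ZMod.natCast_rightInverse v).symm, ZMod.val_lt v⟩

lemma val_add_nat {n : ℕ} (u : ZMod (4*n+2)) (k : ℕ) :
    (u + (k : ZMod (4*n+2))).val = (u.val + k) % (4*n+2) := by
  conv_lhs => rw [← ZMod.natCast_rightInverse u]
  rw [← Nat.cast_add, ZMod.val_natCast]

lemma one_eq {n : ℕ} : (1 : ZMod (4*n+2)) = ((1:ℕ) : ZMod (4*n+2)) := by norm_cast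

lemma three_eq {n : ℕ} : (3 : ZMod (4*n+2)) = ((3:ℕ) : ZMod (4*n+2)) := by norm_cast

lemma val_add_one {n : ℕ} (u : ZMod (4*n+2)) :
    (u + 1).val = (u.val + 1) % (4*n+2) := by rw [one_eq, val_add_nat]

lemma val_add_three {n : ℕ} (u : ZMod (4*n+2)) :
    (u + 3).val = (u.val + 3) % (4*n+2) := by rw [three_eq, val_add_nat]

lemma mod_parity {n a : ℕ} : a % (4*n+2) % 2 = a % 2 :=
  Nat.mod_mod_of_dvd _ ⟨2*n+1, by ring⟩

lemma shift_ne {n : ℕ} (u : ZMod (4*n+2)) {k : ℕ} (h1 : 1 ≤ k) (h2 : k < 4*n+2) :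
    u + (k : ZMod (4*n+2)) ≠ u := by
  intro h
  have h3 : (u + (k : ZMod (4*n+2))).val = u.val := by rw [h]
  rw [val_add_nat] at h3
  have h5 := ZMod.val_lt u
  rcases lt_or_ge (u.val + k) (4*n+2) with hlt | hge
  · rw [Nat.mod_eq_of_lt hlt] at h3; omega
  · rw [Nat.mod_eq_sub_mod hge, Nat.mod_eq_of_lt (by omega)] at h3; omega

/-- The graph: a cycle of length `4n+2` together with the chords `{4k, 4k+3}`, `k < n`. -/
def Gr (n : ℕ) : SimpleGraph (ZMod (4*n+2)) where
  Adj u v := v = u + 1 ∨ u = v + 1 ∨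
    (u.val % 4 = 0 ∧ u.val < 4*n ∧ v = u + 3) ∨ (v.val % 4 = 0 ∧ v.val < 4*n ∧ u = v + 3)
  symm := ⟨by intro u v h; tauto⟩
  loopless := by
    constructor
    intro u h
    rcases h with h | h | ⟨_, _, h⟩ | ⟨_, _, h⟩
    · exact shift_ne u (k := 1) (by omega) (by omega) (by rw [← one_eq]; exact h.symm)
    · exact shift_ne u (k := 1) (by omega) (by omega) (by rw [← one_eq]; exact h.symm)
    · exact shift_ne u (k := 3) (by omega) (by omega) (by rw [← three_eq]; exact h.symm)
    · exact shift_ne u (k := 3) (by omega) (by omega) (by rw [← three_eq]; exact h.symm)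

lemma adj_succ (n : ℕ) (u : ZMod (4*n+2)) : (Gr n).Adj u (u + 1) := Or.inl rfl

lemma adj_succ_c {n : ℕ} {a : ℕ} : (Gr n).Adj (c n a) (c n (a+1)) := by
  have h : c n (a+1) = c n a + 1 := by push_cast; ring
  rw [h]; exact adj_succ n _

lemma adj_chord {n : ℕ} {k : ℕ} (hk : k < n) : (Gr n).Adj (c n (4*k)) (c n (4*k+3)) := by
  refine Or.inr (Or.inr (Or.inl ⟨?_, ?_, ?_⟩))
  · rw [val_c (by omega)]; omega
  · rw [val_c (by omega)]; omega
  · push_cast; ring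

lemma adj_parity {n : ℕ} {u v : ZMod (4*n+2)} (h : (Gr n).Adj u v) :
    (u.val + v.val) % 2 = 1 := by
  have key : ∀ w : ZMod (4*n+2), ∀ k : ℕ, (w + (k:ZMod (4*n+2))).val % 2 = (w.val + k) % 2 := by
    intro w k
    rw [val_add_nat]
    exact mod_parity
  rcases h with h | h | ⟨_, _, h⟩ | ⟨_, _, h⟩
  · subst h; rw [one_eq]; have := key u 1; omega
  · subst h; rw [one_eq, Nat.add_comm]; have := key v 1; omega
  · subst h; rw [three_eq]; have := key u 3; omega
  · subst h; rw [three_eq, Nat.add_comm]; have := key v 3; omega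

lemma bipartite (n : ℕ) :
    _root_.IsBipartiteWith (Gr n) {v | v.val % 2 = 0} {v | v.val % 2 = 1} := by
  refine ⟨?_, ?_, ?_⟩
  · rw [Set.disjoint_left]
    intro v hv hv'
    simp only [Set.mem_setOf_eq] at *
    omega
  · ext v
    simp only [Set.mem_union, Set.mem_setOf_eq, Set.mem_univ, iff_true]
    omega
  · intro u v h
    have := adj_parity h
    constructor <;> rintro ⟨h1, h2⟩ <;> simp only [Set.mem_setOf_eq] at h1 h2 <;> omega

lemma degree_le (n : ℕ) (v : ZMod (4*n+2)) : {w | (Gr n).Adj v w}.ncard ≤ 3 := by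
  classical
  set t : ZMod (4*n+2) :=
    if v.val % 4 = 0 ∧ v.val < 4*n then v + 3 else v - 3 with ht
  have hsub : {w | (Gr n).Adj v w} ⊆ {v + 1, v - 1, t} := by
    intro x hx
    rcases hx with h | h | ⟨h1, h2, h3⟩ | ⟨h1, h2, h3⟩
    · left; exact h
    · right; left; rw [h]; ring
    · right; right
      rw [ht, if_pos ⟨h1, h2⟩]; exact h3.symm ▸ rfl
    · right; right
      have hxval : v.val = x.val + 3 := by
        rw [h3, val_add_three, Nat.mod_eq_of_lt (by omega)]
      rw [ht, if_neg (by omega)]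
      rw [h3]
      have hx3 : x + 3 - 3 = x := by ring
      show x ∈ ({x + 3 - 3} : Set (ZMod (4*n+2)))
      rw [hx3]
      rfl
  calc {w | (Gr n).Adj v w}.ncard ≤ ({v + 1, v - 1, t} : Set (ZMod (4*n+2))).ncard :=
        Set.ncard_le_ncard hsub (Set.toFinite _)
    _ ≤ 3 := by
        refine le_trans (Set.ncard_insert_le _ _) ?_
        have := Set.ncard_insert_le (v-1) ({t} : Set (ZMod (4*n+2)))
        simp only [Set.ncard_singleton] at this ⊢
        omega




def M1 (n : ℕ) : Set (Sym2 (ZMod (4*n+2))) :=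
  {e | ∃ k < 2*n+1, e = s(c n (2*k), c n (2*k+1))}

def Mp (n : ℕ) : Set (Sym2 (ZMod (4*n+2))) :=
  {e | ∃ k < 2*n, e = s(c n (2*k+1), c n (2*k+2))} ∪ {s(c n (4*n+1), c n 0)}

def Chd (n : ℕ) : Set (Sym2 (ZMod (4*n+2))) :=
  {e | ∃ k < n, e = s(c n (4*k), c n (4*k+3))}

def Mid (n : ℕ) : Set (Sym2 (ZMod (4*n+2))) :=
  {e | ∃ k < n, e = s(c n (4*k+1), c n (4*k+2))}

def M2 (n : ℕ) : Set (Sym2 (ZMod (4*n+2))) :=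
  (Chd n ∪ Mid n) ∪ {s(c n (4*n), c n (4*n+1))}

def Ff (n : ℕ) : Set (Sym2 (ZMod (4*n+2))) :=
  {e | ∃ i < 4*n+1, e = s(c n i, c n (i+1))} ∪ {s(c n (4*n+1), c n 0)}

def Dd (n : ℕ) : Set (Sym2 (ZMod (4*n+2))) :=
  (Chd n ∪ {e | ∃ k < n, e = s(c n (4*k+3), c n (4*k+4))}) ∪
    {s(c n (4*n), c n (4*n+1)), s(c n (4*n+1), c n 0)}

def Csk (n k : ℕ) : Set (Sym2 (ZMod (4*n+2))) :=
  {s(c n (4*k), c n (4*k+1)), s(c n (4*k+1), c n (4*k+2)),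
   s(c n (4*k+2), c n (4*k+3)), s(c n (4*k), c n (4*k+3))}

def CsU (n : ℕ) : Set (Sym2 (ZMod (4*n+2))) := {e | ∃ k < n, e ∈ Csk n k}

lemma pair_eq_iff {n a b a' b' : ℕ} (ha : a < 4*n+2) (hb : b < 4*n+2)
    (ha' : a' < 4*n+2) (hb' : b' < 4*n+2) :
    s(c n a, c n b) = s(c n a', c n b') ↔ (a = a' ∧ b = b') ∨ (a = b' ∧ b = a') := by
  constructor
  · intro h
    rw [Sym2.eq_iff] at h
    rcases h with ⟨h1, h2⟩ | ⟨h1, h2⟩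
    · exact Or.inl ⟨cast_inj ha ha' h1, cast_inj hb hb' h2⟩
    · exact Or.inr ⟨cast_inj ha hb' h1, cast_inj hb ha' h2⟩
  · rintro (⟨rfl, rfl⟩ | ⟨rfl, rfl⟩)
    · rfl
    · exact Sym2.eq_swap

lemma mem_pair_iff {n x a b : ℕ} (hx : x < 4*n+2) (ha : a < 4*n+2) (hb : b < 4*n+2) :
    c n x ∈ s(c n a, c n b) ↔ (x = a ∨ x = b) := by
  rw [Sym2.mem_iff]
  constructor
  · rintro (h | h)
    · exact Or.inl (cast_inj hx ha h)
    · exact Or.inr (cast_inj hx hb h)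
  · rintro (rfl | rfl)
    · exact Or.inl rfl
    · exact Or.inr rfl

lemma sd1 (n : ℕ) (hn : 1 ≤ n) : symmDiff (M1 n) (Mp n) = Ff n := by
  have hdisj : Disjoint (M1 n) (Mp n) := by
    rw [Set.disjoint_left]
    rintro e ⟨k, hk, rfl⟩ h2
    rcases h2 with ⟨j, hj, hEq⟩ | hEq
    · rw [pair_eq_iff (by omega) (by omega) (by omega) (by omega)] at hEq; omega
    · rw [Set.mem_singleton_iff,
        pair_eq_iff (by omega) (by omega) (by omega) (by omega)] at hEq; omega
  rw [Disjoint.symmDiff_eq_sup hdisj]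
  ext e
  simp only [Set.sup_eq_union, M1, Mp, Ff, Set.mem_union, Set.mem_setOf_eq,
    Set.mem_singleton_iff]
  constructor
  · rintro (⟨k, hk, rfl⟩ | ⟨k, hk, rfl⟩ | rfl)
    · left; exact ⟨2*k, by omega, rfl⟩
    · left
      refine ⟨2*k+1, by omega, ?_⟩
      rw [pair_eq_iff (by omega) (by omega) (by omega) (by omega)]; omega
    · right; rfl
  · rintro (⟨i, hi, rfl⟩ | rfl)
    · have h2 : i % 2 = 0 ∨ i % 2 = 1 := by omega
      rcases h2 with h2 | h2
      · obtain ⟨k, rfl⟩ : ∃ k, i = 2*k := ⟨i/2, by omega⟩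
        exact Or.inl ⟨k, by omega, rfl⟩
      · obtain ⟨k, rfl⟩ : ∃ k, i = 2*k+1 := ⟨i/2, by omega⟩
        refine Or.inr (Or.inl ⟨k, by omega, ?_⟩)
        rw [pair_eq_iff (by omega) (by omega) (by omega) (by omega)]; omega
    · exact Or.inr (Or.inr rfl)


lemma mem_csk_val {n k : ℕ} (hk : k < n) {e} (he : e ∈ Csk n k) {v : ZMod (4*n+2)}
    (hv : v ∈ e) : 4*k ≤ v.val ∧ v.val ≤ 4*k+3 := by
  simp only [Csk, Set.mem_insert_iff, Set.mem_singleton_iff] at he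
  rcases he with rfl | rfl | rfl | rfl <;> rw [Sym2.mem_iff] at hv <;>
    rcases hv with rfl | rfl <;> rw [val_c (by omega)] <;> omega

lemma csk_vertex_disj {n : ℕ} {i j : ℕ} (hi : i < n) (hj : j < n) (hij : i ≠ j)
    {e f} (he : e ∈ Csk n i) (hf : f ∈ Csk n j) (v : ZMod (4*n+2)) (hv : v ∈ e) :
    v ∉ f := by
  intro hvf
  have h1 := mem_csk_val hi he hv
  have h2 := mem_csk_val hj hf hvf
  omega

lemma sd2 (n : ℕ) (hn : 1 ≤ n) : symmDiff (M1 n) (M2 n) = CsU n := by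
  ext e
  rw [Set.mem_symmDiff]
  simp only [M1, M2, Chd, Mid, CsU, Csk, Set.mem_union, Set.mem_setOf_eq,
    Set.mem_singleton_iff, Set.mem_insert_iff]
  constructor
  · rintro (⟨⟨k, hk, rfl⟩, h2⟩ | ⟨h1, h2⟩)
    · by_cases hk2 : k = 2*n
      · exfalso; apply h2; right
        rw [pair_eq_iff (by omega) (by omega) (by omega) (by omega)]; omega
      · have hpar : k % 2 = 0 ∨ k % 2 = 1 := by omega
        rcases hpar with hpar | hpar
        · obtain ⟨j, rfl⟩ : ∃ j, k = 2*j := ⟨k/2, by omega⟩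
          refine ⟨j, by omega, Or.inl ?_⟩
          rw [pair_eq_iff (by omega) (by omega) (by omega) (by omega)]; omega
        · obtain ⟨j, rfl⟩ : ∃ j, k = 2*j+1 := ⟨k/2, by omega⟩
          refine ⟨j, by omega, Or.inr (Or.inr (Or.inl ?_))⟩
          rw [pair_eq_iff (by omega) (by omega) (by omega) (by omega)]; omega
    · rcases h1 with (⟨j, hj, rfl⟩ | ⟨j, hj, rfl⟩) | rfl
      · exact ⟨j, hj, Or.inr (Or.inr (Or.inr rfl))⟩
      · exact ⟨j, hj, Or.inr (Or.inl rfl)⟩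
      · exfalso; apply h2
        refine ⟨2*n, by omega, ?_⟩
        rw [pair_eq_iff (by omega) (by omega) (by omega) (by omega)]; omega
  · rintro ⟨k, hk, rfl | rfl | rfl | rfl⟩
    · -- s(4k, 4k+1) ∈ M1 \ M2
      left
      constructor
      · refine ⟨2*k, by omega, ?_⟩
        rw [pair_eq_iff (by omega) (by omega) (by omega) (by omega)]; omega
      · rintro ((⟨j, hj, hEq⟩ | ⟨j, hj, hEq⟩) | hEq) <;>
          rw [pair_eq_iff (by omega) (by omega) (by omega) (by omega)] at hEq <;> omega
    · -- s(4k+1, 4k+2) ∈ M2 \ M1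
      right
      constructor
      · exact Or.inl (Or.inr ⟨k, hk, rfl⟩)
      · rintro ⟨j, hj, hEq⟩
        rw [pair_eq_iff (by omega) (by omega) (by omega) (by omega)] at hEq; omega
    · -- s(4k+2, 4k+3) ∈ M1 \ M2
      left
      constructor
      · refine ⟨2*k+1, by omega, ?_⟩
        rw [pair_eq_iff (by omega) (by omega) (by omega) (by omega)]; omega
      · rintro ((⟨j, hj, hEq⟩ | ⟨j, hj, hEq⟩) | hEq) <;>
          rw [pair_eq_iff (by omega) (by omega) (by omega) (by omega)] at hEq <;> omega
    · -- s(4k, 4k+3) ∈ M2 \ M1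
      right
      constructor
      · exact Or.inl (Or.inl ⟨k, hk, rfl⟩)
      · rintro ⟨j, hj, hEq⟩
        rw [pair_eq_iff (by omega) (by omega) (by omega) (by omega)] at hEq; omega

lemma sd3 (n : ℕ) (hn : 1 ≤ n) : symmDiff (Mp n) (M2 n) = Dd n := by
  ext e
  rw [Set.mem_symmDiff]
  simp only [Mp, M2, Chd, Mid, Dd, Set.mem_union, Set.mem_setOf_eq,
    Set.mem_singleton_iff, Set.mem_insert_iff]
  constructor
  · rintro (⟨h1, h2⟩ | ⟨h1, h2⟩)
    · rcases h1 with ⟨k, hk, rfl⟩ | rfl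
      · have hpar : k % 2 = 0 ∨ k % 2 = 1 := by omega
        rcases hpar with hpar | hpar
        · obtain ⟨j, rfl⟩ : ∃ j, k = 2*j := ⟨k/2, by omega⟩
          exfalso; apply h2
          refine Or.inl (Or.inr ⟨j, by omega, ?_⟩)
          rw [pair_eq_iff (by omega) (by omega) (by omega) (by omega)]; omega
        · obtain ⟨j, rfl⟩ : ∃ j, k = 2*j+1 := ⟨k/2, by omega⟩
          refine Or.inl (Or.inr ⟨j, by omega, ?_⟩)
          rw [pair_eq_iff (by omega) (by omega) (by omega) (by omega)]; omega
      · exact Or.inr (Or.inr rfl)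
    · rcases h1 with (⟨j, hj, rfl⟩ | ⟨j, hj, rfl⟩) | rfl
      · exact Or.inl (Or.inl ⟨j, hj, rfl⟩)
      · exfalso; apply h2
        refine Or.inl ⟨2*j, by omega, ?_⟩
        rw [pair_eq_iff (by omega) (by omega) (by omega) (by omega)]; omega
      · exact Or.inr (Or.inl rfl)
  · rintro ((⟨j, hj, rfl⟩ | ⟨j, hj, rfl⟩) | (rfl | rfl))
    · -- chord ∈ M2 \ Mp
      right
      constructor
      · exact Or.inl (Or.inl ⟨j, hj, rfl⟩)
      · rintro (⟨k, hk, hEq⟩ | hEq) <;>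
          rw [pair_eq_iff (by omega) (by omega) (by omega) (by omega)] at hEq <;> omega
    · -- s(4j+3, 4j+4) ∈ Mp \ M2
      left
      constructor
      · refine Or.inl ⟨2*j+1, by omega, ?_⟩
        rw [pair_eq_iff (by omega) (by omega) (by omega) (by omega)]; omega
      · rintro ((⟨k, hk, hEq⟩ | ⟨k, hk, hEq⟩) | hEq) <;>
          rw [pair_eq_iff (by omega) (by omega) (by omega) (by omega)] at hEq <;> omega
    · -- s(4n, 4n+1) ∈ M2 \ Mp
      right
      constructor
      · exact Or.inr rfl
      · rintro (⟨k, hk, hEq⟩ | hEq) <;>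
          rw [pair_eq_iff (by omega) (by omega) (by omega) (by omega)] at hEq <;> omega
    · -- s(4n+1, 0) ∈ Mp \ M2
      left
      constructor
      · exact Or.inr rfl
      · rintro ((⟨k, hk, hEq⟩ | ⟨k, hk, hEq⟩) | hEq) <;>
          rw [pair_eq_iff (by omega) (by omega) (by omega) (by omega)] at hEq <;> omega


lemma wrap_succ (n : ℕ) : (Gr n).Adj (c n (4*n+1)) (c n 0) := by
  have h2 : c n (4*n+2) = c n (4*n+1) + 1 := by push_cast; ring
  have h : c n 0 = c n (4*n+1) + 1 := by
    rw [← h2]; simp [ZMod.natCast_self]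
  rw [h]; exact adj_succ n _

lemma pm1 (n : ℕ) : IsPerfectMatchingSet (Gr n) (M1 n) := by
  constructor
  · rintro e ⟨k, hk, rfl⟩
    exact adj_succ_c
  · intro v
    obtain ⟨a, ha, rfl⟩ : ∃ a, a < 4*n+2 ∧ v = c n a := ⟨v.val, (decomp v).2, (decomp v).1⟩
    refine ⟨s(c n (2*(a/2)), c n (2*(a/2)+1)), ⟨⟨a/2, by omega, rfl⟩, ?_⟩, ?_⟩
    · rw [mem_pair_iff ha (by omega) (by omega)]; omega
    · rintro e' ⟨⟨k', hk', rfl⟩, hv'⟩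
      rw [mem_pair_iff ha (by omega) (by omega)] at hv'
      have hk : k' = a/2 := by omega
      subst hk; rfl

lemma pmp (n : ℕ) (hn : 1 ≤ n) : IsPerfectMatchingSet (Gr n) (Mp n) := by
  constructor
  · rintro e (⟨k, hk, rfl⟩ | rfl)
    · exact adj_succ_c
    · exact wrap_succ n
  · intro v
    obtain ⟨a, ha, rfl⟩ : ∃ a, a < 4*n+2 ∧ v = c n a := ⟨v.val, (decomp v).2, (decomp v).1⟩
    by_cases h0 : a = 0 ∨ a = 4*n+1
    · refine ⟨s(c n (4*n+1), c n 0), ⟨Or.inr rfl, ?_⟩, ?_⟩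
      · rw [mem_pair_iff ha (by omega) (by omega)]; omega
      · rintro e' ⟨⟨k', hk', rfl⟩ | rfl, hv'⟩
        · rw [mem_pair_iff ha (by omega) (by omega)] at hv'; omega
        · rfl
    · have hpar : a % 2 = 0 ∨ a % 2 = 1 := by omega
      rcases hpar with hpar | hpar
      · refine ⟨s(c n (2*(a/2-1)+1), c n (2*(a/2-1)+2)), ⟨Or.inl ⟨a/2-1, by omega, rfl⟩, ?_⟩, ?_⟩
        · rw [mem_pair_iff ha (by omega) (by omega)]; omega
        · rintro e' ⟨⟨k', hk', rfl⟩ | rfl, hv'⟩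
          · rw [mem_pair_iff ha (by omega) (by omega)] at hv'
            have hk : k' = a/2-1 := by omega
            subst hk; rfl
          · rw [mem_pair_iff ha (by omega) (by omega)] at hv'; omega
      · refine ⟨s(c n (2*(a/2)+1), c n (2*(a/2)+2)), ⟨Or.inl ⟨a/2, by omega, rfl⟩, ?_⟩, ?_⟩
        · rw [mem_pair_iff ha (by omega) (by omega)]; omega
        · rintro e' ⟨⟨k', hk', rfl⟩ | rfl, hv'⟩
          · rw [mem_pair_iff ha (by omega) (by omega)] at hv'
            have hk : k' = a/2 := by omega
            subst hk; rfl
          · rw [mem_pair_iff ha (by omega) (by omega)] at hv'; omega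

lemma pm2 (n : ℕ) (hn : 1 ≤ n) : IsPerfectMatchingSet (Gr n) (M2 n) := by
  constructor
  · rintro e ((⟨k, hk, rfl⟩ | ⟨k, hk, rfl⟩) | rfl)
    · exact adj_chord hk
    · exact adj_succ_c
    · exact adj_succ_c
  · intro v
    obtain ⟨a, ha, rfl⟩ : ∃ a, a < 4*n+2 ∧ v = c n a := ⟨v.val, (decomp v).2, (decomp v).1⟩
    by_cases h0 : a = 4*n ∨ a = 4*n+1
    · refine ⟨s(c n (4*n), c n (4*n+1)), ⟨Or.inr rfl, ?_⟩, ?_⟩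
      · rw [mem_pair_iff ha (by omega) (by omega)]; omega
      · rintro e' ⟨(⟨k', hk', rfl⟩ | ⟨k', hk', rfl⟩) | rfl, hv'⟩
        · rw [mem_pair_iff ha (by omega) (by omega)] at hv'; omega
        · rw [mem_pair_iff ha (by omega) (by omega)] at hv'; omega
        · rfl
    · have hm4 : a % 4 = 0 ∨ a % 4 = 1 ∨ a % 4 = 2 ∨ a % 4 = 3 := by omega
      have hlt : a < 4*n := by omega
      rcases hm4 with hm4 | hm4 | hm4 | hm4
      · refine ⟨s(c n (4*(a/4)), c n (4*(a/4)+3)), ⟨Or.inl (Or.inl ⟨a/4, by omega, rfl⟩), ?_⟩, ?_⟩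
        · rw [mem_pair_iff ha (by omega) (by omega)]; omega
        · rintro e' ⟨(⟨k', hk', rfl⟩ | ⟨k', hk', rfl⟩) | rfl, hv'⟩
          · rw [mem_pair_iff ha (by omega) (by omega)] at hv'
            have hk : k' = a/4 := by omega
            subst hk; rfl
          · rw [mem_pair_iff ha (by omega) (by omega)] at hv'; omega
          · rw [mem_pair_iff ha (by omega) (by omega)] at hv'; omega
      · refine ⟨s(c n (4*(a/4)+1), c n (4*(a/4)+2)), ⟨Or.inl (Or.inr ⟨a/4, by omega, rfl⟩), ?_⟩, ?_⟩
        · rw [mem_pair_iff ha (by omega) (by omega)]; omega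
        · rintro e' ⟨(⟨k', hk', rfl⟩ | ⟨k', hk', rfl⟩) | rfl, hv'⟩
          · rw [mem_pair_iff ha (by omega) (by omega)] at hv'; omega
          · rw [mem_pair_iff ha (by omega) (by omega)] at hv'
            have hk : k' = a/4 := by omega
            subst hk; rfl
          · rw [mem_pair_iff ha (by omega) (by omega)] at hv'; omega
      · refine ⟨s(c n (4*(a/4)+1), c n (4*(a/4)+2)), ⟨Or.inl (Or.inr ⟨a/4, by omega, rfl⟩), ?_⟩, ?_⟩
        · rw [mem_pair_iff ha (by omega) (by omega)]; omega
        · rintro e' ⟨(⟨k', hk', rfl⟩ | ⟨k', hk', rfl⟩) | rfl, hv'⟩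
          · rw [mem_pair_iff ha (by omega) (by omega)] at hv'; omega
          · rw [mem_pair_iff ha (by omega) (by omega)] at hv'
            have hk : k' = a/4 := by omega
            subst hk; rfl
          · rw [mem_pair_iff ha (by omega) (by omega)] at hv'; omega
      · refine ⟨s(c n (4*(a/4)), c n (4*(a/4)+3)), ⟨Or.inl (Or.inl ⟨a/4, by omega, rfl⟩), ?_⟩, ?_⟩
        · rw [mem_pair_iff ha (by omega) (by omega)]; omega
        · rintro e' ⟨(⟨k', hk', rfl⟩ | ⟨k', hk', rfl⟩) | rfl, hv'⟩
          · rw [mem_pair_iff ha (by omega) (by omega)] at hv'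
            have hk : k' = a/4 := by omega
            subst hk; rfl
          · rw [mem_pair_iff ha (by omega) (by omega)] at hv'; omega
          · rw [mem_pair_iff ha (by omega) (by omega)] at hv'; omega



lemma zero_eq (n : ℕ) : c n (4*n+2) = c n 0 := by simp [ZMod.natCast_self]

lemma cyc_F (n : ℕ) (hn : 1 ≤ n) : IsCycleEdgeSet (Gr n) (Ff n) := by
  obtain ⟨w, hcyc, hiff⟩ := exists_cycle_of_fn (Gr n) (fun i => c n i) (4*n+2)
    (by omega) (zero_eq n) (fun i hi j hj h => cast_inj hi hj h)
    (fun i hi => adj_succ_c)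
  refine ⟨c n 0, w, hcyc, ?_⟩
  ext e
  rw [Set.mem_setOf_eq, hiff]
  simp only [Ff, Set.mem_union, Set.mem_setOf_eq, Set.mem_singleton_iff]
  constructor
  · rintro (⟨i, hi, rfl⟩ | rfl)
    · exact ⟨i, by omega, rfl⟩
    · exact ⟨4*n+1, by omega, by rw [show c n (4*n+1+1) = c n 0 from zero_eq n]⟩
  · rintro ⟨i, hi, rfl⟩
    by_cases h1 : i < 4*n+1
    · exact Or.inl ⟨i, h1, rfl⟩
    · have h2 : i = 4*n+1 := by omega
      subst h2
      exact Or.inr (by rw [show c n (4*n+1+1) = c n 0 from zero_eq n])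

def gD (n : ℕ) : ℕ → ℕ := fun j =>
  if j = 2*n+1 then 4*n+1 else if j % 2 = 0 then 2*j else 2*j+1

lemma gD_lt {n : ℕ} : ∀ j < 2*n+2, gD n j < 4*n+2 := by
  intro j hj; simp only [gD]; split_ifs <;> omega

lemma gD_even {n t : ℕ} (ht : t ≤ n) : gD n (2*t) = 4*t := by
  simp only [gD]; rw [if_neg (by omega), if_pos (by omega)]; ring

lemma gD_odd {n t : ℕ} (ht : t < n) : gD n (2*t+1) = 4*t+3 := by
  simp only [gD]; rw [if_neg (by omega), if_neg (by omega)]; omega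

lemma gD_top {n : ℕ} : gD n (2*n+1) = 4*n+1 := by
  simp [gD]

lemma gD_zero {n : ℕ} : gD n 0 = 0 := by
  have h := gD_even (n := n) (t := 0) (Nat.zero_le n)
  norm_num at h
  exact h

def fD (n : ℕ) : ℕ → ZMod (4*n+2) := fun i => c n (gD n (i % (2*n+2)))

lemma fD_lt {n : ℕ} (i : ℕ) (hi : i < 2*n+2) : fD n i = c n (gD n i) := by
  simp only [fD]; rw [Nat.mod_eq_of_lt hi]

lemma fD_wrap {n : ℕ} : fD n (2*n+2) = c n 0 := by
  simp only [fD]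
  rw [Nat.mod_self, gD_zero]

-- the four kinds of directed edges of the D-cycle
lemma fD_edge {n : ℕ} (hn : 1 ≤ n) : ∀ i < 2*n+2,
    (∃ t < n, i = 2*t ∧ s(fD n i, fD n (i+1)) = s(c n (4*t), c n (4*t+3))) ∨
    (∃ t < n, i = 2*t+1 ∧ s(fD n i, fD n (i+1)) = s(c n (4*t+3), c n (4*t+4))) ∨
    (i = 2*n ∧ s(fD n i, fD n (i+1)) = s(c n (4*n), c n (4*n+1))) ∨
    (i = 2*n+1 ∧ s(fD n i, fD n (i+1)) = s(c n (4*n+1), c n 0)) := by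
  intro i hi
  by_cases htop : i = 2*n+1
  · subst htop
    refine Or.inr (Or.inr (Or.inr ⟨rfl, ?_⟩))
    rw [fD_lt _ (by omega), fD_wrap, gD_top]
  · by_cases h2n : i = 2*n
    · subst h2n
      refine Or.inr (Or.inr (Or.inl ⟨rfl, ?_⟩))
      rw [fD_lt _ (by omega), fD_lt _ (by omega), gD_even (le_refl n), gD_top]
    · have hpar : i % 2 = 0 ∨ i % 2 = 1 := by omega
      rcases hpar with hpar | hpar
      · obtain ⟨t, rfl⟩ : ∃ t, i = 2*t := ⟨i/2, by omega⟩
        refine Or.inl ⟨t, by omega, rfl, ?_⟩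
        rw [fD_lt _ (by omega), fD_lt _ (by omega), gD_even (by omega), gD_odd (by omega)]
      · obtain ⟨t, rfl⟩ : ∃ t, i = 2*t+1 := ⟨i/2, by omega⟩
        refine Or.inr (Or.inl ⟨t, by omega, rfl, ?_⟩)
        rw [fD_lt _ (by omega), fD_lt _ (by omega), gD_odd (by omega),
          show 2*t+1+1 = 2*(t+1) from by ring, gD_even (by omega),
          show 4*(t+1) = 4*t+4 from by ring]

lemma cyc_D (n : ℕ) (hn : 1 ≤ n) : IsCycleEdgeSet (Gr n) (Dd n) := by
  have hadj : ∀ i < 2*n+2, (Gr n).Adj (fD n i) (fD n (i+1)) := by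
    intro i hi
    rcases fD_edge hn i hi with ⟨t, ht, _, hEq⟩ | ⟨t, ht, _, hEq⟩ | ⟨_, hEq⟩ | ⟨_, hEq⟩ <;>
      rw [Sym2.eq_iff] at hEq <;>
      rcases hEq with ⟨h1, h2⟩ | ⟨h1, h2⟩ <;> rw [h1, h2]
    · exact adj_chord ht
    · exact (adj_chord ht).symm
    · have h4 : (4*t+4) = (4*t+3)+1 := rfl
      rw [h4]; exact adj_succ_c
    · have h4 : (4*t+4) = (4*t+3)+1 := rfl
      rw [h4]; exact adj_succ_c.symm
    · exact adj_succ_c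
    · exact adj_succ_c.symm
    · exact wrap_succ n
    · exact (wrap_succ n).symm
  obtain ⟨w, hcyc, hiff⟩ := exists_cycle_of_fn (Gr n) (fD n) (2*n+2)
    (by omega) (by rw [fD_wrap, fD_lt 0 (by omega), gD_zero])
    (by
      intro i hi j hj h
      rw [fD_lt _ hi, fD_lt _ hj] at h
      have := cast_inj (gD_lt _ hi) (gD_lt _ hj) h
      simp only [gD] at this
      split_ifs at this <;> omega)
    hadj
  refine ⟨fD n 0, w, hcyc, ?_⟩
  ext e
  rw [Set.mem_setOf_eq, hiff]
  simp only [Dd, Chd, Set.mem_union, Set.mem_setOf_eq, Set.mem_singleton_iff,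
    Set.mem_insert_iff]
  constructor
  · rintro ((⟨t, ht, rfl⟩ | ⟨t, ht, rfl⟩) | rfl | rfl)
    · refine ⟨2*t, by omega, ?_⟩
      rcases fD_edge hn (2*t) (by omega) with ⟨t', ht', hteq, hEq⟩ | ⟨t', ht', hteq, hEq⟩ | ⟨hteq, hEq⟩ | ⟨hteq, hEq⟩
      · have h' : t' = t := by omega
        subst h'; exact hEq.symm
      · omega
      · omega
      · omega
    · refine ⟨2*t+1, by omega, ?_⟩
      rcases fD_edge hn (2*t+1) (by omega) with ⟨t', ht', hteq, hEq⟩ | ⟨t', ht', hteq, hEq⟩ | ⟨hteq, hEq⟩ | ⟨hteq, hEq⟩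
      · omega
      · have h' : t' = t := by omega
        subst h'; exact hEq.symm
      · omega
      · omega
    · refine ⟨2*n, by omega, ?_⟩
      rcases fD_edge hn (2*n) (by omega) with ⟨t', ht', hteq, hEq⟩ | ⟨t', ht', hteq, hEq⟩ | ⟨hteq, hEq⟩ | ⟨hteq, hEq⟩
      · omega
      · omega
      · exact hEq.symm
      · omega
    · refine ⟨2*n+1, by omega, ?_⟩
      rcases fD_edge hn (2*n+1) (by omega) with ⟨t', ht', hteq, hEq⟩ | ⟨t', ht', hteq, hEq⟩ | ⟨hteq, hEq⟩ | ⟨hteq, hEq⟩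
      · omega
      · omega
      · omega
      · exact hEq.symm
  · rintro ⟨i, hi, rfl⟩
    rcases fD_edge hn i hi with ⟨t, ht, _, hEq⟩ | ⟨t, ht, _, hEq⟩ | ⟨_, hEq⟩ | ⟨_, hEq⟩
    · exact Or.inl (Or.inl ⟨t, ht, hEq⟩)
    · exact Or.inl (Or.inr ⟨t, ht, hEq⟩)
    · exact Or.inr (Or.inl hEq)
    · exact Or.inr (Or.inr hEq)

lemma cyc_Cs (n : ℕ) {k : ℕ} (hk : k < n) : IsCycleEdgeSet (Gr n) (Csk n k) := by
  have hb : ∀ r, r < 4 → 4*k + r < 4*n+2 := by omega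
  obtain ⟨w, hcyc, hiff⟩ := exists_cycle_of_fn (Gr n) (fun i => c n (4*k + i % 4)) 4
    (by omega) rfl
    (by
      intro i hi j hj h
      have h' : c n (4*k + i % 4) = c n (4*k + j % 4) := h
      rw [Nat.mod_eq_of_lt hi, Nat.mod_eq_of_lt hj] at h'
      have := cast_inj (by omega) (by omega) h'
      omega)
    (by
      intro i hi
      have h4 : i = 0 ∨ i = 1 ∨ i = 2 ∨ i = 3 := by omega
      rcases h4 with rfl | rfl | rfl | rfl
      · exact adj_succ_c
      · exact adj_succ_c
      · exact adj_succ_c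
      · exact (adj_chord hk).symm)
  refine ⟨_, w, hcyc, ?_⟩
  ext e
  rw [Set.mem_setOf_eq, hiff]
  simp only [Csk, Set.mem_insert_iff, Set.mem_singleton_iff]
  constructor
  · rintro (rfl | rfl | rfl | rfl)
    · exact ⟨0, by omega, rfl⟩
    · exact ⟨1, by omega, rfl⟩
    · exact ⟨2, by omega, rfl⟩
    · exact ⟨3, by omega, Sym2.eq_swap⟩
  · rintro ⟨i, hi, rfl⟩
    have h4 : i = 0 ∨ i = 1 ∨ i = 2 ∨ i = 3 := by omega
    rcases h4 with rfl | rfl | rfl | rfl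
    · exact Or.inl rfl
    · exact Or.inr (Or.inl rfl)
    · exact Or.inr (Or.inr (Or.inl rfl))
    · exact Or.inr (Or.inr (Or.inr Sym2.eq_swap))


lemma alt_finish {α : Type*} {M : Set α} {X Y e₁ e₂ : α} (hX : X ∈ M) (hY : Y ∉ M)
    (h1 : e₁ = X ∨ e₁ = Y) (h2 : e₂ = X ∨ e₂ = Y) (hne : e₁ ≠ e₂) :
    (e₁ ∈ M ↔ e₂ ∉ M) := by
  rcases h1 with rfl | rfl <;> rcases h2 with rfl | rfl
  · exact absurd rfl hne
  · exact iff_of_true hX hY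
  · exact iff_of_false hY (not_not_intro hX)
  · exact absurd rfl hne

lemma mem_Ff_elim {n a : ℕ} (ha : a < 4*n+2) {e} (he : e ∈ Ff n) (hv : c n a ∈ e) :
    (a < 4*n+1 ∧ e = s(c n a, c n (a+1))) ∨ (1 ≤ a ∧ a ≤ 4*n+1 ∧ e = s(c n (a-1), c n a)) ∨
    ((a = 4*n+1 ∨ a = 0) ∧ e = s(c n (4*n+1), c n 0)) := by
  rcases he with ⟨i, hi, rfl⟩ | rfl
  · rw [mem_pair_iff ha (by omega) (by omega)] at hv
    rcases hv with rfl | h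
    · exact Or.inl ⟨hi, rfl⟩
    · right; left
      refine ⟨by omega, by omega, ?_⟩
      have h1 : i = a - 1 := by omega
      subst h1
      rw [show (a-1+1) = a from by omega]
  · rw [mem_pair_iff ha (by omega) (by omega)] at hv
    exact Or.inr (Or.inr ⟨hv, rfl⟩)

lemma up_mem_M1 {n a : ℕ} (ha : a < 4*n+1) (hp : a % 2 = 0) :
    s(c n a, c n (a+1)) ∈ M1 n :=
  ⟨a/2, by omega, by rw [pair_eq_iff (by omega) (by omega) (by omega) (by omega)]; omega⟩

lemma up_not_mem_M1 {n a : ℕ} (ha : a < 4*n+1) (hp : a % 2 = 1) :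
    s(c n a, c n (a+1)) ∉ M1 n := by
  rintro ⟨k, hk, h⟩
  rw [pair_eq_iff (by omega) (by omega) (by omega) (by omega)] at h; omega

lemma down_mem_M1 {n a : ℕ} (h1 : 1 ≤ a) (ha : a ≤ 4*n+1) (hp : a % 2 = 1) :
    s(c n (a-1), c n a) ∈ M1 n :=
  ⟨a/2, by omega, by rw [pair_eq_iff (by omega) (by omega) (by omega) (by omega)]; omega⟩

lemma down_not_mem_M1 {n a : ℕ} (h1 : 1 ≤ a) (ha : a ≤ 4*n+1) (hp : a % 2 = 0) :
    s(c n (a-1), c n a) ∉ M1 n := by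
  rintro ⟨k, hk, h⟩
  rw [pair_eq_iff (by omega) (by omega) (by omega) (by omega)] at h; omega

lemma wrap_not_mem_M1 {n : ℕ} (hn : 1 ≤ n) : s(c n (4*n+1), c n 0) ∉ M1 n := by
  rintro ⟨k, hk, h⟩
  rw [pair_eq_iff (by omega) (by omega) (by omega) (by omega)] at h; omega

lemma altF (n : ℕ) (hn : 1 ≤ n) : ∀ v : ZMod (4*n+2), ∀ e₁ ∈ Ff n, ∀ e₂ ∈ Ff n,
    e₁ ≠ e₂ → v ∈ e₁ → v ∈ e₂ → (e₁ ∈ M1 n ↔ e₂ ∉ M1 n) := by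
  intro v e₁ he₁ e₂ he₂ hne hv₁ hv₂
  obtain ⟨a, ha, rfl⟩ : ∃ a, a < 4*n+2 ∧ v = c n a := ⟨v.val, (decomp v).2, (decomp v).1⟩
  by_cases h0 : a = 0
  · subst h0
    have claim : ∀ e, e ∈ Ff n → c n 0 ∈ e → e = s(c n 0, c n (0+1)) ∨ e = s(c n (4*n+1), c n 0) := by
      intro e he hv
      rcases mem_Ff_elim ha he hv with ⟨h1, rfl⟩ | ⟨h1, h2, rfl⟩ | ⟨h1, rfl⟩
      · exact Or.inl rfl
      · omega
      · exact Or.inr rfl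
    exact alt_finish (up_mem_M1 (by omega) (by omega)) (wrap_not_mem_M1 hn)
      (claim e₁ he₁ hv₁) (claim e₂ he₂ hv₂) hne
  · by_cases htop : a = 4*n+1
    · subst htop
      have claim : ∀ e, e ∈ Ff n → c n (4*n+1) ∈ e →
          e = s(c n (4*n+1-1), c n (4*n+1)) ∨ e = s(c n (4*n+1), c n 0) := by
        intro e he hv
        rcases mem_Ff_elim ha he hv with ⟨h1, rfl⟩ | ⟨h1, h2, rfl⟩ | ⟨h1, rfl⟩
        · omega
        · exact Or.inl rfl
        · exact Or.inr rfl
      exact alt_finish (down_mem_M1 (by omega) (by omega) (by omega)) (wrap_not_mem_M1 hn)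
        (claim e₁ he₁ hv₁) (claim e₂ he₂ hv₂) hne
    · have hmid : 1 ≤ a ∧ a ≤ 4*n := by omega
      have claim : ∀ e, e ∈ Ff n → c n a ∈ e →
          e = s(c n a, c n (a+1)) ∨ e = s(c n (a-1), c n a) := by
        intro e he hv
        rcases mem_Ff_elim ha he hv with ⟨h1, rfl⟩ | ⟨h1, h2, rfl⟩ | ⟨h1, rfl⟩
        · exact Or.inl rfl
        · exact Or.inr rfl
        · omega
      have hpar : a % 2 = 0 ∨ a % 2 = 1 := by omega
      rcases hpar with hpar | hpar
      · exact alt_finish (up_mem_M1 (by omega) hpar)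
          (down_not_mem_M1 (by omega) (by omega) hpar)
          (claim e₁ he₁ hv₁) (claim e₂ he₂ hv₂) hne
      · have claim' : ∀ e, e ∈ Ff n → c n a ∈ e →
            e = s(c n (a-1), c n a) ∨ e = s(c n a, c n (a+1)) := by
          intro e he hv
          rcases claim e he hv with h | h
          · exact Or.inr h
          · exact Or.inl h
        exact alt_finish (down_mem_M1 (by omega) (by omega) hpar)
          (up_not_mem_M1 (by omega) hpar)
          (claim' e₁ he₁ hv₁) (claim' e₂ he₂ hv₂) hne

lemma mem_Dd_elim {n a : ℕ} (ha : a < 4*n+2) {e} (he : e ∈ Dd n) (hv : c n a ∈ e) :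
    (∃ t < n, (a = 4*t ∨ a = 4*t+3) ∧ e = s(c n (4*t), c n (4*t+3))) ∨
    (∃ t < n, (a = 4*t+3 ∨ a = 4*t+4) ∧ e = s(c n (4*t+3), c n (4*t+4))) ∨
    ((a = 4*n ∨ a = 4*n+1) ∧ e = s(c n (4*n), c n (4*n+1))) ∨
    ((a = 4*n+1 ∨ a = 0) ∧ e = s(c n (4*n+1), c n 0)) := by
  rcases he with (⟨t, ht, rfl⟩ | ⟨t, ht, rfl⟩) | (rfl | rfl) <;>
    rw [mem_pair_iff ha (by omega) (by omega)] at hv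
  · exact Or.inl ⟨t, ht, hv, rfl⟩
  · exact Or.inr (Or.inl ⟨t, ht, hv, rfl⟩)
  · exact Or.inr (Or.inr (Or.inl ⟨hv, rfl⟩))
  · exact Or.inr (Or.inr (Or.inr ⟨hv, rfl⟩))

lemma chord_not_mp {n t : ℕ} (ht : t < n) : s(c n (4*t), c n (4*t+3)) ∉ Mp n := by
  rintro (⟨k, hk, h⟩ | h)
  · rw [pair_eq_iff (by omega) (by omega) (by omega) (by omega)] at h; omega
  · rw [Set.mem_singleton_iff,
      pair_eq_iff (by omega) (by omega) (by omega) (by omega)] at h; omega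

lemma fam2_mem_mp {n t : ℕ} (ht : t < n) : s(c n (4*t+3), c n (4*t+4)) ∈ Mp n :=
  Or.inl ⟨2*t+1, by omega,
    by rw [pair_eq_iff (by omega) (by omega) (by omega) (by omega)]; omega⟩

lemma last_not_mp {n : ℕ} (hn : 1 ≤ n) : s(c n (4*n), c n (4*n+1)) ∉ Mp n := by
  rintro (⟨k, hk, h⟩ | h)
  · rw [pair_eq_iff (by omega) (by omega) (by omega) (by omega)] at h; omega
  · rw [Set.mem_singleton_iff,
      pair_eq_iff (by omega) (by omega) (by omega) (by omega)] at h; omega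

lemma wrap_mem_mp {n : ℕ} : s(c n (4*n+1), c n 0) ∈ Mp n := Or.inr rfl

lemma altD (n : ℕ) (hn : 1 ≤ n) : ∀ v : ZMod (4*n+2), ∀ e₁ ∈ Dd n, ∀ e₂ ∈ Dd n,
    e₁ ≠ e₂ → v ∈ e₁ → v ∈ e₂ → (e₁ ∈ Mp n ↔ e₂ ∉ Mp n) := by
  intro v e₁ he₁ e₂ he₂ hne hv₁ hv₂
  obtain ⟨a, ha, rfl⟩ : ∃ a, a < 4*n+2 ∧ v = c n a := ⟨v.val, (decomp v).2, (decomp v).1⟩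
  by_cases h0 : a = 0
  · -- edges: wrap (∈ Mp) and chord 0 (∉ Mp)
    have claim : ∀ e, e ∈ Dd n → c n a ∈ e →
        e = s(c n (4*n+1), c n 0) ∨ e = s(c n (4*0), c n (4*0+3)) := by
      intro e he hv
      rcases mem_Dd_elim ha he hv with ⟨t, ht, hat, rfl⟩ | ⟨t, ht, hat, rfl⟩ |
          ⟨hat, rfl⟩ | ⟨hat, rfl⟩
      · have h' : t = 0 := by omega
        subst h'; exact Or.inr rfl
      · omega
      · omega
      · exact Or.inl rfl
    exact alt_finish wrap_mem_mp (chord_not_mp (by omega))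
      (claim e₁ he₁ hv₁) (claim e₂ he₂ hv₂) hne
  · by_cases h1 : a = 4*n+1
    · have claim : ∀ e, e ∈ Dd n → c n a ∈ e →
          e = s(c n (4*n+1), c n 0) ∨ e = s(c n (4*n), c n (4*n+1)) := by
        intro e he hv
        rcases mem_Dd_elim ha he hv with ⟨t, ht, hat, rfl⟩ | ⟨t, ht, hat, rfl⟩ |
            ⟨hat, rfl⟩ | ⟨hat, rfl⟩
        · omega
        · omega
        · exact Or.inr rfl
        · exact Or.inl rfl
      exact alt_finish wrap_mem_mp (last_not_mp hn)
        (claim e₁ he₁ hv₁) (claim e₂ he₂ hv₂) hne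
    · by_cases h2 : a = 4*n
      · have claim : ∀ e, e ∈ Dd n → c n a ∈ e →
            e = s(c n (4*(n-1)+3), c n (4*(n-1)+4)) ∨ e = s(c n (4*n), c n (4*n+1)) := by
          intro e he hv
          rcases mem_Dd_elim ha he hv with ⟨t, ht, hat, rfl⟩ | ⟨t, ht, hat, rfl⟩ |
              ⟨hat, rfl⟩ | ⟨hat, rfl⟩
          · omega
          · have h' : t = n-1 := by omega
            subst h'; exact Or.inl rfl
          · exact Or.inr rfl
          · omega
        exact alt_finish (fam2_mem_mp (by omega)) (last_not_mp hn)
          (claim e₁ he₁ hv₁) (claim e₂ he₂ hv₂) hne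
      · by_cases h3 : a % 4 = 0
        · -- a = 4 t₀ with 1 ≤ t₀ < n
          have claim : ∀ e, e ∈ Dd n → c n a ∈ e →
              e = s(c n (4*(a/4-1)+3), c n (4*(a/4-1)+4)) ∨
                e = s(c n (4*(a/4)), c n (4*(a/4)+3)) := by
            intro e he hv
            rcases mem_Dd_elim ha he hv with ⟨t, ht, hat, rfl⟩ | ⟨t, ht, hat, rfl⟩ |
                ⟨hat, rfl⟩ | ⟨hat, rfl⟩
            · have h' : t = a/4 := by omega
              subst h'; exact Or.inr rfl
            · have h' : t = a/4-1 := by omega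
              subst h'; exact Or.inl rfl
            · omega
            · omega
          exact alt_finish (fam2_mem_mp (by omega))
            (chord_not_mp (by omega))
            (claim e₁ he₁ hv₁) (claim e₂ he₂ hv₂) hne
        · by_cases h4 : a % 4 = 3
          · -- a = 4 t₀ + 3 with t₀ < n
            have claim : ∀ e, e ∈ Dd n → c n a ∈ e →
                e = s(c n (4*(a/4)+3), c n (4*(a/4)+4)) ∨
                  e = s(c n (4*(a/4)), c n (4*(a/4)+3)) := by
              intro e he hv
              rcases mem_Dd_elim ha he hv with ⟨t, ht, hat, rfl⟩ | ⟨t, ht, hat, rfl⟩ |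
                  ⟨hat, rfl⟩ | ⟨hat, rfl⟩
              · have h' : t = a/4 := by omega
                subst h'; exact Or.inr rfl
              · have h' : t = a/4 := by omega
                subst h'; exact Or.inl rfl
              · omega
              · omega
            exact alt_finish (fam2_mem_mp (by omega))
              (chord_not_mp (by omega))
              (claim e₁ he₁ hv₁) (claim e₂ he₂ hv₂) hne
          · -- a is on no edge of Dd
            exfalso
            rcases mem_Dd_elim ha he₁ hv₁ with ⟨t, ht, hat, rfl⟩ | ⟨t, ht, hat, rfl⟩ |
                ⟨hat, rfl⟩ | ⟨hat, rfl⟩ <;> omega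

end DistTwoConstr

end Aux

/-- For every `n ≥ 1` there are a bipartite graph `G` of
maximum degree at most `3` and perfect matchings `M₁`, `M₂` of `G` whose
symmetric difference is the union of `n` pairwise vertex-disjoint cycles, yet
there is a perfect matching `M'` with `M₁ Δ M'` a single cycle alternating for
`M₁` and `M' Δ M₂` a single cycle alternating for `M'` (so `M₁` and `M₂` are at
distance at most two on the perfect matching polytope of `G`). -/
theorem distance_two_with_many_cycles (n : ℕ) (hn : 1 ≤ n) :
    ∃ (V : Type) (_ : Fintype V) (G : SimpleGraph V) (A B : Set V),
      IsBipartiteWith G A B ∧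
      (∀ v : V, {w | G.Adj v w}.ncard ≤ 3) ∧
      ∃ M₁ M₂ : Set (Sym2 V),
        IsPerfectMatchingSet G M₁ ∧ IsPerfectMatchingSet G M₂ ∧
        (∃ Cs : Fin n → Set (Sym2 V),
          (∀ i, IsCycleEdgeSet G (Cs i)) ∧
          (∀ i j, i ≠ j → ∀ e ∈ Cs i, ∀ f ∈ Cs j, ∀ v : V, v ∈ e → v ∉ f) ∧
          symmDiff M₁ M₂ = ⋃ i, Cs i) ∧
        ∃ M' : Set (Sym2 V), IsPerfectMatchingSet G M' ∧
          IsAlternatingCycle G M₁ (symmDiff M₁ M') ∧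
          IsAlternatingCycle G M' (symmDiff M' M₂) := by
  classical
  refine ⟨ZMod (4*n+2), inferInstance, DistTwoConstr.Gr n,
    {v | v.val % 2 = 0}, {v | v.val % 2 = 1},
    DistTwoConstr.bipartite n, DistTwoConstr.degree_le n,
    DistTwoConstr.M1 n, DistTwoConstr.M2 n,
    DistTwoConstr.pm1 n, DistTwoConstr.pm2 n hn,
    ⟨fun i => DistTwoConstr.Csk n i.val, ?_, ?_, ?_⟩,
    DistTwoConstr.Mp n, DistTwoConstr.pmp n hn, ?_, ?_⟩
  · intro i
    exact DistTwoConstr.cyc_Cs n i.isLt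
  · intro i j hij e he f hf v hv
    exact DistTwoConstr.csk_vertex_disj i.isLt j.isLt
      (fun h => hij (Fin.val_injective h)) he hf v hv
  · rw [DistTwoConstr.sd2 n hn]
    ext e
    simp only [DistTwoConstr.CsU, Set.mem_setOf_eq, Set.mem_iUnion]
    constructor
    · rintro ⟨k, hk, hm⟩
      exact ⟨⟨k, hk⟩, hm⟩
    · rintro ⟨i, hm⟩
      exact ⟨i.val, i.isLt, hm⟩
  · rw [DistTwoConstr.sd1 n hn]
    exact ⟨DistTwoConstr.cyc_F n hn, DistTwoConstr.altF n hn⟩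
  · rw [DistTwoConstr.sd3 n hn]
    exact ⟨DistTwoConstr.cyc_D n hn, DistTwoConstr.altD n hn⟩
end
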